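/- arXiv:2409.14027 — 9 statements merged into one kernel-verified Lean document; each statement's English description precedes it below -/
import Mathlib

section
/- Let p and q be Borel probability measures on ℝ^d, let κ ≥ 1 be an integer and δ = 2^{-i} for an integer i ≥ 0. Then the supremum, over all functions φ : ℝ^d → ℝ that are constant on every quantization cell of q_{δ,κ}, of the quantity ∫ φ dp − log ∫ e^{φ} dq, is at most the supremum of the same quantity over all bounded continuous functions φ : ℝ^d → ℝ. -/
open MeasureTheory ENNReal

/-- Coordinatewise quantization of a real number: default value `ω` outside `[-κ,κ)`,
rounding down towards `0` on the grid of mesh `δ` inside. -/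
noncomputable def quant1 (ω δ κ : ℝ) (x : ℝ) : ℝ :=
  if κ ≤ |x| then ω
  else if 0 ≤ x then ⌊x / δ⌋ * δ
  else -(⌊(-x) / δ⌋ * δ)

/-- The quantization map `q_{δ,κ}` on `ℝ^d`, acting coordinatewise. -/
noncomputable def quant (d : ℕ) (ω δ κ : ℝ) (x : Fin d → ℝ) : Fin d → ℝ :=
  fun i => quant1 ω δ κ (x i)
/-- The quantity `φ ↦ ∫ φ dp − log ∫ e^φ dq` appearing in the variational formula for the
Kullback-Leibler divergence. -/
noncomputable def varF {d : ℕ} (p q : MeasureTheory.Measure (Fin d → ℝ))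
    (φ : (Fin d → ℝ) → ℝ) : ℝ :=
  (∫ x, φ x ∂p) - Real.log (∫ x, Real.exp (φ x) ∂q)

/-! ### Auxiliary lemmas about the quantization map -/

/-- Picking a representative of a quantization label: `κ` for the default label `ω`,
and the label itself otherwise. -/
noncomputable def rep1 (ω κ : ℝ) (v : ℝ) : ℝ := if v = ω then κ else v

lemma quant1_intMul {δ κ : ℝ} (ω : ℝ) (hδ : 0 < δ) (n : ℤ) (h : |(n : ℝ) * δ| < κ) :
    quant1 ω δ κ ((n : ℝ) * δ) = (n : ℝ) * δ := by
  unfold quant1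
  rw [if_neg (not_le.2 h)]
  rcases le_or_gt 0 (n : ℝ) with hn | hn
  · rw [if_pos (mul_nonneg hn hδ.le), mul_div_cancel_right₀ _ hδ.ne', Int.floor_intCast]
  · rw [if_neg (not_le.2 (mul_neg_of_neg_of_pos hn hδ))]
    have : -((n : ℝ) * δ) = ((-n : ℤ) : ℝ) * δ := by push_cast; ring
    rw [this, mul_div_cancel_right₀ _ hδ.ne', Int.floor_intCast]
    push_cast; ring

lemma quant1_cases {ω δ κ : ℝ} (hδ : 0 < δ) (x : ℝ) :
    quant1 ω δ κ x = ω ∨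
      ∃ n : ℤ, quant1 ω δ κ x = (n : ℝ) * δ ∧ |(n : ℝ) * δ| ≤ |x| ∧ |x| < κ := by
  unfold quant1
  by_cases h : κ ≤ |x|
  · left; rw [if_pos h]
  · right
    rw [if_neg h]
    push_neg at h
    by_cases h0 : 0 ≤ x
    · refine ⟨⌊x / δ⌋, by rw [if_pos h0], ?_, h⟩
      have h1 : (0 : ℝ) ≤ (⌊x / δ⌋ : ℝ) := by
        exact_mod_cast Int.floor_nonneg.2 (div_nonneg h0 hδ.le)
      have h2 : (⌊x / δ⌋ : ℝ) * δ ≤ x := by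
        have h3 := Int.floor_le (x / δ)
        calc (⌊x / δ⌋ : ℝ) * δ ≤ (x / δ) * δ := by nlinarith
          _ = x := div_mul_cancel₀ x hδ.ne'
      rw [abs_of_nonneg (mul_nonneg h1 hδ.le), abs_of_nonneg h0]
      exact h2
    · push_neg at h0
      refine ⟨-⌊(-x) / δ⌋, by rw [if_neg (not_le.2 h0)]; push_cast; ring, ?_, h⟩
      have h1 : (0 : ℝ) ≤ (⌊(-x) / δ⌋ : ℝ) := by
        exact_mod_cast Int.floor_nonneg.2 (div_nonneg (by linarith) hδ.le)
      have h2 : (⌊(-x) / δ⌋ : ℝ) * δ ≤ -x := by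
        have h3 := Int.floor_le ((-x) / δ)
        calc (⌊(-x) / δ⌋ : ℝ) * δ ≤ ((-x) / δ) * δ := by nlinarith
          _ = -x := div_mul_cancel₀ _ hδ.ne'
      have : |((-⌊(-x) / δ⌋ : ℤ) : ℝ) * δ| = (⌊(-x) / δ⌋ : ℝ) * δ := by
        push_cast
        rw [abs_of_nonpos (by nlinarith)]
        ring
      rw [this, abs_of_neg h0]
      exact h2

lemma quant1_rep1 {ω δ κ : ℝ} (hδ : 0 < δ) (hκ : 0 ≤ κ) (x : ℝ) :
    quant1 ω δ κ (rep1 ω κ (quant1 ω δ κ x)) = quant1 ω δ κ x := by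
  by_cases hω : quant1 ω δ κ x = ω
  · rw [hω]
    unfold rep1
    rw [if_pos rfl]
    unfold quant1
    rw [if_pos (by rw [abs_of_nonneg hκ])]
  · rcases quant1_cases (ω := ω) (κ := κ) hδ x with h | ⟨n, hn, hle, hlt⟩
    · exact absurd h hω
    · rw [hn]
      unfold rep1
      rw [if_neg (hn ▸ hω)]
      exact quant1_intMul ω hδ n (lt_of_le_of_lt hle hlt)

lemma quant1_mem {ω δ κ : ℝ} (hδ : 0 < δ) (x : ℝ) (K : ℤ) (hK : κ ≤ (K : ℝ) * δ) :
    quant1 ω δ κ x ∈ insert ω ((fun n : ℤ => (n : ℝ) * δ) '' Set.Icc (-K) K) := by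
  rcases quant1_cases (ω := ω) (κ := κ) hδ x with h | ⟨n, hn, hle, hlt⟩
  · rw [h]; exact Set.mem_insert _ _
  · refine Set.mem_insert_of_mem _ ⟨n, ?_, hn.symm⟩
    have habs : |(n : ℝ)| * δ < (K : ℝ) * δ := by
      have : |(n : ℝ) * δ| = |(n : ℝ)| * δ := by rw [abs_mul, abs_of_pos hδ]
      rw [← this]
      exact lt_of_le_of_lt hle (lt_of_lt_of_le hlt hK)
    have h2 : |(n : ℝ)| < (K : ℝ) := lt_of_mul_lt_mul_right habs hδ.le
    have h3 : |n| < K := by exact_mod_cast h2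
    rcases abs_lt.1 h3 with ⟨h4, h5⟩
    exact Set.mem_Icc.2 ⟨by omega, by omega⟩

lemma measurable_quant1 (ω δ κ : ℝ) : Measurable (quant1 ω δ κ) := by
  unfold quant1
  refine Measurable.ite (measurableSet_le measurable_const measurable_abs) measurable_const ?_
  refine Measurable.ite (measurableSet_le measurable_const measurable_id) ?_ ?_
  · exact (measurable_of_countable (fun k : ℤ => (k : ℝ) * δ)).comp
      ((measurable_id.div_const δ).floor)
  · exact (measurable_of_countable (fun k : ℤ => -((k : ℝ) * δ))).comp
      ((measurable_id.neg.div_const δ).floor)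

/-! ### Auxiliary analytic lemmas -/

lemma clamp_dist {a b M : ℝ} (hb : |b| ≤ M) : |max (min a M) (-M) - b| ≤ |a - b| := by
  rcases abs_le.1 hb with ⟨h1, h2⟩
  have h3 : a - b ≤ |a - b| := le_abs_self _
  have h4 : -(a - b) ≤ |a - b| := neg_le_abs _
  rcases le_total a M with hA | hA <;> rcases le_total (-M) a with hB | hB <;>
    rw [abs_le] <;> constructor <;>
    simp only [min_def, max_def] <;> split_ifs <;> linarith

lemma exp_sub_exp_le {a b M : ℝ} (ha : |a| ≤ M) (hb : |b| ≤ M) :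
    Real.exp a - Real.exp b ≤ Real.exp M * |a - b| := by
  rcases le_total a b with h | h
  · have : Real.exp a - Real.exp b ≤ 0 := by
      have := Real.exp_le_exp.2 h; linarith
    exact this.trans (mul_nonneg (Real.exp_pos M).le (abs_nonneg _))
  · rw [abs_of_nonneg (sub_nonneg.2 h)]
    have h1 : (b - a) + 1 ≤ Real.exp (b - a) := Real.add_one_le_exp _
    have h2 : Real.exp b = Real.exp a * Real.exp (b - a) := by
      rw [← Real.exp_add]; ring_nf
    have h3 : Real.exp a ≤ Real.exp M := Real.exp_le_exp.2 (abs_le.1 ha).2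
    have h4 := (Real.exp_pos a).le
    nlinarith [Real.exp_pos (b - a)]

/-- Core approximation lemma: a bounded measurable function can be replaced by a bounded
continuous function with almost the same value of `varF`. -/
lemma varF_le_of_meas_bounded {d : ℕ} (p q : Measure (Fin d → ℝ))
    [IsProbabilityMeasure p] [IsProbabilityMeasure q]
    (φ : (Fin d → ℝ) → ℝ) (hmeas : Measurable φ) (M : ℝ) (hM : 0 ≤ M)
    (hbound : ∀ x, |φ x| ≤ M) {ε : ℝ} (hε : 0 < ε) :
    ∃ G : BoundedContinuousFunction (Fin d → ℝ) ℝ, varF p q φ ≤ varF p q G + ε := by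
  set μ := p + q with hμ
  have hφint : Integrable φ μ :=
    ⟨hmeas.aestronglyMeasurable, HasFiniteIntegral.of_bounded (C := M)
      (ae_of_all _ fun x => by simpa [Real.norm_eq_abs] using hbound x)⟩
  set c : ℝ := 1 + Real.exp (2 * M) with hc
  have hcpos : 0 < c := by positivity
  have hη : 0 < ε / c := div_pos hε hcpos
  obtain ⟨g₀, hg₀, hg₀int⟩ := hφint.exists_boundedContinuous_integral_sub_le hη
  have clampLip : LipschitzWith 1 (fun t : ℝ => max (min t M) (-M)) :=
    (LipschitzWith.id.min_const M).max_const (-M)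
  set G : BoundedContinuousFunction (Fin d → ℝ) ℝ :=
    BoundedContinuousFunction.comp _ clampLip g₀ with hG
  have hGx : ∀ x, G x = max (min (g₀ x) M) (-M) := fun x => rfl
  have hGb : ∀ x, |G x| ≤ M := by
    intro x
    rw [hGx, abs_le]
    exact ⟨le_max_right _ _, max_le ((min_le_right _ _)) (by linarith)⟩
  have hclose : ∀ x, |φ x - G x| ≤ ‖φ x - g₀ x‖ := by
    intro x
    rw [abs_sub_comm, Real.norm_eq_abs, abs_sub_comm (φ x)]
    exact clamp_dist (hbound x)
  -- integrability with respect to `p` and `q`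
  have hφp : Integrable φ p := hφint.left_of_add_measure
  have hφq : Integrable φ q := hφint.right_of_add_measure
  have hGp : Integrable G p := G.integrable p
  have hGq : Integrable G q := G.integrable q
  have hg₀p : Integrable g₀ p := hg₀int.left_of_add_measure
  have hg₀q : Integrable g₀ q := hg₀int.right_of_add_measure
  -- the `L¹` error with respect to `p` and `q`
  have hDsplit : (∫ x, ‖φ x - g₀ x‖ ∂p) + (∫ x, ‖φ x - g₀ x‖ ∂q)
      = ∫ x, ‖φ x - g₀ x‖ ∂μ :=
    (integral_add_measure (hφp.sub hg₀p).norm (hφq.sub hg₀q).norm).symm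
  have hDp : ∫ x, ‖φ x - g₀ x‖ ∂p ≤ ε / c := by
    have h2 : 0 ≤ ∫ x, ‖φ x - g₀ x‖ ∂q := integral_nonneg fun x => norm_nonneg _
    linarith [hg₀, hDsplit.le]
  have hDq : ∫ x, ‖φ x - g₀ x‖ ∂q ≤ ε / c := by
    have h2 : 0 ≤ ∫ x, ‖φ x - g₀ x‖ ∂p := integral_nonneg fun x => norm_nonneg _
    linarith [hg₀, hDsplit.le]
  have hIp : ∫ x, |φ x - G x| ∂p ≤ ε / c :=
    le_trans (integral_mono (hφp.sub hGp).abs (hφp.sub hg₀p).norm hclose) hDp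
  have hIq : ∫ x, |φ x - G x| ∂q ≤ ε / c :=
    le_trans (integral_mono (hφq.sub hGq).abs (hφq.sub hg₀q).norm hclose) hDq
  -- first part of `varF`
  have hpart1 : (∫ x, φ x ∂p) - (∫ x, G x ∂p) ≤ ε / c := by
    rw [← integral_sub hφp hGp]
    exact le_trans (integral_mono (hφp.sub hGp) (hφp.sub hGp).abs fun x => le_abs_self _) hIp
  -- exponential integrals
  have hexpφmeas : Measurable fun x => Real.exp (φ x) := Real.measurable_exp.comp hmeas
  have hexpφint : Integrable (fun x => Real.exp (φ x)) q :=
    ⟨hexpφmeas.aestronglyMeasurable, HasFiniteIntegral.of_bounded (C := Real.exp M)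
      (ae_of_all _ fun x => by
        rw [Real.norm_eq_abs, abs_of_pos (Real.exp_pos _)]
        exact Real.exp_le_exp.2 (abs_le.1 (hbound x)).2)⟩
  have hexpGint : Integrable (fun x => Real.exp (G x)) q :=
    ⟨(Real.continuous_exp.comp G.continuous).measurable.aestronglyMeasurable,
      HasFiniteIntegral.of_bounded (C := Real.exp M)
      (ae_of_all _ fun x => by
        rw [Real.norm_eq_abs, abs_of_pos (Real.exp_pos _)]
        exact Real.exp_le_exp.2 (abs_le.1 (hGb x)).2)⟩
  set B : ℝ := ∫ x, Real.exp (φ x) ∂q with hB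
  set A : ℝ := ∫ x, Real.exp (G x) ∂q with hA
  have hBlb : Real.exp (-M) ≤ B := by
    have h1 : ∀ x, Real.exp (-M) ≤ Real.exp (φ x) := fun x => by
      have := (abs_le.1 (hbound x)).1
      exact Real.exp_le_exp.2 (by linarith)
    calc Real.exp (-M) = ∫ _, Real.exp (-M) ∂q := by simp [measure_univ]
      _ ≤ B := integral_mono (integrable_const _) hexpφint h1
  have hAlb : Real.exp (-M) ≤ A := by
    have h1 : ∀ x, Real.exp (-M) ≤ Real.exp (G x) := fun x => by
      have := (abs_le.1 (hGb x)).1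
      exact Real.exp_le_exp.2 (by linarith)
    calc Real.exp (-M) = ∫ _, Real.exp (-M) ∂q := by simp [measure_univ]
      _ ≤ A := integral_mono (integrable_const _) hexpGint h1
  have hABdiff : A - B ≤ Real.exp M * (ε / c) := by
    have h1 : A - B = ∫ x, (Real.exp (G x) - Real.exp (φ x)) ∂q :=
      (integral_sub hexpGint hexpφint).symm
    have h2 : ∀ x, Real.exp (G x) - Real.exp (φ x) ≤ Real.exp M * |φ x - G x| := fun x => by
      rw [abs_sub_comm]
      exact exp_sub_exp_le (hGb x) (hbound x)
    calc A - B = ∫ x, (Real.exp (G x) - Real.exp (φ x)) ∂q := h1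
      _ ≤ ∫ x, Real.exp M * |φ x - G x| ∂q :=
          integral_mono (hexpGint.sub hexpφint) ((hφq.sub hGq).abs.const_mul _) h2
      _ = Real.exp M * ∫ x, |φ x - G x| ∂q := integral_const_mul _ _
      _ ≤ Real.exp M * (ε / c) :=
          mul_le_mul_of_nonneg_left hIq (Real.exp_pos M).le
  have hBpos : 0 < B := lt_of_lt_of_le (Real.exp_pos _) hBlb
  have hApos : 0 < A := lt_of_lt_of_le (Real.exp_pos _) hAlb
  have hpart2 : Real.log A - Real.log B ≤ Real.exp (2 * M) * (ε / c) := by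
    rcases le_total A B with h | h
    · have := Real.log_le_log hApos h
      have h0 : 0 ≤ Real.exp (2 * M) * (ε / c) :=
        mul_nonneg (Real.exp_pos _).le hη.le
      linarith
    · have h1 : Real.log A - Real.log B = Real.log (A / B) :=
        (Real.log_div hApos.ne' hBpos.ne').symm
      have h2 : Real.log (A / B) ≤ A / B - 1 :=
        Real.log_le_sub_one_of_pos (div_pos hApos hBpos)
      have h3 : A / B - 1 = (A - B) / B := by field_simp
      have h4 : (A - B) / B ≤ (A - B) * Real.exp M := by
        rw [div_le_iff₀ hBpos]
        have h5 : 1 ≤ Real.exp M * B := by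
          have := mul_le_mul_of_nonneg_left hBlb (Real.exp_pos M).le
          rwa [← Real.exp_add, add_neg_cancel, Real.exp_zero] at this
        nlinarith [sub_nonneg.2 h]
      have h6 : (A - B) * Real.exp M ≤ Real.exp M * (ε / c) * Real.exp M :=
        mul_le_mul_of_nonneg_right hABdiff (Real.exp_pos M).le
      have h7 : Real.exp M * (ε / c) * Real.exp M = Real.exp (2 * M) * (ε / c) := by
        rw [two_mul, Real.exp_add]; ring
      linarith
  refine ⟨G, ?_⟩
  have hsum : ε / c + Real.exp (2 * M) * (ε / c) = ε := by
    field_simp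
    ring
  unfold varF
  rw [← hB, ← hA]
  linarith

/-- The supremum of `∫ φ dp − log ∫ e^φ dq` over functions `φ` that are constant on every
quantization cell of `q_{2^{-i},κ}` is at most the supremum of the same quantity over all
bounded continuous functions. -/
theorem sup_cellConstant_le_sup_boundedContinuous
    (d : ℕ) (hd : 1 ≤ d) (ω : ℝ) (hω : Irrational ω)
    (p q : Measure (Fin d → ℝ)) [IsProbabilityMeasure p] [IsProbabilityMeasure q]
    (κ : ℕ) (hκ : 1 ≤ κ) (i : ℕ) :
    (⨆ φ : {φ : (Fin d → ℝ) → ℝ // ∀ x y,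
        quant d ω ((2 : ℝ) ^ (-(i : ℤ))) (κ : ℝ) x = quant d ω ((2 : ℝ) ^ (-(i : ℤ))) (κ : ℝ) y →
          φ x = φ y},
      ((varF p q φ.1 : ℝ) : EReal))
    ≤ ⨆ φ : BoundedContinuousFunction (Fin d → ℝ) ℝ, ((varF p q ⇑φ : ℝ) : EReal) := by
  set δ : ℝ := (2 : ℝ) ^ (-(i : ℤ)) with hδdef
  have hδ : 0 < δ := by positivity
  refine iSup_le ?_
  rintro ⟨φ, hφ⟩
  set Q : (Fin d → ℝ) → (Fin d → ℝ) := quant d ω δ (κ : ℝ) with hQdef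
  have hQmeas : Measurable Q :=
    measurable_pi_lambda _ fun j => (measurable_quant1 ω δ _).comp (measurable_pi_apply j)
  set R : (Fin d → ℝ) → (Fin d → ℝ) := fun y j => rep1 ω (κ : ℝ) (y j) with hRdef
  have hQR : ∀ x, Q (R (Q x)) = Q x := fun x =>
    funext fun j => quant1_rep1 hδ (by positivity) (x j)
  have hrep : ∀ x, φ x = φ (R (Q x)) := fun x => hφ x _ (hQR x).symm
  -- finiteness of the range of the quantization map
  set K : ℤ := (κ : ℤ) * 2 ^ i with hKdef
  have hKδ : (K : ℝ) * δ = (κ : ℝ) := by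
    rw [hδdef, hKdef]
    push_cast
    rw [mul_assoc, ← zpow_natCast (2 : ℝ) i, ← zpow_add₀ (two_ne_zero : (2:ℝ) ≠ 0),
      add_neg_cancel, zpow_zero, mul_one]
  have hT : (Set.range Q).Finite := by
    refine Set.Finite.subset (Set.Finite.pi fun _ : Fin d =>
      ((Set.finite_Icc (-K) K).image (fun n : ℤ => (n : ℝ) * δ)).insert ω) ?_
    rintro y ⟨x, rfl⟩
    intro j _
    exact quant1_mem hδ (x j) K hKδ.ge
  -- measurability of φ
  haveI : Countable (Set.range Q) := hT.countable.to_subtype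
  have hmeas : Measurable φ := by
    have hfact : φ = (fun t : Set.range Q => φ (R t.1)) ∘
        fun x => (⟨Q x, Set.mem_range_self x⟩ : Set.range Q) := by
      funext x; exact hrep x
    rw [hfact]
    exact (measurable_of_countable _).comp (hQmeas.subtype_mk)
  -- boundedness of φ
  obtain ⟨M₀, hM₀⟩ := (hT.image fun y => |φ (R y)|).bddAbove
  simp only [mem_upperBounds] at hM₀
  have hbound : ∀ x, |φ x| ≤ max M₀ 0 := fun x => by
    rw [hrep x]
    exact le_trans (hM₀ _ ⟨Q x, Set.mem_range_self x, rfl⟩) (le_max_left _ _)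
  -- conclude via the approximation lemma
  refine le_of_forall_lt fun cE hcE => ?_
  induction cE using EReal.rec with
  | bot =>
      exact lt_of_lt_of_le (EReal.bot_lt_coe _)
        (le_iSup (fun G : BoundedContinuousFunction (Fin d → ℝ) ℝ =>
          ((varF p q ⇑G : ℝ) : EReal)) 0)
  | coe r =>
      have hr : r < varF p q φ := by exact_mod_cast hcE
      obtain ⟨G, hG⟩ := varF_le_of_meas_bounded p q φ hmeas (max M₀ 0) (le_max_right _ _)
        hbound (ε := (varF p q φ - r) / 2) (by linarith)
      have hrG : r < varF p q G := by linarith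
      exact lt_of_lt_of_le (by exact_mod_cast hrG)
        (le_iSup (fun G : BoundedContinuousFunction (Fin d → ℝ) ℝ =>
          ((varF p q ⇑G : ℝ) : EReal)) G)
  | top => exact absurd hcE (not_top_lt)
end

section
/- Let p and q be Borel probability measures on ℝ^d and let κ ≥ 1 be an integer. For every continuous function φ : ℝ^d → ℝ whose support is contained in [−κ,κ)^d, one has ∫ φ dp − log ∫ e^{φ} dq ≤ liminf_{i→∞} sup_{ψ} ( ∫ ψ dp − log ∫ e^{ψ} dq ), where for each i the supremum is over all functions ψ : ℝ^d → ℝ that are constant on every quantization cell of q_{2^{-i},κ}. -/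
open MeasureTheory ENNReal

lemma quant1_eq_omega {ω δ κ t : ℝ} (h : κ ≤ |t|) : quant1 ω δ κ t = ω := by
  simp [quant1, h]

lemma quant1_abs_sub_le {ω κ t : ℝ} {δ : ℝ} (hδ : 0 < δ) (h : |t| < κ) :
    |quant1 ω δ κ t - t| ≤ δ := by
  rw [quant1, if_neg (not_le.2 h)]
  rcases le_or_gt 0 t with ht | ht
  · rw [if_pos ht, abs_le]
    have h1 := Int.sub_floor_div_mul_nonneg t hδ
    have h2 := Int.sub_floor_div_mul_lt t hδ
    constructor <;> linarith
  · rw [if_neg (not_le.2 ht), abs_le]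
    have h1 := Int.sub_floor_div_mul_nonneg (-t) hδ
    have h2 := Int.sub_floor_div_mul_lt (-t) hδ
    constructor <;> linarith

lemma quant1_ne_omega {ω κ t : ℝ} (hω : Irrational ω) (i : ℕ) (h : |t| < κ) :
    quant1 ω ((2 : ℝ) ^ (-(i : ℤ))) κ t ≠ ω := by
  rw [quant1, if_neg (not_le.2 h)]
  have hne : ∀ m : ℤ, (m : ℝ) * (2 : ℝ) ^ (-(i : ℤ)) ≠ ω := by
    intro m hm
    apply Rat.not_irrational ((m : ℚ) * (2 : ℚ) ^ (-(i : ℤ)))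
    have : ((((m : ℚ) * (2 : ℚ) ^ (-(i : ℤ))) : ℚ) : ℝ) = ω := by
      push_cast
      exact hm
    rwa [this]
  rcases le_or_gt 0 t with ht | ht
  · rw [if_pos ht]; exact hne _
  · rw [if_neg (not_le.2 ht)]
    intro hc
    exact hne (-⌊-t / (2 : ℝ) ^ (-(i : ℤ))⌋) (by push_cast; linarith)

lemma measurable_quant (d : ℕ) (ω δ κ : ℝ) : Measurable (quant d ω δ κ) :=
  measurable_pi_lambda _ fun j => (measurable_quant1 ω δ κ).comp (measurable_pi_apply j)

/-- For any continuous `φ` supported in `[-κ,κ)^d`, the quantity `∫ φ dp − log ∫ e^φ dq`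
is bounded by the liminf over `i` of the suprema of the same quantity over functions that are
constant on every quantization cell of `q_{2^{-i},κ}`. -/
theorem varF_le_liminf_sup_cellConstant
    (d : ℕ) (hd : 1 ≤ d) (ω : ℝ) (hω : Irrational ω)
    (p q : Measure (Fin d → ℝ)) [IsProbabilityMeasure p] [IsProbabilityMeasure q]
    (κ : ℕ) (hκ : 1 ≤ κ)
    (φ : (Fin d → ℝ) → ℝ) (hφc : Continuous φ)
    (hφs : Function.support φ ⊆ {x | ∀ j, x j ∈ Set.Ico (-(κ : ℝ)) (κ : ℝ)}) :
    ((varF p q φ : ℝ) : EReal) ≤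
      Filter.liminf (fun i : ℕ =>
        ⨆ ψ : {ψ : (Fin d → ℝ) → ℝ // ∀ x y,
            quant d ω ((2 : ℝ) ^ (-(i : ℤ))) (κ : ℝ) x =
              quant d ω ((2 : ℝ) ^ (-(i : ℤ))) (κ : ℝ) y → ψ x = ψ y},
          ((varF p q ψ.1 : ℝ) : EReal)) Filter.atTop := by
  classical
  set δ : ℕ → ℝ := fun i => (2 : ℝ) ^ (-(i : ℤ)) with hδdef
  have hδpos : ∀ i, 0 < δ i := fun i => zpow_pos (by norm_num) _
  -- φ vanishes whenever some coordinate has |x j| ≥ κ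
  have hφ0 : ∀ x : Fin d → ℝ, ¬ (∀ j, |x j| < (κ : ℝ)) → φ x = 0 := by
    intro x hx
    push_neg at hx
    obtain ⟨j, hj⟩ := hx
    have hout : ∀ y : Fin d → ℝ, ((κ : ℝ) ≤ y j ∨ y j < -(κ : ℝ)) → φ y = 0 := by
      intro y hy
      by_contra hne
      have := hφs hne
      have h2 := this j
      rcases hy with hy | hy
      · exact absurd h2.2 (not_lt.2 hy)
      · exact absurd h2.1 (not_le.2 hy)
    rcases le_abs.1 hj with hj1 | hj1
    · exact hout x (Or.inl hj1)
    · -- x j ≤ -κ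
      rcases lt_or_eq_of_le hj1 with hj2 | hj2
      · exact hout x (Or.inr (by linarith))
      · -- x j = -κ : boundary case, use continuity from the left
        have hxj : x j = -(κ : ℝ) := by linarith
        set g : ℝ → ℝ := fun t => φ (Function.update x j t) with hg
        have hgc : Continuous g := by
          apply hφc.comp
          apply continuous_pi
          intro k
          by_cases hk : k = j
          · subst hk; simpa using continuous_id.congr fun t =>
              (Function.update_self k t x).symm
          · simpa using (continuous_const (y := x k)).congr fun t =>
              (Function.update_of_ne hk t x).symm
        have hgz : ∀ t < -(κ : ℝ), g t = 0 := by
          intro t ht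
          apply hout
          rw [Function.update_self]
          exact Or.inr ht
        have h1 : Filter.Tendsto g (nhdsWithin (-(κ : ℝ)) (Set.Iio (-(κ : ℝ))))
            (nhds (g (-(κ : ℝ)))) := (hgc.tendsto _).mono_left nhdsWithin_le_nhds
        have h2 : Filter.Tendsto g (nhdsWithin (-(κ : ℝ)) (Set.Iio (-(κ : ℝ))))
            (nhds 0) := by
          apply Filter.Tendsto.congr' _ tendsto_const_nhds
          filter_upwards [self_mem_nhdsWithin] with t ht
          exact (hgz t ht).symm
        have hkey := tendsto_nhds_unique h1 h2
        have : g (-(κ : ℝ)) = φ x := by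
          rw [hg]; simp only []
          rw [← hxj, Function.update_eq_self]
        rw [← this, hkey]
  -- bound on φ
  have hcs : HasCompactSupport φ := by
    have hsub : tsupport φ ⊆ {x : Fin d → ℝ | ∀ j, x j ∈ Set.Icc (-(κ : ℝ)) (κ : ℝ)} := by
      apply closure_minimal
      · intro x hx
        intro j
        exact ⟨(hφs hx j).1, (hφs hx j).2.le⟩
      · have : {x : Fin d → ℝ | ∀ j, x j ∈ Set.Icc (-(κ : ℝ)) (κ : ℝ)} =
            Set.pi Set.univ (fun _ => Set.Icc (-(κ : ℝ)) (κ : ℝ)) := by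
          ext x; simp [Set.mem_univ_pi, Set.mem_Icc, Pi.le_def, forall_and]
        rw [this]
        exact isClosed_set_pi fun _ _ => isClosed_Icc
    have hcomp : IsCompact {x : Fin d → ℝ | ∀ j, x j ∈ Set.Icc (-(κ : ℝ)) (κ : ℝ)} := by
      have : {x : Fin d → ℝ | ∀ j, x j ∈ Set.Icc (-(κ : ℝ)) (κ : ℝ)} =
          Set.pi Set.univ (fun _ => Set.Icc (-(κ : ℝ)) (κ : ℝ)) := by
        ext x; simp [Set.mem_univ_pi, Set.mem_Icc, Pi.le_def, forall_and]
      rw [this]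
      exact isCompact_univ_pi fun _ => isCompact_Icc
    exact hcomp.of_isClosed_subset (isClosed_tsupport φ) hsub
  obtain ⟨M, hM⟩ := hcs.exists_bound_of_continuous hφc
  have hM' : ∀ x, |φ x| ≤ M := by simpa [Real.norm_eq_abs] using hM
  have hM0 : 0 ≤ M := le_trans (abs_nonneg _) (hM' 0)
  -- the cell-constant approximations
  set F : (Fin d → ℝ) → ℝ := fun l => if ∀ j, l j ≠ ω then φ l else 0 with hF
  set ψ : ℕ → (Fin d → ℝ) → ℝ := fun i x => F (quant d ω (δ i) (κ : ℝ) x) with hψ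
  have hψcell : ∀ i, ∀ x y, quant d ω (δ i) (κ : ℝ) x = quant d ω (δ i) (κ : ℝ) y →
      ψ i x = ψ i y := by
    intro i x y h
    simp only [hψ, h]
  -- alternative description of ψ
  have hψeq : ∀ i x, ψ i x =
      if ∀ j, |x j| < (κ : ℝ) then φ (quant d ω (δ i) (κ : ℝ) x) else 0 := by
    intro i x
    have hiff : (∀ j, quant d ω (δ i) (κ : ℝ) x j ≠ ω) ↔ (∀ j, |x j| < (κ : ℝ)) := by
      apply forall_congr'
      intro j
      constructor
      · intro h
        by_contra hc
        exact h (quant1_eq_omega (not_lt.1 hc))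
      · intro h
        exact quant1_ne_omega hω i h
    simp only [hψ, hF]
    by_cases hcase : ∀ j, |x j| < (κ : ℝ)
    · rw [if_pos (hiff.2 hcase), if_pos hcase]
    · rw [if_neg (fun h => hcase (hiff.1 h)), if_neg hcase]
  -- bound on ψ
  have hψbd : ∀ i x, |ψ i x| ≤ M := by
    intro i x
    rw [hψeq]
    split
    · exact hM' _
    · simpa using hM0
  -- measurability of ψ
  have hψm : ∀ i, Measurable (ψ i) := by
    intro i
    have hFm : Measurable F := by
      have : F = Set.indicator {l : Fin d → ℝ | ∀ j, l j ≠ ω} φ := by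
        funext l
        rw [Set.indicator_apply]
        rfl
      rw [this]
      apply hφc.measurable.indicator
      have : {l : Fin d → ℝ | ∀ j, l j ≠ ω} = ⋂ j, (fun l : Fin d → ℝ => l j) ⁻¹' {ω}ᶜ := by
        ext l; simp
      rw [this]
      exact MeasurableSet.iInter fun j =>
        (measurable_pi_apply j) (MeasurableSet.singleton ω).compl
    exact hFm.comp (measurable_quant d ω (δ i) (κ : ℝ))
  -- pointwise convergence ψ i x → φ x
  have hψtend : ∀ x, Filter.Tendsto (fun i => ψ i x) Filter.atTop (nhds (φ x)) := by
    intro x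
    by_cases hcase : ∀ j, |x j| < (κ : ℝ)
    · have hq : Filter.Tendsto (fun i => quant d ω (δ i) (κ : ℝ) x) Filter.atTop (nhds x) := by
        rw [tendsto_pi_nhds]
        intro j
        have hδ0 : Filter.Tendsto δ Filter.atTop (nhds 0) := by
          have : δ = fun i : ℕ => ((1 : ℝ) / 2) ^ i := by
            funext i
            show (2 : ℝ) ^ (-(i : ℤ)) = ((1 : ℝ) / 2) ^ i
            rw [zpow_neg, zpow_natCast, one_div, inv_pow]
          rw [this]
          exact tendsto_pow_atTop_nhds_zero_of_lt_one (by norm_num) (by norm_num)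
        have key : ∀ i, |quant d ω (δ i) (κ : ℝ) x j - x j| ≤ δ i := fun i =>
          quant1_abs_sub_le (hδpos i) (hcase j)
        have h1 : Filter.Tendsto (fun i => quant d ω (δ i) (κ : ℝ) x j - x j)
            Filter.atTop (nhds 0) := by
          apply squeeze_zero_norm _ hδ0
          intro i
          simpa [Real.norm_eq_abs] using key i
        have := h1.add (tendsto_const_nhds (x := x j))
        simpa using this
      have := (hφc.tendsto x).comp hq
      apply this.congr
      intro i
      rw [hψeq, if_pos hcase]
      rfl
    · have h0 : φ x = 0 := hφ0 x hcase
      rw [h0]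
      have heq : (fun i => ψ i x) = fun _ : ℕ => (0 : ℝ) :=
        funext fun i => by rw [hψeq, if_neg hcase]
      rw [heq]
      exact tendsto_const_nhds
  -- convergence of ∫ ψ i dp
  have hIp : Filter.Tendsto (fun i => ∫ x, ψ i x ∂p) Filter.atTop (nhds (∫ x, φ x ∂p)) := by
    apply tendsto_integral_of_dominated_convergence (fun _ => M)
    · exact fun i => ((hψm i).aestronglyMeasurable)
    · exact integrable_const M
    · intro i
      filter_upwards with x
      simpa [Real.norm_eq_abs] using hψbd i x
    · filter_upwards with x
      exact hψtend x
  -- convergence of ∫ exp (ψ i) dq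
  have hIq : Filter.Tendsto (fun i => ∫ x, Real.exp (ψ i x) ∂q) Filter.atTop
      (nhds (∫ x, Real.exp (φ x) ∂q)) := by
    apply tendsto_integral_of_dominated_convergence (fun _ => Real.exp M)
    · exact fun i => (Real.continuous_exp.measurable.comp (hψm i)).aestronglyMeasurable
    · exact integrable_const _
    · intro i
      filter_upwards with x
      rw [Real.norm_eq_abs, abs_of_pos (Real.exp_pos _)]
      exact Real.exp_le_exp.2 (le_trans (le_abs_self _) (hψbd i x))
    · filter_upwards with x
      exact (Real.continuous_exp.tendsto _).comp (hψtend x)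
  -- positivity of the limit integral
  have hexpint : Integrable (fun x => Real.exp (φ x)) q := by
    apply Integrable.mono' (integrable_const (Real.exp M))
      (Real.continuous_exp.comp hφc).aestronglyMeasurable
    filter_upwards with x
    simp only [Function.comp_apply, Real.norm_eq_abs, Real.abs_exp]
    exact Real.exp_le_exp.2 (le_trans (le_abs_self _) (hM' x))
  have hpos : 0 < ∫ x, Real.exp (φ x) ∂q := by
    have h1 : Real.exp (-M) ≤ ∫ x, Real.exp (φ x) ∂q := by
      have : ∫ _ : Fin d → ℝ, Real.exp (-M) ∂q = Real.exp (-M) := by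
        simp [measure_univ]
      rw [← this]
      apply integral_mono (integrable_const _) hexpint
      intro x
      exact Real.exp_le_exp.2 (neg_le_of_abs_le (hM' x))
    linarith [Real.exp_pos (-M)]
  -- convergence of varF
  have hvar : Filter.Tendsto (fun i => varF p q (ψ i)) Filter.atTop (nhds (varF p q φ)) := by
    unfold varF
    apply Filter.Tendsto.sub hIp
    exact ((Real.continuousAt_log (ne_of_gt hpos)).tendsto.comp hIq)
  -- pass to EReal
  have hvarE : Filter.Tendsto (fun i => ((varF p q (ψ i) : ℝ) : EReal)) Filter.atTop
      (nhds ((varF p q φ : ℝ) : EReal)) :=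
    (continuous_coe_real_ereal.tendsto _).comp hvar
  rw [← hvarE.liminf_eq]
  refine Filter.liminf_le_liminf (Filter.Eventually.of_forall fun i => ?_)
  exact le_iSup (fun ψ' : {ψ' : (Fin d → ℝ) → ℝ // ∀ x y,
      quant d ω ((2 : ℝ) ^ (-(i : ℤ))) (κ : ℝ) x =
        quant d ω ((2 : ℝ) ^ (-(i : ℤ))) (κ : ℝ) y → ψ' x = ψ' y} =>
    ((varF p q ψ'.1 : ℝ) : EReal)) ⟨ψ i, hψcell i⟩
end

section
/- Let c0 > 0 and 0 < α < β. There exists a constant c1 > 0 depending only on c0, α, β such that the following holds. For every integer n ≥ 1 and every family (Y_{ij})_{1 ≤ i ≤ j ≤ n} of independent complex random variables each satisfying the tail bound T(n,c0,α), for every 0 < ε ≤ 1 and every δ > 0, P( (1/n) ∑_{1 ≤ i ≤ j ≤ n} |Y_{ij}|^β 1_{|Y_{ij}| ≤ ε} ≥ δ ) ≤ exp( −n ( δ ε^{−β} − c1 ε^{−α} ) ). -/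
open MeasureTheory ProbabilityTheory ENNReal
open Real Set

lemma my_exp_le_one_add_two_mul {y : ℝ} (h0 : 0 ≤ y) (h1 : y ≤ 1) :
    Real.exp y ≤ 1 + 2 * y := by
  have hconv := convexOn_exp.2 (Set.mem_univ (0:ℝ)) (Set.mem_univ (1:ℝ))
    (show (0:ℝ) ≤ 1 - y by linarith) h0 (by ring)
  simp only [smul_eq_mul, mul_zero, mul_one, zero_add, Real.exp_zero] at hconv
  have he : Real.exp 1 < 2.7182818286 := Real.exp_one_lt_d9
  nlinarith [hconv, he]

lemma truncated_moment_bound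
    {c0 α β : ℝ} (hc0 : 0 < c0) (hα : 0 < α) (hαβ : α < β) (hβ : 0 < β)
    {n : ℕ} (hn : 1 ≤ n)
    {Ω : Type} [MeasurableSpace Ω] (P : Measure Ω) [IsProbabilityMeasure P]
    (W : Ω → ℂ) (hW : Measurable W)
    (tail : ∀ t : ℝ, 0 < t → t ≤ 1 →
      (n : ℝ≥0∞) * P {ω | t ≤ ‖W ω‖} ≤ ENNReal.ofReal (c0 * t ^ (-α)))
    {ε : ℝ} (hε : 0 < ε) (hε1 : ε ≤ 1) :
    ∫ ω, (if ‖W ω‖ ≤ ε then ‖W ω‖ ^ β else 0) ∂P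
      ≤ β * c0 / ((β - α) * n) * ε ^ (β - α) := by
  have hn0 : (0:ℝ) < n := by exact_mod_cast hn
  set f : Ω → ℝ := fun ω => min (‖W ω‖) ε with hf
  have hf_meas : Measurable f := (continuous_norm.measurable.comp hW).min measurable_const
  have hf_nn : ∀ ω, 0 ≤ f ω := fun ω => le_min (norm_nonneg _) hε.le
  have hf_le : ∀ ω, f ω ≤ ε := fun ω => min_le_right _ _
  have hfb_meas : Measurable fun ω => f ω ^ β :=
    (Real.continuous_rpow_const hβ.le).measurable.comp hf_meas
  have hfb_int : Integrable (fun ω => f ω ^ β) P := by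
    refine (integrable_const (1:ℝ)).mono' hfb_meas.aestronglyMeasurable ?_
    refine Filter.Eventually.of_forall fun ω => ?_
    rw [Real.norm_eq_abs, abs_of_nonneg (Real.rpow_nonneg (hf_nn ω) β)]
    exact Real.rpow_le_one (hf_nn ω) (le_trans (hf_le ω) hε1) hβ.le
  -- step 1: pointwise bound
  have step1 : ∫ ω, (if ‖W ω‖ ≤ ε then ‖W ω‖ ^ β else 0) ∂P
      ≤ ∫ ω, f ω ^ β ∂P := by
    refine integral_mono_of_nonneg ?_ hfb_int ?_
    · refine Filter.Eventually.of_forall fun ω => ?_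
      by_cases h : ‖W ω‖ ≤ ε <;> simp [h, Real.rpow_nonneg (norm_nonneg _)]
    · refine Filter.Eventually.of_forall fun ω => ?_
      by_cases h : ‖W ω‖ ≤ ε
      · simp only [h, if_true, hf, min_eq_left h]; exact le_refl _
      · simp only [h, if_false]
        exact Real.rpow_nonneg (hf_nn ω) β
  -- step 2: layer cake
  have hL : ∫⁻ ω, ENNReal.ofReal (f ω ^ β) ∂P
      = ENNReal.ofReal β * ∫⁻ t in Ioi 0, P {a | t ≤ f a} * ENNReal.ofReal (t ^ (β - 1)) :=
    lintegral_rpow_eq_lintegral_meas_le_mul P (Filter.Eventually.of_forall hf_nn)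
      hf_meas.aemeasurable hβ
  -- the tail integral bound
  have key : ∫⁻ t in Ioi 0, P {a | t ≤ f a} * ENNReal.ofReal (t ^ (β - 1))
      ≤ (ENNReal.ofReal c0 / n) * ENNReal.ofReal (ε ^ (β - α) / (β - α)) := by
    have hsplit : (Ioi (0:ℝ)) = Ioc 0 ε ∪ Ioi ε := (Ioc_union_Ioi_eq_Ioi hε.le).symm
    rw [hsplit, lintegral_union measurableSet_Ioi (Ioc_disjoint_Ioi le_rfl)]
    have hzero : ∫⁻ t in Ioi ε, P {a | t ≤ f a} * ENNReal.ofReal (t ^ (β - 1)) = 0 := by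
      rw [setLIntegral_congr_fun measurableSet_Ioi
        (fun t ht => ?_), lintegral_zero]
      have : {a | t ≤ f a} = (∅ : Set Ω) := by
        ext a; simp only [mem_setOf_eq, mem_empty_iff_false, iff_false, not_le]
        exact lt_of_le_of_lt (hf_le a) ht
      rw [this, measure_empty, zero_mul]
    rw [hzero, add_zero]
    have hmono : ∫⁻ t in Ioc 0 ε, P {a | t ≤ f a} * ENNReal.ofReal (t ^ (β - 1))
        ≤ ∫⁻ t in Ioc 0 ε, (ENNReal.ofReal c0 / n) * ENNReal.ofReal (t ^ (β - α - 1)) := by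
      refine setLIntegral_mono' measurableSet_Ioc fun t ht => ?_
      obtain ⟨ht0, htε⟩ := ht
      have hne : (n:ℝ≥0∞) ≠ 0 := by
        simp only [ne_eq, Nat.cast_eq_zero]
        omega
      have hPt : P {a | t ≤ f a} ≤ ENNReal.ofReal (c0 * t ^ (-α)) / n := by
        rw [ENNReal.le_div_iff_mul_le (Or.inl hne) (Or.inl (natCast_ne_top n)), mul_comm]
        refine le_trans ?_ (tail t ht0 (le_trans htε hε1))
        refine mul_le_mul_right (measure_mono ?_) _
        intro a ha
        simp only [Set.mem_setOf_eq] at ha ⊢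
        exact le_trans ha (min_le_left _ _)
      calc P {a | t ≤ f a} * ENNReal.ofReal (t ^ (β - 1))
          ≤ (ENNReal.ofReal (c0 * t ^ (-α)) / n) * ENNReal.ofReal (t ^ (β - 1)) :=
            mul_le_mul_left hPt _
        _ = (ENNReal.ofReal c0 / n) * ENNReal.ofReal (t ^ (β - α - 1)) := by
            rw [ENNReal.ofReal_mul hc0.le, div_eq_mul_inv, div_eq_mul_inv]
            rw [show ENNReal.ofReal c0 * ENNReal.ofReal (t ^ (-α)) * (n:ℝ≥0∞)⁻¹
                * ENNReal.ofReal (t ^ (β-1))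
              = ENNReal.ofReal c0 * (n:ℝ≥0∞)⁻¹
                * (ENNReal.ofReal (t ^ (-α)) * ENNReal.ofReal (t ^ (β-1))) by ring]
            rw [← ENNReal.ofReal_mul (Real.rpow_nonneg ht0.le _),
              ← Real.rpow_add ht0]
            ring_nf
    refine le_trans hmono ?_
    have hne2 : (n:ℝ≥0∞) ≠ 0 := by
      simp only [ne_eq, Nat.cast_eq_zero]
      omega
    rw [lintegral_const_mul' _ _ ((ENNReal.div_lt_top ofReal_ne_top hne2).ne)]
    gcongr
    -- ∫⁻ t in Ioc 0 ε, ofReal (t ^ (β - α - 1)) ≤ ofReal (ε^(β-α)/(β-α))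
    have hint : IntegrableOn (fun t : ℝ => t ^ (β - α - 1)) (Ioc 0 ε) volume := by
      have := intervalIntegral.intervalIntegrable_rpow' (a := 0) (b := ε)
        (show (-1:ℝ) < β - α - 1 by linarith)
      rwa [intervalIntegrable_iff, uIoc_of_le hε.le] at this
    rw [← ofReal_integral_eq_lintegral_ofReal hint ?_]
    · apply ENNReal.ofReal_le_ofReal
      rw [← intervalIntegral.integral_of_le hε.le]
      rw [integral_rpow (Or.inl (by linarith))]
      rw [Real.zero_rpow (by linarith : β - α - 1 + 1 ≠ 0)]
      rw [show β - α - 1 + 1 = β - α by ring]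
      simp [div_le_div_iff_of_pos_right]
    · refine (ae_restrict_iff' measurableSet_Ioc).2 (Filter.Eventually.of_forall ?_)
      exact fun t ht => Real.rpow_nonneg ht.1.le _
  -- assemble
  have hInt_eq : ∫ ω, f ω ^ β ∂P = (∫⁻ ω, ENNReal.ofReal (f ω ^ β) ∂P).toReal := by
    rw [integral_eq_lintegral_of_nonneg_ae
      (Filter.Eventually.of_forall fun ω => Real.rpow_nonneg (hf_nn ω) β)
      hfb_meas.aestronglyMeasurable]
  refine le_trans step1 ?_
  rw [hInt_eq, hL]
  have hfin : ENNReal.ofReal β * ((ENNReal.ofReal c0 / n) * ENNReal.ofReal (ε ^ (β - α) / (β - α)))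
      ≠ ⊤ := by
    apply ENNReal.mul_ne_top ofReal_ne_top
    have hne2 : (n:ℝ≥0∞) ≠ 0 := by
      simp only [ne_eq, Nat.cast_eq_zero]
      omega
    exact ENNReal.mul_ne_top ((ENNReal.div_lt_top ofReal_ne_top hne2).ne) ofReal_ne_top
  calc (ENNReal.ofReal β * ∫⁻ t in Ioi 0, P {a | t ≤ f a} * ENNReal.ofReal (t ^ (β - 1))).toReal
      ≤ (ENNReal.ofReal β * ((ENNReal.ofReal c0 / n)
          * ENNReal.ofReal (ε ^ (β - α) / (β - α)))).toReal := by
        apply ENNReal.toReal_mono hfin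
        exact mul_le_mul_right key _
    _ = β * (c0 / n * (ε ^ (β - α) / (β - α))) := by
        rw [ENNReal.toReal_mul, ENNReal.toReal_mul, ENNReal.toReal_div,
          ENNReal.toReal_ofReal hβ.le, ENNReal.toReal_ofReal hc0.le,
          ENNReal.toReal_ofReal (le_of_lt (div_pos (Real.rpow_pos_of_pos hε _) (by linarith))),
          ENNReal.toReal_natCast]
    _ = β * c0 / ((β - α) * n) * ε ^ (β - α) := by
        field_simp

lemma truncated_mgf_bound
    {c0 α β : ℝ} (hc0 : 0 < c0) (hα : 0 < α) (hαβ : α < β) (hβ : 0 < β)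
    {n : ℕ} (hn : 1 ≤ n)
    {Ω : Type} [MeasurableSpace Ω] (P : Measure Ω) [IsProbabilityMeasure P]
    (W : Ω → ℂ) (hW : Measurable W)
    (tail : ∀ t : ℝ, 0 < t → t ≤ 1 →
      (n : ℝ≥0∞) * P {ω | t ≤ ‖W ω‖} ≤ ENNReal.ofReal (c0 * t ^ (-α)))
    {ε : ℝ} (hε : 0 < ε) (hε1 : ε ≤ 1) :
    mgf (fun ω => if ‖W ω‖ ≤ ε then ‖W ω‖ ^ β else 0) P (ε ^ (-β))
      ≤ Real.exp (2 * β * c0 / (β - α) * ε ^ (-α) / n) := by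
  have hn0 : (0:ℝ) < n := by exact_mod_cast hn
  set X : Ω → ℝ := fun ω => if ‖W ω‖ ≤ ε then ‖W ω‖ ^ β else 0 with hXdef
  have hX_nn : ∀ ω, 0 ≤ X ω := by
    intro ω
    by_cases h : ‖W ω‖ ≤ ε <;>
      simp [hXdef, h, Real.rpow_nonneg (norm_nonneg _)]
  have hX_le : ∀ ω, X ω ≤ ε ^ β := by
    intro ω
    by_cases h : ‖W ω‖ ≤ ε
    · simp only [hXdef, h, if_true]
      exact Real.rpow_le_rpow (norm_nonneg _) h hβ.le
    · simp only [hXdef, h, if_false]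
      exact (Real.rpow_pos_of_pos hε β).le
  have hlam : (0:ℝ) < ε ^ (-β) := Real.rpow_pos_of_pos hε _
  have hlamX : ∀ ω, ε ^ (-β) * X ω ≤ 1 := by
    intro ω
    calc ε ^ (-β) * X ω ≤ ε ^ (-β) * ε ^ β := by
          exact mul_le_mul_of_nonneg_left (hX_le ω) hlam.le
      _ = 1 := by
          rw [← Real.rpow_add hε]
          simp
  have hX_meas : Measurable X := by
    apply Measurable.ite ?_ ?_ measurable_const
    · exact measurableSet_le (continuous_norm.measurable.comp hW) measurable_const
    · exact (Real.continuous_rpow_const hβ.le).measurable.comp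
        (continuous_norm.measurable.comp hW)
  have hX_int : Integrable X P := by
    refine (integrable_const (1:ℝ)).mono' hX_meas.aestronglyMeasurable ?_
    refine Filter.Eventually.of_forall fun ω => ?_
    rw [Real.norm_eq_abs, abs_of_nonneg (hX_nn ω)]
    exact le_trans (hX_le ω) (Real.rpow_le_one hε.le hε1 hβ.le)
  have hEX_le : ∫ ω, X ω ∂P ≤ β * c0 / ((β - α) * n) * ε ^ (β - α) :=
    truncated_moment_bound hc0 hα hαβ hβ hn P W hW tail hε hε1
  have hEX_nn : 0 ≤ ∫ ω, X ω ∂P := integral_nonneg hX_nn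
  have hmgf : mgf X P (ε ^ (-β)) ≤ 1 + 2 * ε ^ (-β) * ∫ ω, X ω ∂P := by
    rw [mgf]
    have : ∫ ω, Real.exp (ε ^ (-β) * X ω) ∂P
        ≤ ∫ ω, (1 + 2 * (ε ^ (-β) * X ω)) ∂P := by
      refine integral_mono_of_nonneg
        (Filter.Eventually.of_forall fun ω => (Real.exp_pos _).le) ?_
        (Filter.Eventually.of_forall fun ω =>
          my_exp_le_one_add_two_mul (mul_nonneg hlam.le (hX_nn ω)) (hlamX ω))
      exact (integrable_const (1:ℝ)).add ((hX_int.const_mul _).const_mul 2)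
    refine le_trans this ?_
    rw [integral_add (integrable_const 1) ((hX_int.const_mul _).const_mul 2)]
    simp only [integral_const, Measure.real, measure_univ, ENNReal.toReal_one, smul_eq_mul, one_mul]
    have harr : (fun a => 2 * (ε ^ (-β) * X a)) = fun a => (2 * ε ^ (-β)) * X a := by
      funext a; ring
    rw [harr, integral_const_mul]
  refine le_trans hmgf ?_
  have h1 : 1 + 2 * ε ^ (-β) * ∫ ω, X ω ∂P ≤ Real.exp (2 * ε ^ (-β) * ∫ ω, X ω ∂P) := by
    have := Real.add_one_le_exp (2 * ε ^ (-β) * ∫ ω, X ω ∂P)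
    linarith
  refine le_trans h1 (Real.exp_le_exp.2 ?_)
  have h2 : 2 * ε ^ (-β) * ∫ ω, X ω ∂P
      ≤ 2 * ε ^ (-β) * (β * c0 / ((β - α) * n) * ε ^ (β - α)) := by
    exact mul_le_mul_of_nonneg_left hEX_le (by positivity)
  refine le_trans h2 (le_of_eq ?_)
  rw [show (2:ℝ) * ε ^ (-β) * (β * c0 / ((β - α) * n) * ε ^ (β - α))
      = 2 * (β * c0 / ((β - α) * n)) * (ε ^ (-β) * ε ^ (β - α)) by ring,
    ← Real.rpow_add hε]
  rw [show -β + (β - α) = -α by ring]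
  field_simp

/-- Exponential concentration bound for the truncated `β`-moments of a triangular array of
independent random variables with heavy tails: under the tail bound `T(n, c0, α)`, for every
`0 < ε ≤ 1` and `δ > 0`,
`P( (1/n) ∑_{i ≤ j} |Y_{ij}|^β 1_{|Y_{ij}| ≤ ε} ≥ δ ) ≤ exp(−n(δ ε^{−β} − c1 ε^{−α}))`. -/
theorem truncated_moment_exponential_bound
    (c0 α β : ℝ) (hc0 : 0 < c0) (hα : 0 < α) (hαβ : α < β) :
    ∃ c1 : ℝ, 0 < c1 ∧
      ∀ (n : ℕ), 1 ≤ n →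
      ∀ (Ω : Type) (_ : MeasurableSpace Ω) (P : Measure Ω), IsProbabilityMeasure P →
      ∀ Y : Fin n → Fin n → Ω → ℂ,
        (∀ i j, Measurable (Y i j)) →
        iIndepFun
          (fun pr : {pr : Fin n × Fin n // pr.1 ≤ pr.2} => Y pr.1.1 pr.1.2) P →
        (∀ i j : Fin n, i ≤ j → ∀ t : ℝ, 0 < t → t ≤ 1 →
          (n : ℝ≥0∞) * P {ω | t ≤ ‖Y i j ω‖} ≤ ENNReal.ofReal (c0 * t ^ (-α))) →
        ∀ ε δ : ℝ, 0 < ε → ε ≤ 1 → 0 < δ →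
          P {ω | δ ≤ (1 / n : ℝ) *
              ∑ pr ∈ Finset.univ.filter (fun pr : Fin n × Fin n => pr.1 ≤ pr.2),
                (if ‖Y pr.1 pr.2 ω‖ ≤ ε then ‖Y pr.1 pr.2 ω‖ ^ β else 0)}
            ≤ ENNReal.ofReal (Real.exp (-(n : ℝ) * (δ * ε ^ (-β) - c1 * ε ^ (-α)))) := by
  have hβ : 0 < β := lt_trans hα hαβ
  refine ⟨2 * β * c0 / (β - α), div_pos (by positivity) (by linarith), ?_⟩
  intro n hn Ω mΩ P hP Y hYmeas hYindep htail ε δ hε hε1 hδ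
  have hn0 : (0:ℝ) < n := by exact_mod_cast hn
  set c1 : ℝ := 2 * β * c0 / (β - α) with hc1def
  set I := {pr : Fin n × Fin n // pr.1 ≤ pr.2}
  set g : ℂ → ℝ := fun z => if ‖z‖ ≤ ε then ‖z‖ ^ β else 0 with hgdef
  have hg_meas : Measurable g := by
    apply Measurable.ite ?_ ?_ measurable_const
    · exact measurableSet_le continuous_norm.measurable measurable_const
    · exact (Real.continuous_rpow_const hβ.le).measurable.comp continuous_norm.measurable
  have hg_nn : ∀ z, 0 ≤ g z := by
    intro z
    by_cases h : ‖z‖ ≤ ε <;>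
      simp [hgdef, h, Real.rpow_nonneg (norm_nonneg _)]
  have hg_le : ∀ z, g z ≤ ε ^ β := by
    intro z
    by_cases h : ‖z‖ ≤ ε
    · simp only [hgdef, h, if_true]
      exact Real.rpow_le_rpow (norm_nonneg _) h hβ.le
    · simp only [hgdef, h, if_false]
      exact (Real.rpow_pos_of_pos hε β).le
  set X : I → Ω → ℝ := fun pr => g ∘ (Y pr.1.1 pr.1.2) with hXdef
  have hX_meas : ∀ pr : I, Measurable (X pr) := fun pr => hg_meas.comp (hYmeas _ _)
  have hX_indep : iIndepFun X P :=
    hYindep.comp (fun _ => g) (fun _ => hg_meas)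
  have hlam : (0:ℝ) < ε ^ (-β) := Real.rpow_pos_of_pos hε _
  have hlamX : ∀ pr ω, ε ^ (-β) * X pr ω ≤ 1 := by
    intro pr ω
    calc ε ^ (-β) * X pr ω ≤ ε ^ (-β) * ε ^ β :=
          mul_le_mul_of_nonneg_left (hg_le _) hlam.le
      _ = 1 := by rw [← Real.rpow_add hε]; simp
  -- rewrite the event
  have hset : {ω | δ ≤ (1 / n : ℝ) *
      ∑ pr ∈ Finset.univ.filter (fun pr : Fin n × Fin n => pr.1 ≤ pr.2),
        (if ‖Y pr.1 pr.2 ω‖ ≤ ε then ‖Y pr.1 pr.2 ω‖ ^ β else 0)}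
      = {ω | (n:ℝ) * δ ≤ (∑ pr : I, X pr) ω} := by
    ext ω
    simp only [Set.mem_setOf_eq, Finset.sum_apply]
    have hsum : ∑ pr ∈ Finset.univ.filter (fun pr : Fin n × Fin n => pr.1 ≤ pr.2),
        (if ‖Y pr.1 pr.2 ω‖ ≤ ε then ‖Y pr.1 pr.2 ω‖ ^ β else 0)
        = ∑ pr : I, X pr ω := by
      refine Finset.sum_subtype _ (fun x => ?_) _
      simp
    rw [hsum, one_div, le_inv_mul_iff₀ hn0]
  rw [hset]
  -- integrability of the exponential
  have hint_i : ∀ pr : I, Integrable (fun ω => Real.exp (ε ^ (-β) * X pr ω)) P := by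
    intro pr
    refine (integrable_const (Real.exp 1)).mono'
      (((hX_meas pr).const_mul _).exp.aestronglyMeasurable) ?_
    refine Filter.Eventually.of_forall fun ω => ?_
    rw [Real.norm_eq_abs, abs_of_nonneg (Real.exp_pos _).le]
    exact Real.exp_le_exp.2 (hlamX pr ω)
  have hint : Integrable (fun ω => Real.exp (ε ^ (-β) * (∑ pr : I, X pr) ω)) P :=
    hX_indep.integrable_exp_mul_sum hX_meas (fun i _ => hint_i i)
  -- Chernoff
  have markov := measure_ge_le_exp_mul_mgf (X := ∑ pr : I, X pr) (μ := P)
    ((n:ℝ) * δ) hlam.le hint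
  have hmgf_sum : mgf (∑ pr : I, X pr) P (ε ^ (-β)) = ∏ pr : I, mgf (X pr) P (ε ^ (-β)) :=
    hX_indep.mgf_sum hX_meas Finset.univ
  have hmgf_each : ∀ pr : I, mgf (X pr) P (ε ^ (-β)) ≤ Real.exp (c1 * ε ^ (-α) / n) := by
    intro pr
    have := truncated_mgf_bound hc0 hα hαβ hβ hn P (Y pr.1.1 pr.1.2) (hYmeas _ _)
      (htail pr.1.1 pr.1.2 pr.2) hε hε1
    exact this
  have hprod : ∏ pr : I, mgf (X pr) P (ε ^ (-β))
      ≤ Real.exp ((Fintype.card I : ℝ) * (c1 * ε ^ (-α) / n)) := by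
    calc ∏ pr : I, mgf (X pr) P (ε ^ (-β))
        ≤ ∏ _pr : I, Real.exp (c1 * ε ^ (-α) / n) :=
          Finset.prod_le_prod (fun pr _ => mgf_nonneg) (fun pr _ => hmgf_each pr)
      _ = Real.exp (c1 * ε ^ (-α) / n) ^ (Fintype.card I) := by
          rw [Finset.prod_const, Finset.card_univ]
      _ = Real.exp ((Fintype.card I : ℝ) * (c1 * ε ^ (-α) / n)) := by
          rw [← Real.exp_nat_mul]
  have hcard : (Fintype.card I : ℝ) ≤ (n:ℝ) * n := by
    have h1 : Fintype.card I ≤ Fintype.card (Fin n × Fin n) := Fintype.card_subtype_le _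
    have h2 : Fintype.card (Fin n × Fin n) = n * n := by
      rw [Fintype.card_prod, Fintype.card_fin]
    rw [h2] at h1
    exact_mod_cast h1
  have hc1pos : (0:ℝ) < c1 := by
    rw [hc1def]
    exact div_pos (by positivity) (by linarith)
  have hw : (0:ℝ) ≤ c1 * ε ^ (-α) :=
    mul_nonneg hc1pos.le (Real.rpow_pos_of_pos hε _).le
  have hexp_le : Real.exp (-(ε ^ (-β)) * ((n:ℝ) * δ))
        * Real.exp ((Fintype.card I : ℝ) * (c1 * ε ^ (-α) / n))
      ≤ Real.exp (-(n : ℝ) * (δ * ε ^ (-β) - c1 * ε ^ (-α))) := by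
    rw [← Real.exp_add]
    apply Real.exp_le_exp.2
    have hc : (Fintype.card I : ℝ) * (c1 * ε ^ (-α) / n) ≤ (n:ℝ) * (c1 * ε ^ (-α)) := by
      calc (Fintype.card I : ℝ) * (c1 * ε ^ (-α) / n)
          ≤ ((n:ℝ) * n) * (c1 * ε ^ (-α) / n) :=
            mul_le_mul_of_nonneg_right hcard (div_nonneg hw hn0.le)
        _ = (n:ℝ) * (c1 * ε ^ (-α)) := by field_simp
    nlinarith [hc]
  have hfinal : (P {ω | (n:ℝ) * δ ≤ (∑ pr : I, X pr) ω}).toReal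
      ≤ Real.exp (-(n : ℝ) * (δ * ε ^ (-β) - c1 * ε ^ (-α))) := by
    refine le_trans markov ?_
    rw [hmgf_sum]
    refine le_trans ?_ hexp_le
    exact mul_le_mul_of_nonneg_left hprod (Real.exp_pos _).le
  rw [← ENNReal.ofReal_toReal (measure_ne_top P _)]
  exact ENNReal.ofReal_le_ofReal hfinal
end

section
/- Let c0 > 0 and 0 < α < β. There exists a constant c1 > 0 depending only on c0, α, β such that the following holds. For every integer n ≥ 1, every complex random variable Y satisfying the tail bound T(n,c0,α), every 0 < ε ≤ 1 and every 0 < λ ≤ ε^{−β}, E[ exp( λ |Y|^β 1_{|Y| ≤ ε} ) ] ≤ exp( c1 λ ε^{β−α} / n ). -/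
open MeasureTheory ENNReal

lemma exp_le_one_add_mul {u : ℝ} (h0 : 0 ≤ u) (h1 : u ≤ 1) :
    Real.exp u ≤ 1 + Real.exp 1 * u := by
  have hc := convexOn_exp.2 (Set.mem_univ (0:ℝ)) (Set.mem_univ (1:ℝ))
    (by linarith : (0:ℝ) ≤ 1 - u) h0 (by ring)
  simp only [smul_eq_mul, mul_zero, mul_one, zero_add, Real.exp_zero] at hc
  nlinarith [Real.exp_pos 1]

/-- Exponential moment bound for a truncated heavy-tailed random variable: under the tail
bound `T(n, c0, α)`, for every `0 < ε ≤ 1` and `0 < λ ≤ ε^{−β}`,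
`E[exp(λ |Y|^β 1_{|Y| ≤ ε})] ≤ exp(c1 λ ε^{β−α} / n)`. -/
theorem truncated_exponential_moment_bound
    (c0 α β : ℝ) (hc0 : 0 < c0) (hα : 0 < α) (hαβ : α < β) :
    ∃ c1 : ℝ, 0 < c1 ∧
      ∀ (n : ℕ), 1 ≤ n →
      ∀ (Ω : Type) (_ : MeasurableSpace Ω) (P : Measure Ω), IsProbabilityMeasure P →
      ∀ Y : Ω → ℂ, Measurable Y →
        (∀ t : ℝ, 0 < t → t ≤ 1 →
          (n : ℝ≥0∞) * P {ω | t ≤ ‖Y ω‖} ≤ ENNReal.ofReal (c0 * t ^ (-α))) →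
        ∀ ε : ℝ, 0 < ε → ε ≤ 1 → ∀ l : ℝ, 0 < l → l ≤ ε ^ (-β) →
          (∫ ω, Real.exp (l * (if ‖Y ω‖ ≤ ε then ‖Y ω‖ ^ β else 0)) ∂P)
            ≤ Real.exp (c1 * l * ε ^ (β - α) / n) := by
  have hβ : 0 < β := lt_trans hα hαβ
  set K : ℝ := c0 * β / (β - α) with hK
  have hKpos : 0 < K := by
    apply div_pos (mul_pos hc0 hβ); linarith
  refine ⟨Real.exp 1 * K, mul_pos (Real.exp_pos 1) hKpos, ?_⟩
  intro n hn Ω mΩ P hP Y hY htail ε hε hε1 l hl hlε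
  have hn0 : (0:ℝ) < n := by exact_mod_cast hn
  -- the truncated function
  set f : Ω → ℝ := fun ω => if ‖Y ω‖ ≤ ε then ‖Y ω‖ ^ β else 0 with hf
  have hfm : Measurable f := by
    apply Measurable.ite
    · exact measurableSet_le (continuous_norm.measurable.comp hY) measurable_const
    · exact (Real.continuous_rpow_const (le_of_lt (lt_trans hα hαβ))).measurable.comp
        (continuous_norm.measurable.comp hY)
    · exact measurable_const
  have hf0 : ∀ ω, 0 ≤ f ω := by
    intro ω; simp only [hf]; split
    · exact Real.rpow_nonneg (norm_nonneg _) _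
    · exact le_refl 0
  have hfbd : ∀ ω, f ω ≤ ε ^ β := by
    intro ω; simp only [hf]; split
    · exact Real.rpow_le_rpow (norm_nonneg _) (by assumption) hβ.le
    · positivity
  have hεβ : 0 < ε ^ β := Real.rpow_pos_of_pos hε β
  -- integrability of f
  have hfint : Integrable f P := by
    refine (integrable_const (ε ^ β)).mono' hfm.aestronglyMeasurable ?_
    filter_upwards with ω
    rw [Real.norm_eq_abs, abs_of_nonneg (hf0 ω)]; exact hfbd ω
  -- layer cake bound on E[f]
  have hEf : ∫ ω, f ω ∂P ≤ K * ε ^ (β - α) / n := by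
    rw [hfint.integral_eq_integral_Ioc_meas_le (Filter.Eventually.of_forall hf0)
      (Filter.Eventually.of_forall hfbd)]
    have r : ℝ := -(α / β)
    have hr : (-1:ℝ) < -(α/β) := by
      rw [neg_lt, neg_neg]; exact (div_lt_one hβ).mpr hαβ
    have hgint : IntegrableOn (fun t : ℝ => c0 / n * t ^ (-(α/β))) (Set.Ioc 0 (ε^β)) := by
      exact (intervalIntegral.intervalIntegrable_rpow' hr (a := 0) (b := ε^β)).1.const_mul _
    have hmono : ∫ t in Set.Ioc 0 (ε^β), (P {ω | t ≤ f ω}).toReal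
        ≤ ∫ t in Set.Ioc 0 (ε^β), c0 / n * t ^ (-(α/β)) := by
      apply integral_mono_of_nonneg (Filter.Eventually.of_forall fun t => ENNReal.toReal_nonneg)
        hgint
      rw [Filter.EventuallyLE, ae_restrict_iff' measurableSet_Ioc]
      filter_upwards with t ht
      have ht0 := ht.1
      have hsub : {ω | t ≤ f ω} ⊆ {ω | t ^ (1/β) ≤ ‖Y ω‖} := by
        intro ω hω
        simp only [Set.mem_setOf_eq] at hω ⊢
        by_cases hc : ‖Y ω‖ ≤ ε
        · simp only [hf, if_pos hc] at hω
          calc t ^ (1/β) ≤ (‖Y ω‖ ^ β) ^ (1/β) :=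
                Real.rpow_le_rpow ht0.le hω (by positivity)
            _ = ‖Y ω‖ := by
                rw [← Real.rpow_mul (norm_nonneg _), mul_one_div, div_self hβ.ne',
                  Real.rpow_one]
        · exfalso; simp only [hf, if_neg hc] at hω; linarith
      have ht1 : t ^ (1/β) ≤ 1 := by
        calc t ^ (1/β) ≤ (ε^β) ^ (1/β) := Real.rpow_le_rpow ht0.le ht.2 (by positivity)
          _ = ε := by rw [← Real.rpow_mul hε.le, mul_one_div, div_self hβ.ne', Real.rpow_one]
          _ ≤ 1 := hε1
      have htp : 0 < t ^ (1/β) := Real.rpow_pos_of_pos ht0 _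
      have key := htail (t ^ (1/β)) htp ht1
      have key2 : (n:ℝ≥0∞) * P {ω | t ≤ f ω} ≤ ENNReal.ofReal (c0 * t ^ (-(α/β))) := by
        refine le_trans (mul_le_mul_right (measure_mono hsub) _) (le_trans key ?_)
        apply ENNReal.ofReal_le_ofReal
        have : (t ^ (1/β)) ^ (-α) = t ^ (-(α/β)) := by
          rw [← Real.rpow_mul ht0.le]; congr 1; ring
        rw [this]
      -- convert to real inequality
      have hc : 0 ≤ c0 * t ^ (-(α/β)) := by positivity
      have hfin : (↑n * P {ω | t ≤ f ω}) ≠ ⊤ := by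
        refine ENNReal.mul_ne_top (ENNReal.natCast_ne_top n) (measure_ne_top P _)
      have := ENNReal.toReal_mono ENNReal.ofReal_ne_top key2
      rw [ENNReal.toReal_mul, ENNReal.toReal_natCast, ENNReal.toReal_ofReal hc] at this
      rw [div_mul_eq_mul_div, le_div_iff₀ hn0, mul_comm]
      exact this
    refine le_trans hmono ?_
    have hcalc : ∫ t in Set.Ioc 0 (ε^β), c0 / n * t ^ (-(α/β))
        = c0 / n * ((ε^β) ^ (-(α/β) + 1) / (-(α/β) + 1)) := by
      rw [← intervalIntegral.integral_of_le hεβ.le, intervalIntegral.integral_const_mul,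
        integral_rpow (Or.inl hr), Real.zero_rpow (by linarith : -(α/β) + 1 ≠ 0), sub_zero]
    rw [hcalc]
    have hpow : (ε^β) ^ (-(α/β) + 1) = ε ^ (β - α) := by
      rw [← Real.rpow_mul hε.le]
      congr 1
      field_simp
      ring
    rw [hpow, hK]
    apply le_of_eq
    have hβα : (β - α) ≠ 0 := by intro h; linarith [h]
    have h2 : -(α/β) + 1 = (β - α)/β := by field_simp; ring
    rw [h2]
    field_simp
  -- now the exponential bound
  set E : ℝ := ∫ ω, f ω ∂P with hE
  have hE0 : 0 ≤ E := integral_nonneg hf0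
  have hlf1 : ∀ ω, l * f ω ≤ 1 := by
    intro ω
    have h1 : l * f ω ≤ ε ^ (-β) * ε ^ β :=
      mul_le_mul hlε (hfbd ω) (hf0 ω) (Real.rpow_nonneg hε.le _)
    rwa [← Real.rpow_add hε, neg_add_cancel, Real.rpow_zero] at h1
  have hexp : ∀ ω, Real.exp (l * f ω) ≤ 1 + Real.exp 1 * l * f ω := by
    intro ω
    have := exp_le_one_add_mul (mul_nonneg hl.le (hf0 ω)) (hlf1 ω)
    linarith [this]
  have hgint : Integrable (fun ω => 1 + Real.exp 1 * l * f ω) P :=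
    (integrable_const 1).add (hfint.const_mul _)
  have h1 : ∫ ω, Real.exp (l * f ω) ∂P ≤ ∫ ω, (1 + Real.exp 1 * l * f ω) ∂P := by
    apply integral_mono_of_nonneg (Filter.Eventually.of_forall fun ω => (Real.exp_pos _).le)
      hgint (Filter.Eventually.of_forall hexp)
  have h2 : ∫ ω, (1 + Real.exp 1 * l * f ω) ∂P = 1 + Real.exp 1 * l * E := by
    rw [integral_add (integrable_const 1) (hfint.const_mul _), integral_const,
      integral_const_mul]
    simp [hE]
  have h3 : Real.exp 1 * l * E ≤ Real.exp 1 * K * l * ε ^ (β - α) / n := by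
    have := mul_le_mul_of_nonneg_left hEf (by positivity : (0:ℝ) ≤ Real.exp 1 * l)
    calc Real.exp 1 * l * E ≤ Real.exp 1 * l * (K * ε ^ (β - α) / n) := this
      _ = Real.exp 1 * K * l * ε ^ (β - α) / n := by ring
  calc ∫ ω, Real.exp (l * f ω) ∂P ≤ 1 + Real.exp 1 * l * E := by rw [← h2]; exact h1
    _ ≤ Real.exp (Real.exp 1 * l * E) := by linarith [Real.add_one_le_exp (Real.exp 1 * l * E)]
    _ ≤ Real.exp (Real.exp 1 * K * l * ε ^ (β - α) / n) := Real.exp_le_exp.mpr h3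
end

section
/- Let A and B be n×n complex Hermitian matrices and let f : ℝ → ℝ have finite total variation ‖f‖_TV. Then |L_A(f) − L_B(f)| ≤ ‖f‖_TV · rank(A − B) / n. -/
open Finset Matrix in
lemma quad_formula (n : ℕ) (b : OrthonormalBasis (Fin n) ℂ (EuclideanSpace ℂ (Fin n)))
    (ev : Fin n → ℝ) (M : Matrix (Fin n) (Fin n) ℂ)
    (hM : ∀ j, M *ᵥ (WithLp.equiv 2 _) (b j) = ev j • (WithLp.equiv 2 _) (b j))
    (c : Fin n → ℂ) :
    (inner ℂ (∑ i, c i • b i)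
      ((WithLp.equiv 2 ((i : Fin n) → ℂ)).symm (M *ᵥ (WithLp.equiv 2 _) (∑ i, c i • b i))) : ℂ)
      = ∑ i, (ev i : ℂ) * (starRingEnd ℂ (c i) * c i) := by
  have hL : (WithLp.equiv 2 ((i : Fin n) → ℂ)) (∑ i, c i • b i)
      = ∑ i, c i • (WithLp.equiv 2 ((i : Fin n) → ℂ)) (b i) := by
    simp
  have h2 : M *ᵥ (WithLp.equiv 2 ((i : Fin n) → ℂ)) (∑ i, c i • b i)
      = ∑ i, ((ev i : ℂ) * c i) • (WithLp.equiv 2 ((i : Fin n) → ℂ)) (b i) := by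
    rw [hL, ← Matrix.mulVecLin_apply, map_sum]
    refine Finset.sum_congr rfl fun i _ => ?_
    rw [_root_.map_smul, Matrix.mulVecLin_apply, hM i]
    ext k
    simp
    ring
  have h3 : (WithLp.equiv 2 ((i : Fin n) → ℂ)).symm (M *ᵥ (WithLp.equiv 2 _) (∑ i, c i • b i))
      = ∑ i, ((ev i : ℂ) * c i) • b i := by
    rw [h2]
    rw [show (∑ i, ((ev i : ℂ) * c i) • (WithLp.equiv 2 ((i : Fin n) → ℂ)) (b i))
        = (WithLp.equiv 2 ((i : Fin n) → ℂ)) (∑ i, ((ev i : ℂ) * c i) • b i) from ?_]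
    · simp
    · simp
  rw [h3]
  rw [show (∑ i, c i • b i) = ∑ i ∈ univ, c i • b i from rfl]
  rw [b.orthonormal.inner_sum c (fun i => (ev i : ℂ) * c i) univ]
  refine Finset.sum_congr rfl fun i _ => by ring

open Finset Matrix in
lemma quad_re (n : ℕ) (b : OrthonormalBasis (Fin n) ℂ (EuclideanSpace ℂ (Fin n)))
    (ev : Fin n → ℝ) (M : Matrix (Fin n) (Fin n) ℂ)
    (hM : ∀ j, M *ᵥ (WithLp.equiv 2 _) (b j) = ev j • (WithLp.equiv 2 _) (b j))
    (c : Fin n → ℂ) :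
    (inner ℂ (∑ i, c i • b i)
      ((WithLp.equiv 2 ((i : Fin n) → ℂ)).symm (M *ᵥ (WithLp.equiv 2 _) (∑ i, c i • b i))) : ℂ).re
      = ∑ i, ev i * Complex.normSq (c i) := by
  rw [quad_formula n b ev M hM c, Complex.re_sum]
  refine Finset.sum_congr rfl fun i _ => ?_
  have : (starRingEnd ℂ) (c i) * c i = (Complex.normSq (c i) : ℂ) := by
    rw [mul_comm, Complex.mul_conj]
  rw [this]
  simp

open Finset Matrix in
lemma inner_self_re (n : ℕ) (b : OrthonormalBasis (Fin n) ℂ (EuclideanSpace ℂ (Fin n)))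
    (c : Fin n → ℂ) :
    (inner ℂ (∑ i, c i • b i) (∑ i, c i • b i) : ℂ).re = ∑ i, Complex.normSq (c i) := by
  rw [show (∑ i, c i • b i) = ∑ i ∈ univ, c i • b i from rfl,
    b.orthonormal.inner_sum c c univ, Complex.re_sum]
  refine Finset.sum_congr rfl fun i _ => ?_
  have : (starRingEnd ℂ) (c i) * c i = (Complex.normSq (c i) : ℂ) := by
    rw [mul_comm, Complex.mul_conj]
  rw [this]; simp
open Finset Matrix

example (n : ℕ) (A : Matrix (Fin n) (Fin n) ℂ) :
    Module.finrank ℂ (LinearMap.ker A.mulVecLin) = n - A.rank := by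
  have h := LinearMap.finrank_range_add_finrank_ker A.mulVecLin
  rw [Module.finrank_pi] at h
  simp only [Fintype.card_fin] at h
  unfold Matrix.rank
  omega

noncomputable example (n : ℕ) (A : Matrix (Fin n) (Fin n) ℂ) :
    Submodule ℂ (EuclideanSpace ℂ (Fin n)) :=
  (LinearMap.ker A.mulVecLin).comap (WithLp.linearEquiv 2 ℂ (Fin n → ℂ)).toLinearMap

example (n : ℕ) (A : Matrix (Fin n) (Fin n) ℂ) :
    Module.finrank ℂ ((LinearMap.ker A.mulVecLin).comap
      (WithLp.linearEquiv 2 ℂ (Fin n → ℂ)).toLinearMap : Submodule ℂ (EuclideanSpace ℂ (Fin n)))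
      = Module.finrank ℂ (LinearMap.ker A.mulVecLin) :=
  LinearEquiv.finrank_eq (LinearEquiv.ofSubmodule' _ _)

example (n : ℕ) (b : OrthonormalBasis (Fin n) ℂ (EuclideanSpace ℂ (Fin n))) (p : Fin n → Prop)
    [DecidablePred p] :
    Module.finrank ℂ (Submodule.span ℂ (Set.range fun i : {i : Fin n // p i} => b i.val))
      = (univ.filter p).card := by
  rw [finrank_span_eq_card ?_, Fintype.card_subtype]
  have h1 : LinearIndependent ℂ ⇑b := by
    have := b.toBasis.linearIndependent
    rwa [OrthonormalBasis.coe_toBasis] at this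
  exact h1.comp Subtype.val Subtype.val_injective

lemma span_mem_repr (n : ℕ) (b : OrthonormalBasis (Fin n) ℂ (EuclideanSpace ℂ (Fin n)))
    (p : Fin n → Prop) [DecidablePred p] (v : EuclideanSpace ℂ (Fin n))
    (hv : v ∈ Submodule.span ℂ (Set.range fun i : {i : Fin n // p i} => b i.val)) :
    ∃ c : Fin n → ℂ, (∀ i, c i ≠ 0 → p i) ∧ ∑ i, c i • b i = v := by
  rw [Submodule.mem_span_range_iff_exists_fun] at hv
  obtain ⟨cV, hcV⟩ := hv
  refine ⟨fun i => if h : p i then cV ⟨i, h⟩ else 0, fun i hi => by by_contra h; simp [h] at hi, ?_⟩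
  rw [← Finset.sum_filter_add_sum_filter_not univ p]
  have h2 : ∑ i ∈ filter (fun i => ¬ p i) univ, (fun i => if h : p i then cV ⟨i, h⟩ else 0) i • b i = 0 := by
    refine Finset.sum_eq_zero fun i hi => ?_
    simp only [mem_filter] at hi
    simp [hi.2]
  rw [h2, add_zero]
  rw [← hcV, Finset.sum_subtype (p := p) (univ.filter p) (by simp) (fun i => (if h : p i then cV ⟨i, h⟩ else 0) • b i)]
  exact Finset.sum_congr rfl fun i _ => by simp [i.prop]

lemma exists_ne_zero_of_finrank_pos (n : ℕ) {p : Submodule ℂ (EuclideanSpace ℂ (Fin n))}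
    (h : 0 < Module.finrank ℂ p) : ∃ v ∈ p, v ≠ 0 := by
  rw [Module.finrank_pos_iff] at h
  obtain ⟨⟨v, hv⟩, h0⟩ := exists_ne (0 : p)
  exact ⟨v, hv, by simpa [Submodule.mk_eq_zero] using h0⟩

open Finset Matrix in
lemma count_rank (n : ℕ) (A B : Matrix (Fin n) (Fin n) ℂ)
    (hA : A.IsHermitian) (hB : B.IsHermitian) (x : ℝ) :
    (univ.filter fun i => hA.eigenvalues i ≤ x).card
      ≤ (univ.filter fun i => hB.eigenvalues i ≤ x).card + (A - B).rank := by
  by_contra hcon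
  push_neg at hcon
  set evA := hA.eigenvalues
  set evB := hB.eigenvalues
  set bA := hA.eigenvectorBasis
  set bB := hB.eigenvectorBasis
  set k := (A - B).rank
  set sA := (univ.filter fun i => evA i ≤ x).card with hsA
  set tB := (univ.filter fun i => evB i ≤ x).card with htB
  set V : Submodule ℂ (EuclideanSpace ℂ (Fin n)) :=
    Submodule.span ℂ (Set.range fun i : {i : Fin n // evA i ≤ x} => bA i.val) with hV
  set W : Submodule ℂ (EuclideanSpace ℂ (Fin n)) :=
    Submodule.span ℂ (Set.range fun i : {i : Fin n // x < evB i} => bB i.val) with hW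
  set K : Submodule ℂ (EuclideanSpace ℂ (Fin n)) :=
    (LinearMap.ker (A - B).mulVecLin).comap (WithLp.linearEquiv 2 ℂ (Fin n → ℂ)).toLinearMap with hK
  have findim : ∀ b : OrthonormalBasis (Fin n) ℂ (EuclideanSpace ℂ (Fin n)),
      ∀ p : Fin n → Prop, ∀ _ : DecidablePred p,
      Module.finrank ℂ (Submodule.span ℂ (Set.range fun i : {i : Fin n // p i} => b i.val))
        = (univ.filter p).card := by
    intro b p hp
    rw [finrank_span_eq_card ?_, Fintype.card_subtype]
    have h1 : LinearIndependent ℂ ⇑b := by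
      have := b.toBasis.linearIndependent
      rwa [OrthonormalBasis.coe_toBasis] at this
    exact h1.comp Subtype.val Subtype.val_injective
  have hVrank : Module.finrank ℂ V = sA := findim bA (fun i => evA i ≤ x) (by infer_instance)
  have hWrank : Module.finrank ℂ W + tB = n := by
    rw [hW, findim bB (fun i => x < evB i) (by infer_instance), htB]
    have := Finset.card_filter_add_card_filter_not (s := univ)
      (p := fun i : Fin n => x < evB i)
    simp only [not_lt, Finset.card_univ, Fintype.card_fin] at this
    convert this using 3
  have hKrank : Module.finrank ℂ K + k = n := by
    have e1 : Module.finrank ℂ K = Module.finrank ℂ (LinearMap.ker (A - B).mulVecLin) :=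
      LinearEquiv.finrank_eq (LinearEquiv.ofSubmodule' _ _)
    have h := LinearMap.finrank_range_add_finrank_ker (A - B).mulVecLin
    rw [Module.finrank_pi] at h
    simp only [Fintype.card_fin] at h
    rw [e1]
    rw [show k = Module.finrank ℂ (LinearMap.range (A - B).mulVecLin) from rfl]
    omega
  have hsAle : sA ≤ n := le_trans (Finset.card_filter_le _ _) (by simp)
  have htBle : tB ≤ n := le_trans (Finset.card_filter_le _ _) (by simp)
  -- dimension count
  have dim1 : Module.finrank ℂ V + Module.finrank ℂ W
      ≤ n + Module.finrank ℂ (V ⊓ W : Submodule ℂ (EuclideanSpace ℂ (Fin n))) := by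
    rw [← Submodule.finrank_sup_add_finrank_inf_eq V W]
    have := Submodule.finrank_le (V ⊔ W)
    rw [finrank_euclideanSpace_fin] at this
    omega
  have dim2 : Module.finrank ℂ (V ⊓ W : Submodule ℂ (EuclideanSpace ℂ (Fin n))) + Module.finrank ℂ K
      ≤ n + Module.finrank ℂ (V ⊓ W ⊓ K : Submodule ℂ (EuclideanSpace ℂ (Fin n))) := by
    rw [← Submodule.finrank_sup_add_finrank_inf_eq (V ⊓ W) K]
    have := Submodule.finrank_le (V ⊓ W ⊔ K)
    rw [finrank_euclideanSpace_fin] at this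
    omega
  have hpos : 0 < Module.finrank ℂ (V ⊓ W ⊓ K : Submodule ℂ (EuclideanSpace ℂ (Fin n))) := by omega
  obtain ⟨v, hv, hv0⟩ := exists_ne_zero_of_finrank_pos n hpos
  obtain ⟨⟨hvV, hvW⟩, hvK⟩ := hv
  -- representations
  obtain ⟨c, hcsupp, hcrepr⟩ := span_mem_repr n bA _ v hvV
  obtain ⟨d, hdsupp, hdrepr⟩ := span_mem_repr n bB _ v hvW
  -- equal matrix actions
  have hAB : A *ᵥ (WithLp.equiv 2 (Fin n → ℂ)) v = B *ᵥ (WithLp.equiv 2 (Fin n → ℂ)) v := by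
    have : (A - B).mulVecLin ((WithLp.linearEquiv 2 ℂ (Fin n → ℂ)) v) = 0 := hvK
    rw [Matrix.mulVecLin_apply, Matrix.sub_mulVec, sub_eq_zero] at this
    exact this
  -- quadratic forms
  have hqA := quad_re n bA evA A hA.mulVec_eigenvectorBasis c
  have hqB := quad_re n bB evB B hB.mulVec_eigenvectorBasis d
  rw [hcrepr] at hqA
  rw [hdrepr] at hqB
  have hsc := inner_self_re n bA c
  have hsd := inner_self_re n bB d
  rw [hcrepr] at hsc
  rw [hdrepr] at hsd
  have hAle : (inner ℂ v ((WithLp.equiv 2 ((i : Fin n) → ℂ)).symm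
      (A *ᵥ (WithLp.equiv 2 _) v)) : ℂ).re ≤ x * (inner ℂ v v : ℂ).re := by
    rw [hqA, hsc, Finset.mul_sum]
    refine Finset.sum_le_sum fun i _ => ?_
    rcases eq_or_ne (c i) 0 with h | h
    · simp [h]
    · exact mul_le_mul_of_nonneg_right (hcsupp i h) (Complex.normSq_nonneg _)
  have hBgt : x * (inner ℂ v v : ℂ).re < (inner ℂ v ((WithLp.equiv 2 ((i : Fin n) → ℂ)).symm
      (B *ᵥ (WithLp.equiv 2 _) v)) : ℂ).re := by
    rw [hqB, hsd, Finset.mul_sum]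
    have hex : ∃ i, d i ≠ 0 := by
      by_contra hall
      push_neg at hall
      apply hv0
      rw [← hdrepr]
      exact Finset.sum_eq_zero fun i _ => by rw [hall i, zero_smul]
    obtain ⟨i0, hi0⟩ := hex
    refine Finset.sum_lt_sum (fun i _ => ?_) ⟨i0, Finset.mem_univ i0, ?_⟩
    · rcases eq_or_ne (d i) 0 with h | h
      · simp [h]
      · exact mul_le_mul_of_nonneg_right (le_of_lt (hdsupp i h)) (Complex.normSq_nonneg _)
    · exact mul_lt_mul_of_pos_right (hdsupp i0 hi0) (Complex.normSq_pos.mpr hi0)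
  rw [hAB] at hAle
  exact absurd (lt_of_lt_of_le hBgt hAle) (lt_irrefl _)


lemma abel_tv (n : ℕ) (hn : 1 ≤ n) (k : ℕ) (α β : Fin n → ℝ)
    (hcount : ∀ x : ℝ,
      |((univ.filter fun i => α i ≤ x).card : ℤ) - ((univ.filter fun i => β i ≤ x).card : ℤ)| ≤ k)
    (f : ℝ → ℝ) (hf : eVariationOn f Set.univ ≠ ⊤) :
    |∑ i, f (α i) - ∑ i, f (β i)| ≤ (eVariationOn f Set.univ).toReal * k := by
  classical
  set X : Finset ℝ := (univ.image α) ∪ (univ.image β) with hX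
  have hαX : ∀ i, α i ∈ X := fun i => Finset.mem_union_left _ (Finset.mem_image_of_mem α (mem_univ i))
  have hβX : ∀ i, β i ∈ X := fun i => Finset.mem_union_right _ (Finset.mem_image_of_mem β (mem_univ i))
  set m := X.card with hm
  have hm1 : 1 ≤ m := Finset.card_pos.mpr ⟨α ⟨0, hn⟩, hαX _⟩
  set e := X.orderIsoOfFin rfl with he
  set u : ℕ → ℝ := fun j => (e ⟨min j (m-1), lt_of_le_of_lt (min_le_right _ _) (by omega)⟩ : ℝ) with hu
  -- u is monotone
  have humono : Monotone u := by
    intro a b hab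
    exact Subtype.coe_le_coe.mpr (e.monotone (by simp only [Fin.mk_le_mk]; omega))
  -- u agrees with e below m
  have hue : ∀ j (hj : j < m), u j = (e ⟨j, hj⟩ : ℝ) := by
    intro j hj
    have hidx2 : (⟨min j (m-1), lt_of_le_of_lt (min_le_right _ _) (by omega)⟩ : Fin m) = ⟨j, hj⟩ := by
      ext; simp; omega
    simp only [hu, hidx2]
  -- for values in X, the index
  have hidx : ∀ y ∈ X, ∃ l : Fin m, y = u l := by
    intro y hy
    refine ⟨e.symm ⟨y, hy⟩, ?_⟩
    rw [hue _ (e.symm ⟨y, hy⟩).isLt]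
    simp
  -- comparisons transfer
  have hle_iff : ∀ (l j : ℕ) (hl : l < m) (hj : j < m), (u l ≤ u j ↔ l ≤ j) := by
    intro l j hl hj
    rw [hue l hl, hue j hj, Subtype.coe_le_coe, e.le_iff_le]
    exact Iff.rfl
  have huinj : ∀ (l j : ℕ) (hl : l < m) (hj : j < m), u l = u j → l = j := by
    intro l j hl hj h
    have := (hle_iff l j hl hj).mp (le_of_eq h)
    have := (hle_iff j l hj hl).mp (le_of_eq h.symm)
    omega
  -- partition lemma
  have hpart : ∀ (γ : Fin n → ℝ), (∀ i, γ i ∈ X) → ∀ j < m,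
      (univ.filter fun i => γ i ≤ u j) =
        (Finset.range (j+1)).biUnion (fun l => univ.filter fun i => γ i = u l) := by
    intro γ hγ j hj
    ext i
    simp only [mem_filter, mem_univ, true_and, Finset.mem_biUnion, Finset.mem_range]
    constructor
    · intro hle
      obtain ⟨l, hl⟩ := hidx (γ i) (hγ i)
      refine ⟨l, ?_, hl⟩
      have : u (l : ℕ) ≤ u j := by rw [← hl]; exact hle
      have := (hle_iff l j l.isLt hj).mp this
      omega
    · rintro ⟨l, hl, heq⟩
      rw [heq]
      exact humono (by omega)
  -- disjointness of fibers
  have hdisj : ∀ (γ : Fin n → ℝ), ∀ j ≤ m, (Finset.range j : Set ℕ).Pairwise fun l l' =>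
      Disjoint (univ.filter fun i => γ i = u l) (univ.filter fun i => γ i = u l') := by
    intro γ j hj l hl l' hl' hne
    simp only [Finset.coe_range, Set.mem_Iio] at hl hl'
    rw [Finset.disjoint_filter]
    intro i _ h1 h2
    exact hne (huinj _ _ (by omega) (by omega) (by rw [← h1, h2]))
  -- card identity
  have hcard : ∀ (γ : Fin n → ℝ), (∀ i, γ i ∈ X) → ∀ j < m,
      (univ.filter fun i => γ i ≤ u j).card
        = ∑ l ∈ Finset.range (j+1), (univ.filter fun i => γ i = u l).card := by
    intro γ hγ j hj
    rw [hpart γ hγ j hj, Finset.card_biUnion]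
    intro l hl l' hl' hne
    exact hdisj γ (j+1) (by omega) (by simpa using hl) (by simpa using hl') hne
  -- everything is ≤ u (m-1)
  have htop : ∀ (γ : Fin n → ℝ), (∀ i, γ i ∈ X) → (univ.filter fun i => γ i ≤ u (m-1)) = univ := by
    intro γ hγ
    refine Finset.filter_true_of_mem fun i _ => ?_
    obtain ⟨l, hl⟩ := hidx (γ i) (hγ i)
    rw [hl]
    exact humono (by omega)
  -- sum identity
  have hsum : ∀ (γ : Fin n → ℝ), (∀ i, γ i ∈ X) →
      ∑ i, f (γ i) = ∑ l ∈ Finset.range m, ((univ.filter fun i => γ i = u l).card : ℝ) * f (u l) := by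
    intro γ hγ
    have h0 : (univ : Finset (Fin n)) = (Finset.range m).biUnion (fun l => univ.filter fun i => γ i = u l) := by
      have h1 := hpart γ hγ (m-1) (by omega)
      rw [htop γ hγ, show m - 1 + 1 = m by omega] at h1
      exact h1
    calc ∑ i, f (γ i) = ∑ i ∈ (Finset.range m).biUnion (fun l => univ.filter fun i => γ i = u l), f (γ i) := by rw [← h0]
      _ = ∑ l ∈ Finset.range m, ∑ i ∈ univ.filter fun i => γ i = u l, f (γ i) := by
          exact Finset.sum_biUnion (hdisj γ m le_rfl)
      _ = ∑ l ∈ Finset.range m, ((univ.filter fun i => γ i = u l).card : ℝ) * f (u l) := by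
          refine Finset.sum_congr rfl fun l _ => ?_
          rw [Finset.sum_congr rfl (fun i hi => by rw [(Finset.mem_filter.mp hi).2]),
            Finset.sum_const, nsmul_eq_mul]
  -- notation
  set F : ℕ → ℝ := fun j => f (u j) with hF
  set c : ℕ → ℝ := fun l => ((univ.filter fun i => α i = u l).card : ℝ)
    - ((univ.filter fun i => β i = u l).card : ℝ) with hc
  -- step A
  have hstepA : ∑ i, f (α i) - ∑ i, f (β i) = ∑ j ∈ Finset.range m, F j • c j := by
    rw [hsum α hαX, hsum β hβX, ← Finset.sum_sub_distrib]
    refine Finset.sum_congr rfl fun j _ => ?_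
    simp only [hc, hF, smul_eq_mul]
    ring
  -- step B
  have hstepB : ∀ j < m, ∑ l ∈ Finset.range (j+1), c l
      = ((univ.filter fun i => α i ≤ u j).card : ℝ) - ((univ.filter fun i => β i ≤ u j).card : ℝ) := by
    intro j hj
    rw [hcard α hαX j hj, hcard β hβX j hj]
    push_cast
    rw [Finset.sum_sub_distrib]
  -- step C
  have hstepC : ∑ l ∈ Finset.range m, c l = 0 := by
    have h1 := hstepB (m-1) (by omega)
    rw [show m - 1 + 1 = m by omega] at h1
    rw [h1, htop α hαX, htop β hβX, sub_self]
  -- step D : Abel summation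
  have hstepD := Finset.sum_range_by_parts F c m
  rw [hstepC, smul_zero, zero_sub] at hstepD
  -- step F : TV bound
  have hstepF : ∑ j ∈ Finset.range (m-1), |f (u (j+1)) - f (u j)| ≤ (eVariationOn f Set.univ).toReal := by
    have h1 : ENNReal.ofReal (∑ j ∈ Finset.range (m-1), |f (u (j+1)) - f (u j)|)
        ≤ eVariationOn f Set.univ := by
      rw [ENNReal.ofReal_sum_of_nonneg (fun j _ => abs_nonneg _)]
      have h2 := eVariationOn.sum_le (f := f) (n := m-1) humono (fun i => Set.mem_univ (u i))
      refine le_trans (le_of_eq ?_) h2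
      refine Finset.sum_congr rfl fun j _ => ?_
      rw [edist_dist, Real.dist_eq]
    calc ∑ j ∈ Finset.range (m-1), |f (u (j+1)) - f (u j)|
        = (ENNReal.ofReal (∑ j ∈ Finset.range (m-1), |f (u (j+1)) - f (u j)|)).toReal := by
          rw [ENNReal.toReal_ofReal (Finset.sum_nonneg fun j _ => abs_nonneg _)]
      _ ≤ (eVariationOn f Set.univ).toReal := ENNReal.toReal_mono hf h1
  -- step E : final bound
  rw [hstepA, hstepD]
  rw [abs_neg]
  calc |∑ j ∈ Finset.range (m-1), (F (j+1) - F j) • (∑ l ∈ Finset.range (j+1), c l)|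
      ≤ ∑ j ∈ Finset.range (m-1), |(F (j+1) - F j) • (∑ l ∈ Finset.range (j+1), c l)| :=
        Finset.abs_sum_le_sum_abs _ _
    _ ≤ ∑ j ∈ Finset.range (m-1), |F (j+1) - F j| * k := by
        refine Finset.sum_le_sum fun j hj => ?_
        rw [smul_eq_mul, abs_mul]
        refine mul_le_mul_of_nonneg_left ?_ (abs_nonneg _)
        rw [hstepB j (by simp at hj; omega)]
        exact_mod_cast hcount (u j)
    _ = (∑ j ∈ Finset.range (m-1), |F (j+1) - F j|) * k := by rw [Finset.sum_mul]
    _ ≤ (eVariationOn f Set.univ).toReal * k := by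
        refine mul_le_mul_of_nonneg_right ?_ (Nat.cast_nonneg k)
        exact hstepF

lemma rank_neg' {n : ℕ} (M : Matrix (Fin n) (Fin n) ℂ) : (-M).rank = M.rank := by
  unfold Matrix.rank
  have h : (-M).mulVecLin = -(M.mulVecLin) := by
    ext v i
    simp [Matrix.mulVecLin_apply, Matrix.neg_mulVec]
  rw [h, LinearMap.range_neg]

open MeasureTheory

/-- Rank inequality for empirical spectral distributions: for Hermitian matrices `A, B` and a
function `f` of finite total variation,
`|L_A(f) − L_B(f)| ≤ ‖f‖_TV · rank(A − B) / n`. -/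
theorem esd_diff_le_tv_mul_rank
    (n : ℕ) (hn : 1 ≤ n) (A B : Matrix (Fin n) (Fin n) ℂ)
    (hA : A.IsHermitian) (hB : B.IsHermitian)
    (f : ℝ → ℝ) (hf : eVariationOn f Set.univ ≠ ⊤) :
    |(1 / n : ℝ) * ∑ i, f (hA.eigenvalues i) - (1 / n : ℝ) * ∑ i, f (hB.eigenvalues i)|
      ≤ (eVariationOn f Set.univ).toReal * ((A - B).rank : ℝ) / n := by
  classical
  have hr : (B - A).rank = (A - B).rank := by
    rw [show B - A = -(A - B) by abel, rank_neg']
  have hcount : ∀ x : ℝ,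
      |((Finset.univ.filter fun i => hA.eigenvalues i ≤ x).card : ℤ)
        - ((Finset.univ.filter fun i => hB.eigenvalues i ≤ x).card : ℤ)| ≤ ((A - B).rank : ℤ) := by
    intro x
    have h1 := count_rank n A B hA hB x
    have h2 := count_rank n B A hB hA x
    rw [hr] at h2
    rw [abs_le]
    omega
  have key := abel_tv n hn (A - B).rank hA.eigenvalues hB.eigenvalues hcount f hf
  rw [← mul_sub, abs_mul]
  have h0 : |(1 / n : ℝ)| = 1 / n := abs_of_nonneg (by positivity)
  rw [h0]
  have hnpos : (0:ℝ) < n := by exact_mod_cast hn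
  calc (1 / n : ℝ) * |∑ i, f (hA.eigenvalues i) - ∑ i, f (hB.eigenvalues i)|
      ≤ (1 / n : ℝ) * ((eVariationOn f Set.univ).toReal * ((A - B).rank : ℝ)) :=
        mul_le_mul_of_nonneg_left key (by positivity)
    _ = (eVariationOn f Set.univ).toReal * ((A - B).rank : ℝ) / n := by
        field_simp
end

section
/- Let A and B be n×n complex Hermitian matrices and let f : ℝ → ℝ be Lipschitz with constant K ≥ 0. Then |L_A(f) − L_B(f)| ≤ K · sqrt( (1/n) ∑_{i,j=1}^n |A_{ij} − B_{ij}|^2 ). -/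
open Matrix Finset

private lemma hw_trace_eq (n : ℕ) (M : Matrix (Fin n) (Fin n) ℂ) :
    Matrix.trace (star M * M) = ((∑ i, ∑ j, ‖M i j‖ ^ 2 : ℝ) : ℂ) := by
  push_cast
  rw [Finset.sum_comm]
  simp [Matrix.trace, Matrix.diag, Matrix.mul_apply, Matrix.star_eq_conjTranspose,
    Matrix.conjTranspose_apply, ← Complex.normSq_eq_conj_mul_self,
    ← Complex.ofReal_pow, Complex.sq_norm]

private lemma hw_trace_conj (n : ℕ) (C U V : Matrix (Fin n) (Fin n) ℂ)
    (hU : U * star U = 1) (hV : V * star V = 1) :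
    Matrix.trace (star (star U * C * V) * (star U * C * V)) = Matrix.trace (star C * C) := by
  have h : star (star U * C * V) = star V * star C * U := by
    simp [StarMul.star_mul, mul_assoc]
  rw [h, Matrix.trace_mul_comm]
  simp only [mul_assoc]
  rw [show V * (star V * (star C * U)) = (V * star V) * (star C * U) by simp only [mul_assoc],
    hV, one_mul, Matrix.trace_mul_comm]
  simp only [mul_assoc, hU, mul_one]
  exact Matrix.trace_mul_comm C (star C)

private lemma hw_main (n : ℕ) (hn : 1 ≤ n) (A B U V : Matrix (Fin n) (Fin n) ℂ)
    (lam mu : Fin n → ℝ)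
    (hUU : star U * U = 1) (hUU' : U * star U = 1)
    (hVV : star V * V = 1) (hVV' : V * star V = 1)
    (hAspec : A = U * Matrix.diagonal (fun i => (lam i : ℂ)) * star U)
    (hBspec : B = V * Matrix.diagonal (fun i => (mu i : ℂ)) * star V)
    (f : ℝ → ℝ) (K : ℝ) (hK : 0 ≤ K) (hf : ∀ x y : ℝ, |f x - f y| ≤ K * |x - y|) :
    |(1 / n : ℝ) * ∑ i, f (lam i) - (1 / n : ℝ) * ∑ i, f (mu i)|
      ≤ K * Real.sqrt ((1 / n : ℝ) * ∑ i, ∑ j, ‖A i j - B i j‖ ^ 2) := by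
  have hn0 : (0 : ℝ) < n := by exact_mod_cast Nat.lt_of_lt_of_le Nat.zero_lt_one hn
  set W : Matrix (Fin n) (Fin n) ℂ := star U * V with hWdef
  have hWW' : W * star W = 1 := by
    rw [hWdef, StarMul.star_mul, star_star]
    calc star U * V * (star V * U) = star U * (V * star V) * U := by simp only [mul_assoc]
    _ = 1 := by rw [hVV', mul_one, hUU]
  have hWW : star W * W = 1 := by
    rw [hWdef, StarMul.star_mul, star_star]
    calc star V * U * (star U * V) = star V * (U * star U) * V := by simp only [mul_assoc]
    _ = 1 := by rw [hUU', mul_one, hVV]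
  set d : Fin n → Fin n → ℝ := fun i j => Complex.normSq (W i j) with hddef
  have hd0 : ∀ i j, 0 ≤ d i j := fun i j => Complex.normSq_nonneg _
  have hrow : ∀ i, ∑ j, d i j = 1 := by
    intro i
    have h1 := congrFun (congrFun hWW' i) i
    simp only [Matrix.mul_apply, Matrix.star_eq_conjTranspose, Matrix.conjTranspose_apply,
      Complex.star_def, Complex.mul_conj, Matrix.one_apply_eq] at h1
    exact_mod_cast h1
  have hcol : ∀ j, ∑ i, d i j = 1 := by
    intro j
    have h1 := congrFun (congrFun hWW j) j
    simp only [Matrix.mul_apply, Matrix.star_eq_conjTranspose, Matrix.conjTranspose_apply,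
      Complex.star_def, ← Complex.normSq_eq_conj_mul_self, Matrix.one_apply_eq] at h1
    exact_mod_cast h1
  set D : Matrix (Fin n) (Fin n) ℂ := star U * (A - B) * V with hDdef
  have hDA : star U * A * V = Matrix.diagonal (fun i => (lam i : ℂ)) * W := by
    rw [hAspec]
    simp only [← Matrix.mul_assoc]
    rw [hUU, Matrix.one_mul]
    simp only [Matrix.mul_assoc]
    rfl
  have hDB : star U * B * V = W * Matrix.diagonal (fun j => (mu j : ℂ)) := by
    rw [hBspec]
    simp only [← Matrix.mul_assoc]
    rw [Matrix.mul_assoc ((star U * V) * Matrix.diagonal fun i => (mu i : ℂ)) (star V) V,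
      hVV, Matrix.mul_one]
  have hD : ∀ i j, D i j = (((lam i - mu j : ℝ)) : ℂ) * W i j := by
    intro i j
    have hsplit : D = Matrix.diagonal (fun i => (lam i : ℂ)) * W
        - W * Matrix.diagonal (fun j => (mu j : ℂ)) := by
      rw [hDdef, Matrix.mul_sub, Matrix.sub_mul, hDA, hDB]
    rw [hsplit]
    simp only [Matrix.sub_apply, Matrix.diagonal_mul, Matrix.mul_diagonal]
    push_cast
    ring
  set S : ℝ := ∑ i, ∑ j, ‖(A - B) i j‖ ^ 2 with hSdef
  have hS0 : 0 ≤ S := by positivity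
  have hS : S = ∑ i, ∑ j, d i j * (lam i - mu j) ^ 2 := by
    have h1 := hw_trace_eq n (A - B)
    have h2 := hw_trace_eq n D
    have h3 := hw_trace_conj n (A - B) U V hUU' hVV'
    rw [← hDdef] at h3
    have h4 : ((S : ℝ) : ℂ) = ((∑ i, ∑ j, ‖D i j‖ ^ 2 : ℝ) : ℂ) := by
      rw [← h1, ← h2, h3]
    have h5 : S = ∑ i, ∑ j, ‖D i j‖ ^ 2 := by exact_mod_cast h4
    rw [h5]
    refine Finset.sum_congr rfl fun i _ => Finset.sum_congr rfl fun j _ => ?_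
    rw [hD i j, norm_mul, mul_pow, Complex.norm_real, Real.norm_eq_abs, sq_abs, Complex.sq_norm, mul_comm]
  -- the weighted sum identity
  have e1 : ∑ i, f (lam i) - ∑ j, f (mu j) = ∑ i, ∑ j, d i j * (f (lam i) - f (mu j)) := by
    have a1 : ∑ i, f (lam i) = ∑ i, ∑ j, d i j * f (lam i) := by
      refine Finset.sum_congr rfl fun i _ => ?_
      rw [← Finset.sum_mul, hrow i, one_mul]
    have a2 : ∑ j, f (mu j) = ∑ i, ∑ j, d i j * f (mu j) := by
      rw [Finset.sum_comm]
      refine Finset.sum_congr rfl fun j _ => ?_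
      rw [← Finset.sum_mul, hcol j, one_mul]
    rw [a1, a2]
    simp [mul_sub, Finset.sum_sub_distrib]
  set T : ℝ := ∑ i, ∑ j, d i j * |lam i - mu j| with hTdef
  have hT0 : 0 ≤ T :=
    Finset.sum_nonneg fun i _ => Finset.sum_nonneg fun j _ =>
      mul_nonneg (hd0 i j) (abs_nonneg _)
  have e2 : |∑ i, f (lam i) - ∑ j, f (mu j)| ≤ K * T := by
    rw [e1]
    calc |∑ i, ∑ j, d i j * (f (lam i) - f (mu j))|
        ≤ ∑ i, |∑ j, d i j * (f (lam i) - f (mu j))| := Finset.abs_sum_le_sum_abs _ _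
      _ ≤ ∑ i, ∑ j, |d i j * (f (lam i) - f (mu j))| := by
          gcongr with i _
          exact Finset.abs_sum_le_sum_abs _ _
      _ = ∑ i, ∑ j, d i j * |f (lam i) - f (mu j)| := by
          refine Finset.sum_congr rfl fun i _ => Finset.sum_congr rfl fun j _ => ?_
          rw [abs_mul, abs_of_nonneg (hd0 i j)]
      _ ≤ ∑ i, ∑ j, d i j * (K * |lam i - mu j|) := by
          gcongr ∑ i, ∑ j, d i j * ?_ with i _ j _
          · exact hd0 _ _
          · exact hf _ _
      _ = K * T := by
          rw [hTdef, Finset.mul_sum]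
          refine Finset.sum_congr rfl fun i _ => ?_
          rw [Finset.mul_sum]
          refine Finset.sum_congr rfl fun j _ => ?_
          ring
  have e3 : T ^ 2 ≤ n * S := by
    have hcs := Finset.sum_sq_le_sum_mul_sum_of_sq_eq_mul
      (Finset.univ : Finset (Fin n × Fin n))
      (r := fun p => d p.1 p.2 * |lam p.1 - mu p.2|)
      (f := fun p => d p.1 p.2)
      (g := fun p => d p.1 p.2 * (lam p.1 - mu p.2) ^ 2)
      (fun p _ => hd0 p.1 p.2)
      (fun p _ => mul_nonneg (hd0 p.1 p.2) (sq_nonneg _))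
      (fun p _ => by rw [mul_pow, sq_abs]; ring)
    rw [Fintype.sum_prod_type, Fintype.sum_prod_type, Fintype.sum_prod_type] at hcs
    have hsum1 : ∑ i : Fin n, ∑ j : Fin n, d i j = (n : ℝ) := by
      simp [hrow]
    rw [hsum1, ← hS, ← hTdef] at hcs
    exact hcs
  have e4 : T ≤ Real.sqrt ((n : ℝ) * S) := by
    calc T = Real.sqrt (T ^ 2) := (Real.sqrt_sq hT0).symm
      _ ≤ Real.sqrt ((n : ℝ) * S) := Real.sqrt_le_sqrt e3
  have hgoalS : ∑ i, ∑ j, ‖A i j - B i j‖ ^ 2 = S := by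
    rw [hSdef]; simp [Matrix.sub_apply]
  rw [hgoalS, ← mul_sub, abs_mul, abs_of_nonneg (by positivity : (0:ℝ) ≤ 1 / n)]
  have hfinal : (1 / n : ℝ) * Real.sqrt ((n : ℝ) * S) = Real.sqrt ((1 / n : ℝ) * S) := by
    rw [show (1 / n : ℝ) * S = (1 / n : ℝ) ^ 2 * ((n : ℝ) * S) by field_simp,
      Real.sqrt_mul (sq_nonneg _), Real.sqrt_sq (by positivity : (0:ℝ) ≤ 1 / n)]
  calc (1 / n : ℝ) * |∑ i, f (lam i) - ∑ i, f (mu i)|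
      ≤ (1 / n : ℝ) * (K * Real.sqrt ((n : ℝ) * S)) := by
        have := e2.trans (mul_le_mul_of_nonneg_left e4 hK)
        exact mul_le_mul_of_nonneg_left this (by positivity)
    _ = K * ((1 / n : ℝ) * Real.sqrt ((n : ℝ) * S)) := by ring
    _ = K * Real.sqrt ((1 / n : ℝ) * S) := by rw [hfinal]


/-- Hoffman–Wielandt type inequality for empirical spectral distributions: for Hermitian
matrices `A, B` and an `K`-Lipschitz function `f`,
`|L_A(f) − L_B(f)| ≤ K · sqrt((1/n) ∑_{i,j} |A_{ij} − B_{ij}|²)`. -/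
theorem esd_diff_le_lipschitz_hilbert_schmidt
    (n : ℕ) (hn : 1 ≤ n) (A B : Matrix (Fin n) (Fin n) ℂ)
    (hA : A.IsHermitian) (hB : B.IsHermitian)
    (f : ℝ → ℝ) (K : ℝ) (hK : 0 ≤ K) (hf : ∀ x y : ℝ, |f x - f y| ≤ K * |x - y|) :
    |(1 / n : ℝ) * ∑ i, f (hA.eigenvalues i) - (1 / n : ℝ) * ∑ i, f (hB.eigenvalues i)|
      ≤ K * Real.sqrt ((1 / n : ℝ) * ∑ i, ∑ j, ‖A i j - B i j‖ ^ 2) := by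
  refine hw_main n hn A B hA.eigenvectorUnitary hB.eigenvectorUnitary
    hA.eigenvalues hB.eigenvalues ?_ ?_ ?_ ?_ ?_ ?_ f K hK hf
  · exact hA.eigenvectorUnitary.2.1
  · exact hA.eigenvectorUnitary.2.2
  · exact hB.eigenvectorUnitary.2.1
  · exact hB.eigenvectorUnitary.2.2
  · exact hA.spectral_theorem
  · exact hB.spectral_theorem
end

section
/- Let Y be an n×n complex Hermitian matrix and let Ỹ be obtained from Y by setting all diagonal entries to 0. Then for every ε > 0 and every f : ℝ → ℝ that is Lipschitz with constant at most 1 and has total variation ‖f‖_TV ≤ 1, one has |L_Y(f) − L_{Ỹ}(f)| ≤ ε + (1/n) · #{ i : |Y_{ii}| ≥ ε }. -/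
open Finset Matrix

lemma abel_tv_s10 {n : ℕ} (a c : Fin n → ℝ) (r : ℝ) (f : ℝ → ℝ)
    (hf : ∀ u : ℕ → ℝ, Monotone u → ∀ m : ℕ,
      ∑ k ∈ Finset.range m, |f (u (k + 1)) - f (u k)| ≤ 1)
    (hcount : ∀ t : ℝ,
      |((univ.filter fun i => a i ≤ t).card : ℝ) - ((univ.filter fun i => c i ≤ t).card : ℝ)| ≤ r) :
    |∑ i, f (a i) - ∑ i, f (c i)| ≤ r := by
  classical
  have hr : 0 ≤ r := le_trans (abs_nonneg _) (hcount 0)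
  rcases Nat.eq_zero_or_pos n with hn | hn
  · subst hn; simp [hr]
  set P : Finset ℝ := (univ.image a) ∪ (univ.image c) with hP
  have ha : ∀ i, a i ∈ P := fun i => mem_union_left _ (mem_image_of_mem a (mem_univ i))
  have hc : ∀ i, c i ∈ P := fun i => mem_union_right _ (mem_image_of_mem c (mem_univ i))
  have hPne : P.Nonempty := ⟨a ⟨0, hn⟩, ha _⟩
  set m := P.card with hm
  have hm1 : 1 ≤ m := Finset.card_pos.2 hPne
  set e := P.orderIsoOfFin rfl with he
  have hmlt : m - 1 < m := Nat.sub_lt hm1 one_pos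
  set X : ℕ → ℝ := fun k => (e ⟨min k (m-1), lt_of_le_of_lt (min_le_right _ _) hmlt⟩ : ℝ) with hX
  have hXmono : Monotone X := by
    intro k l hkl
    exact Subtype.coe_le_coe.2 (e.monotone (by simp only [Fin.mk_le_mk]; omega))
  have hXval : ∀ k (hk : k < m), X k = (e ⟨k, hk⟩ : ℝ) := by
    intro k hk
    have h2 : (⟨min k (m-1), lt_of_le_of_lt (min_le_right _ _) hmlt⟩ : Fin m) = ⟨k, hk⟩ :=
      Fin.ext (Nat.min_eq_left (Nat.le_sub_one_of_lt hk))
    simp only [hX, h2]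
  have hXsm : ∀ k l, k < l → (hl : l < m) → X k < X l := by
    intro k l hkl hl
    rw [hXval k (hkl.trans hl), hXval l hl]
    exact Subtype.coe_lt_coe.2 (e.strictMono (by simp [Fin.mk_lt_mk, hkl]))
  set inda : Fin n → ℕ := fun i => ((e.symm ⟨a i, ha i⟩) : Fin m).val with hinda
  set indc : Fin n → ℕ := fun i => ((e.symm ⟨c i, hc i⟩) : Fin m).val with hindc
  have hinda_lt : ∀ i, inda i < m := fun i => ((e.symm ⟨a i, ha i⟩)).2
  have hindc_lt : ∀ i, indc i < m := fun i => ((e.symm ⟨c i, hc i⟩)).2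
  have hXa : ∀ i, X (inda i) = a i := by
    intro i
    rw [hXval _ (hinda_lt i)]
    have : (⟨inda i, hinda_lt i⟩ : Fin m) = e.symm ⟨a i, ha i⟩ := rfl
    rw [this, e.apply_symm_apply]
  have hXc : ∀ i, X (indc i) = c i := by
    intro i
    rw [hXval _ (hindc_lt i)]
    have : (⟨indc i, hindc_lt i⟩ : Fin m) = e.symm ⟨c i, hc i⟩ := rfl
    rw [this, e.apply_symm_apply]
  set Da : ℕ → ℕ := fun k => (univ.filter fun i => inda i = k).card with hDa
  set Dc : ℕ → ℕ := fun k => (univ.filter fun i => indc i = k).card with hDc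
  -- partial sums equal counting functions
  have key : ∀ (d : Fin n → ℝ) (ind : Fin n → ℕ), (∀ i, ind i < m) → (∀ i, X (ind i) = d i) →
      ∀ K, 1 ≤ K → K ≤ m →
      (∑ k ∈ range K, ((univ.filter fun i => ind i = k).card : ℕ))
        = (univ.filter fun i => d i ≤ X (K-1)).card := by
    intro d ind hlt hXd K hK1 hKm
    rw [Finset.card_eq_sum_card_fiberwise (f := ind) (t := range K) ?_]
    · apply Finset.sum_congr rfl
      intro k hk
      rw [mem_range] at hk
      congr 1
      apply Finset.ext
      intro i
      simp only [mem_filter, mem_univ, true_and]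
      constructor
      · intro hik
        refine ⟨?_, hik⟩
        rw [← hXd i, hik]
        exact hXmono (by omega)
      · rintro ⟨hle, hik⟩; exact hik
    · intro i hi
      rw [Finset.mem_coe, mem_filter] at hi
      rw [Finset.mem_coe, mem_range]
      by_contra hcon
      push_neg at hcon
      have h1 : K - 1 < ind i := by omega
      have := hXsm _ _ h1 (hlt i)
      rw [hXd i] at this
      exact absurd hi.2 (not_le.2 this)
  have keytop : ∀ (d : Fin n → ℝ) (ind : Fin n → ℕ), (∀ i, ind i < m) → (∀ i, X (ind i) = d i) →
      (univ.filter fun i => d i ≤ X (m-1)).card = n := by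
    intro d ind hlt hXd
    rw [Finset.filter_true_of_mem, Finset.card_univ, Fintype.card_fin]
    intro i _
    rw [← hXd i]
    exact hXmono (Nat.le_sub_one_of_lt (hlt i))
  -- sums as fiberwise sums
  have sumeq : ∀ (d : Fin n → ℝ) (ind : Fin n → ℕ), (∀ i, ind i < m) → (∀ i, X (ind i) = d i) →
      ∑ i, f (d i) = ∑ k ∈ range m, ((univ.filter fun i => ind i = k).card : ℝ) * f (X k) := by
    intro d ind hlt hXd
    rw [← Finset.sum_fiberwise_of_maps_to (g := ind) (t := range m)
      (fun i _ => mem_range.2 (hlt i))]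
    apply Finset.sum_congr rfl
    intro k _
    rw [Finset.sum_congr rfl (fun i hi => ?_), Finset.sum_const, nsmul_eq_mul]
    rw [mem_filter] at hi
    rw [← hXd i, hi.2]
  -- the difference as a single sum
  have diff_eq : ∑ i, f (a i) - ∑ i, f (c i)
      = ∑ k ∈ range m, ((Da k : ℝ) - (Dc k : ℝ)) * f (X k) := by
    rw [sumeq a inda hinda_lt hXa, sumeq c indc hindc_lt hXc, ← Finset.sum_sub_distrib]
    apply Finset.sum_congr rfl
    intro k _
    ring
  have hGeq : ∀ K, 1 ≤ K → K ≤ m → ∑ k ∈ range K, ((Da k : ℝ) - (Dc k : ℝ))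
      = ((univ.filter fun i => a i ≤ X (K-1)).card : ℝ)
        - ((univ.filter fun i => c i ≤ X (K-1)).card : ℝ) := by
    intro K h1 h2
    have h3 := key a inda hinda_lt hXa K h1 h2
    have h4 := key c indc hindc_lt hXc K h1 h2
    rw [Finset.sum_sub_distrib, ← Nat.cast_sum, ← Nat.cast_sum, h3, h4]
  have hGbound : ∀ K, 1 ≤ K → K ≤ m → |∑ k ∈ range K, ((Da k : ℝ) - (Dc k : ℝ))| ≤ r := by
    intro K h1 h2; rw [hGeq K h1 h2]; exact hcount _
  have hGm : ∑ k ∈ range m, ((Da k : ℝ) - (Dc k : ℝ)) = 0 := by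
    rw [hGeq m hm1 le_rfl, keytop a inda hinda_lt hXa, keytop c indc hindc_lt hXc, sub_self]
  have habel : ∑ k ∈ range m, ((Da k : ℝ) - (Dc k : ℝ)) * f (X k)
      = - ∑ k ∈ range (m-1), (f (X (k+1)) - f (X k))
            * (∑ j ∈ range (k+1), ((Da j : ℝ) - (Dc j : ℝ))) := by
    have h := Finset.sum_range_by_parts (fun k => f (X k))
      (fun k => (Da k : ℝ) - (Dc k : ℝ)) m
    simp only [smul_eq_mul] at h
    calc ∑ k ∈ range m, ((Da k : ℝ) - (Dc k : ℝ)) * f (X k)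
        = ∑ k ∈ range m, f (X k) * ((Da k : ℝ) - (Dc k : ℝ)) := by
          exact Finset.sum_congr rfl (fun k _ => mul_comm _ _)
      _ = f (X (m-1)) * (∑ k ∈ range m, ((Da k : ℝ) - (Dc k : ℝ)))
            - ∑ k ∈ range (m-1), (f (X (k+1)) - f (X k))
              * (∑ j ∈ range (k+1), ((Da j : ℝ) - (Dc j : ℝ))) := h
      _ = _ := by rw [hGm, mul_zero, zero_sub]
  rw [diff_eq, habel, abs_neg]
  calc |∑ k ∈ range (m-1), (f (X (k+1)) - f (X k))
            * (∑ j ∈ range (k+1), ((Da j : ℝ) - (Dc j : ℝ)))|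
      ≤ ∑ k ∈ range (m-1), |f (X (k+1)) - f (X k)|
            * |∑ j ∈ range (k+1), ((Da j : ℝ) - (Dc j : ℝ))| := by
        refine (Finset.abs_sum_le_sum_abs _ _).trans ?_
        exact le_of_eq (Finset.sum_congr rfl (fun k _ => abs_mul _ _))
    _ ≤ ∑ k ∈ range (m-1), |f (X (k+1)) - f (X k)| * r := by
        refine Finset.sum_le_sum (fun k hk => ?_)
        rw [mem_range] at hk
        exact mul_le_mul_of_nonneg_left (hGbound _ (by omega) (by omega)) (abs_nonneg _)
    _ = (∑ k ∈ range (m-1), |f (X (k+1)) - f (X k)|) * r := by rw [← Finset.sum_mul]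
    _ ≤ 1 * r := mul_le_mul_of_nonneg_right (hf X hXmono (m-1)) hr
    _ = r := one_mul r

lemma parseval_fin {n : ℕ} (b : OrthonormalBasis (Fin n) ℂ (EuclideanSpace ℂ (Fin n)))
    (x : EuclideanSpace ℂ (Fin n)) :
    ∑ j, ‖(@inner ℂ _ _ (b j) x : ℂ)‖^2 = ‖x‖^2 := by
  have h1 : ∀ j, ‖(@inner ℂ _ _ (b j) x : ℂ)‖^2 = ‖b.repr x j‖^2 := by
    intro j; rw [b.repr_apply_apply]
  calc ∑ j, ‖(@inner ℂ _ _ (b j) x : ℂ)‖^2 = ∑ j, ‖b.repr x j‖^2 := Finset.sum_congr rfl (fun j _ => h1 j)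
    _ = ‖b.repr x‖^2 := (PiLp.norm_sq_eq_of_L2 _ _).symm
    _ = ‖x‖^2 := by rw [LinearIsometryEquiv.norm_map]

lemma quad_eq {n : ℕ} {M : Matrix (Fin n) (Fin n) ℂ} (hM : M.IsHermitian)
    (x : EuclideanSpace ℂ (Fin n)) :
    @inner ℂ _ _ x (Matrix.toEuclideanLin M x)
      = ((∑ j, hM.eigenvalues j * ‖(@inner ℂ _ _ (hM.eigenvectorBasis j) x : ℂ)‖^2 : ℝ) : ℂ) := by
  set b := hM.eigenvectorBasis with hb
  have hMb : ∀ j, Matrix.toEuclideanLin M (b j) = (hM.eigenvalues j : ℂ) • b j := by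
    intro j
    have h := hM.mulVec_eigenvectorBasis j
    rw [Matrix.toEuclideanLin_apply]
    ext i
    have := congrFun h i
    simpa using this
  conv_lhs => rw [show Matrix.toEuclideanLin M x
    = Matrix.toEuclideanLin M (∑ j, (@inner ℂ _ _ (b j) x) • b j) by rw [b.sum_repr']]
  rw [map_sum, inner_sum]
  rw [Complex.ofReal_sum]
  apply Finset.sum_congr rfl
  intro j _
  rw [_root_.map_smul, hMb j, smul_smul, inner_smul_right]
  have : @inner ℂ _ _ x (b j) = (starRingEnd ℂ) (@inner ℂ _ _ (b j) x) := (inner_conj_symm _ _).symm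
  rw [this]
  set z := (@inner ℂ _ _ (b j) x : ℂ)
  rw [show (z * (hM.eigenvalues j : ℂ)) * (starRingEnd ℂ) z
      = (hM.eigenvalues j : ℂ) * (z * (starRingEnd ℂ) z) by ring, RCLike.mul_conj]
  rw [Complex.ofReal_mul, Complex.ofReal_pow]
  congr 1

lemma counting_le {n : ℕ} (A B : Matrix (Fin n) (Fin n) ℂ) (hA : A.IsHermitian)
    (hB : B.IsHermitian) (ε : ℝ) (R : Finset (Fin n))
    (hq : ∀ x : EuclideanSpace ℂ (Fin n), (∀ i ∈ R, x i = 0) →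
      |Complex.re (@inner ℂ _ _ x (Matrix.toEuclideanLin (A - B) x))| ≤ ε * ‖x‖^2) :
    ∀ t : ℝ, ((univ.filter fun j => hA.eigenvalues j ≤ t).card)
      ≤ ((univ.filter fun j => hB.eigenvalues j ≤ t + ε).card) + R.card := by
  intro t
  by_contra hcon
  push_neg at hcon
  classical
  set ι := ({j : Fin n // t < hA.eigenvalues j}
    ⊕ ({j : Fin n // hB.eigenvalues j ≤ t + ε} ⊕ {i : Fin n // i ∈ R})) with hι
  set vec : ι → EuclideanSpace ℂ (Fin n) :=
    Sum.elim (fun j => hA.eigenvectorBasis j.1)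
      (Sum.elim (fun j => hB.eigenvectorBasis j.1) (fun i => EuclideanSpace.single i.1 1)) with hvec
  set Φ : EuclideanSpace ℂ (Fin n) →ₗ[ℂ] (ι → ℂ) :=
    LinearMap.pi (fun k => ((innerSL ℂ (vec k)).toLinearMap)) with hΦ
  have hcard : Fintype.card ι < n := by
    have h1 : Fintype.card {j : Fin n // t < hA.eigenvalues j}
        = n - (univ.filter fun j => hA.eigenvalues j ≤ t).card := by
      rw [Fintype.card_subtype]
      have := Finset.card_filter_add_card_filter_not
        (s := (univ : Finset (Fin n))) (p := fun j => hA.eigenvalues j ≤ t)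
      simp only [not_le, Finset.card_univ, Fintype.card_fin] at this
      omega
    have h2 : Fintype.card {j : Fin n // hB.eigenvalues j ≤ t + ε}
        = (univ.filter fun j => hB.eigenvalues j ≤ t + ε).card := Fintype.card_subtype _
    have h3 : Fintype.card {i : Fin n // i ∈ R} = R.card := Fintype.card_coe R
    have h4 : (univ.filter fun j => hA.eigenvalues j ≤ t).card ≤ n := by
      simpa using Finset.card_filter_le (univ : Finset (Fin n)) (fun j => hA.eigenvalues j ≤ t)
    simp only [hι, Fintype.card_sum, h1, h2, h3]
    omega
  have hker : ∃ x : EuclideanSpace ℂ (Fin n), x ∈ LinearMap.ker Φ ∧ x ≠ 0 := by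
    have hrn := LinearMap.finrank_range_add_finrank_ker Φ
    have hrange : Module.finrank ℂ (LinearMap.range Φ) ≤ Fintype.card ι := by
      refine le_trans (Submodule.finrank_le _) ?_
      simp [Module.finrank_pi]
    have hE : Module.finrank ℂ (EuclideanSpace ℂ (Fin n)) = n := by
      simp [finrank_euclideanSpace]
    have hkerpos : 0 < Module.finrank ℂ (LinearMap.ker Φ) := by omega
    have : LinearMap.ker Φ ≠ ⊥ := by
      intro hbot
      rw [hbot] at hkerpos
      simp at hkerpos
    obtain ⟨x, hx, hx0⟩ := Submodule.exists_mem_ne_zero_of_ne_bot this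
    exact ⟨x, hx, hx0⟩
  obtain ⟨x, hxker, hx0⟩ := hker
  have hcomp : ∀ k : ι, @inner ℂ _ _ (vec k) x = 0 := by
    intro k
    have := congrFun (LinearMap.mem_ker.1 hxker) k
    simpa [hΦ, LinearMap.pi_apply] using this
  have hA0 : ∀ j, t < hA.eigenvalues j → @inner ℂ _ _ (hA.eigenvectorBasis j) x = 0 :=
    fun j hj => hcomp (Sum.inl ⟨j, hj⟩)
  have hB0 : ∀ j, hB.eigenvalues j ≤ t + ε → @inner ℂ _ _ (hB.eigenvectorBasis j) x = 0 :=
    fun j hj => hcomp (Sum.inr (Sum.inl ⟨j, hj⟩))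
  have hR0 : ∀ i ∈ R, x i = 0 := by
    intro i hi
    have := hcomp (Sum.inr (Sum.inr ⟨i, hi⟩))
    rw [hvec] at this
    simp only [Sum.elim_inr] at this
    rw [EuclideanSpace.inner_single_left] at this
    simpa using this
  have hxnorm : 0 < ‖x‖^2 := by
    have : 0 < ‖x‖ := norm_pos_iff.2 hx0
    positivity
  -- upper bound for A-quadratic form
  have hqA : Complex.re (@inner ℂ _ _ x (Matrix.toEuclideanLin A x)) ≤ t * ‖x‖^2 := by
    rw [quad_eq hA x, Complex.ofReal_re]
    calc ∑ j, hA.eigenvalues j * ‖(@inner ℂ _ _ (hA.eigenvectorBasis j) x : ℂ)‖^2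
        ≤ ∑ j, t * ‖(@inner ℂ _ _ (hA.eigenvectorBasis j) x : ℂ)‖^2 := by
          refine Finset.sum_le_sum (fun j _ => ?_)
          rcases le_or_gt (hA.eigenvalues j) t with h | h
          · exact mul_le_mul_of_nonneg_right h (by positivity)
          · rw [hA0 j h]; simp
      _ = t * ‖x‖^2 := by rw [← Finset.mul_sum, parseval_fin]
  have hqB : (t + ε) * ‖x‖^2 < Complex.re (@inner ℂ _ _ x (Matrix.toEuclideanLin B x)) := by
    rw [quad_eq hB x, Complex.ofReal_re]
    have hex : ∃ j, (@inner ℂ _ _ (hB.eigenvectorBasis j) x : ℂ) ≠ 0 := by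
      by_contra hall
      push_neg at hall
      have : ∑ j, ‖(@inner ℂ _ _ (hB.eigenvectorBasis j) x : ℂ)‖^2 = 0 := by
        refine Finset.sum_eq_zero (fun j _ => ?_); rw [hall j]; simp
      rw [parseval_fin] at this
      rw [this] at hxnorm
      exact lt_irrefl _ hxnorm
    obtain ⟨j0, hj0⟩ := hex
    have hj0' : t + ε < hB.eigenvalues j0 := by
      by_contra hle
      push_neg at hle
      exact hj0 (hB0 j0 hle)
    calc (t + ε) * ‖x‖^2
        = ∑ j, (t + ε) * ‖(@inner ℂ _ _ (hB.eigenvectorBasis j) x : ℂ)‖^2 := by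
          rw [← Finset.mul_sum, parseval_fin]
      _ < ∑ j, hB.eigenvalues j * ‖(@inner ℂ _ _ (hB.eigenvectorBasis j) x : ℂ)‖^2 := by
          refine Finset.sum_lt_sum (fun j _ => ?_) ⟨j0, Finset.mem_univ j0, ?_⟩
          · rcases le_or_gt (hB.eigenvalues j) (t + ε) with h | h
            · rw [hB0 j h]; simp
            · exact mul_le_mul_of_nonneg_right h.le (by positivity)
          · have : 0 < ‖(@inner ℂ _ _ (hB.eigenvectorBasis j0) x : ℂ)‖^2 := by
              have := norm_pos_iff.2 hj0
              positivity
            exact mul_lt_mul_of_pos_right hj0' this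
  have hsub : Complex.re (@inner ℂ _ _ x (Matrix.toEuclideanLin (A - B) x))
      = Complex.re (@inner ℂ _ _ x (Matrix.toEuclideanLin A x))
        - Complex.re (@inner ℂ _ _ x (Matrix.toEuclideanLin B x)) := by
    rw [map_sub, LinearMap.sub_apply, inner_sub_right]
    simp
  have hq' := abs_le.1 (hq x hR0)
  rw [hsub] at hq'
  nlinarith [hq'.1, hqA, hqB]

lemma card_filter_sort {n : ℕ} (g : Fin n → ℝ) (σ : Equiv.Perm (Fin n)) (p : ℝ → Prop)
    [DecidablePred p] :
    (univ.filter fun i => p (g (σ i))).card = (univ.filter fun i => p (g i)).card := by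
  apply Finset.card_bij' (fun i _ => σ i) (fun i _ => σ.symm i) <;> simp

lemma mono_count_ge {n : ℕ} {a : Fin n → ℝ} (ha : Monotone a) {t : ℝ} {j : Fin n}
    (h : (j : ℕ) < (univ.filter fun i => a i ≤ t).card) : a j ≤ t := by
  by_contra hgt
  push_neg at hgt
  have hsub : (univ.filter fun i => a i ≤ t) ⊆ univ.filter fun i : Fin n => (i : ℕ) < (j : ℕ) := by
    intro i hi
    simp only [mem_filter, mem_univ, true_and] at hi ⊢
    by_contra hij
    push_neg at hij
    have hji : j ≤ i := by exact_mod_cast hij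
    exact absurd hi (not_le.2 (lt_of_lt_of_le hgt (ha hji)))
  have h2 : (univ.filter fun i : Fin n => (i : ℕ) < (j : ℕ)).card ≤ (j : ℕ) := by
    have := Finset.card_le_card_of_injOn (s := univ.filter fun i : Fin n => (i : ℕ) < (j : ℕ)) (t := Finset.range (j : ℕ)) (fun i : Fin n => (i : ℕ))
      (fun i hi => mem_range.2 (by simpa using hi))
      (fun i _ i' _ hii => Fin.ext hii)
    exact le_trans this (le_of_eq (Finset.card_range _))
  have := le_trans (Finset.card_le_card hsub) h2
  omega

lemma mono_count_le {n : ℕ} {a : Fin n → ℝ} (ha : Monotone a) {t : ℝ} {j : Fin n} (h : a j ≤ t) :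
    (j : ℕ) + 1 ≤ (univ.filter fun i => a i ≤ t).card := by
  have hsub : Finset.Iic j ⊆ univ.filter fun i => a i ≤ t := by
    intro i hi
    rw [Finset.mem_Iic] at hi
    simp only [mem_filter, mem_univ, true_and]
    exact le_trans (ha hi) h
  calc (j : ℕ) + 1 = (Finset.Iic j).card := by rw [Fin.card_Iic]
    _ ≤ _ := Finset.card_le_card hsub

lemma card_filter_shift {n r : ℕ} (p q : Fin n → Prop) [DecidablePred p] [DecidablePred q]
    (h : ∀ j : Fin n, p j → r ≤ (j : ℕ) →
      q ⟨(j : ℕ) - r, Nat.lt_of_le_of_lt (Nat.sub_le _ _) j.isLt⟩) :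
    (univ.filter p).card ≤ (univ.filter q).card + r := by
  have hsub : univ.filter p ⊆ (univ.filter fun j => p j ∧ r ≤ (j : ℕ))
      ∪ (univ.filter fun j : Fin n => (j : ℕ) < r) := by
    intro j hj
    simp only [mem_filter, mem_univ, true_and, mem_union] at hj ⊢
    by_cases hc : r ≤ (j : ℕ)
    · exact Or.inl ⟨hj, hc⟩
    · exact Or.inr (by omega)
  have h1 : (univ.filter fun j => p j ∧ r ≤ (j : ℕ)).card ≤ (univ.filter q).card := by
    apply Finset.card_le_card_of_injOn
      (fun j : Fin n => (⟨(j : ℕ) - r, Nat.lt_of_le_of_lt (Nat.sub_le _ _) j.isLt⟩ : Fin n))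
    · intro j hj
      simp only [Finset.mem_coe, mem_filter, mem_univ, true_and] at hj ⊢
      exact h j hj.1 hj.2
    · intro j hj j' hj' hjj
      have hj2 : p j ∧ r ≤ (j : ℕ) := by simpa using hj
      have hj2' : p j' ∧ r ≤ (j' : ℕ) := by simpa using hj'
      have hval : (j : ℕ) - r = (j' : ℕ) - r := congrArg Fin.val hjj
      have := hj2.2; have := hj2'.2
      apply Fin.ext
      omega
  have h2 : (univ.filter fun j : Fin n => (j : ℕ) < r).card ≤ r := by
    have := Finset.card_le_card_of_injOn (s := univ.filter fun i : Fin n => (i : ℕ) < r) (t := Finset.range r) (fun i : Fin n => (i : ℕ))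
      (fun i hi => mem_range.2 (by simpa using hi))
      (fun i _ i' _ hii => Fin.ext hii)
    exact le_trans this (le_of_eq (Finset.card_range _))
  calc (univ.filter p).card ≤ _ := Finset.card_le_card hsub
    _ ≤ (univ.filter fun j => p j ∧ r ≤ (j : ℕ)).card
        + (univ.filter fun j : Fin n => (j : ℕ) < r).card := Finset.card_union_le _ _
    _ ≤ (univ.filter q).card + r := Nat.add_le_add h1 h2

lemma clamp_close {L U v ε : ℝ} (hLU : L ≤ U) (hL : L ≤ v + ε) (hU : v ≤ U + ε) (hε : 0 ≤ ε) :
    |max L (min U v) - v| ≤ ε := by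
  rcases le_total v L with h | h
  · rw [min_eq_right (le_trans h hLU), max_eq_left h, abs_le]
    constructor <;> linarith
  · rcases le_total v U with h2 | h2
    · rw [min_eq_right h2, max_eq_right h]; simpa using hε
    · rw [min_eq_left h2, max_eq_right hLU, abs_le]
      constructor <;> linarith

/-- Removing the diagonal of a Hermitian matrix changes its empirical spectral distribution,
tested against a function that is `1`-Lipschitz and of total variation at most `1`, by at most
`ε + (1/n) #{i : |Y_{ii}| ≥ ε}`, for any `ε > 0`. -/
theorem esd_diff_remove_diagonal
    (n : ℕ) (hn : 1 ≤ n) (Y : Matrix (Fin n) (Fin n) ℂ) (hY : Y.IsHermitian)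
    (hY' : (Matrix.of fun i j : Fin n => if i = j then 0 else Y i j).IsHermitian)
    (ε : ℝ) (hε : 0 < ε)
    (f : ℝ → ℝ) (hfLip : ∀ x y : ℝ, |f x - f y| ≤ |x - y|)
    (hfTV : eVariationOn f Set.univ ≤ 1) :
    |(1 / n : ℝ) * ∑ i, f (hY.eigenvalues i) - (1 / n : ℝ) * ∑ i, f (hY'.eigenvalues i)|
      ≤ ε + (1 / n : ℝ) *
          ((Finset.univ.filter fun i : Fin n => ε ≤ ‖Y i i‖).card : ℝ) := by
  classical
  set B : Matrix (Fin n) (Fin n) ℂ := Matrix.of fun i j : Fin n => if i = j then 0 else Y i j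
    with hB
  set R : Finset (Fin n) := univ.filter fun i : Fin n => ε ≤ ‖Y i i‖ with hR
  set r : ℕ := R.card with hr
  -- diagonal entries of Y are real
  have hYreal : ∀ i, (starRingEnd ℂ) (Y i i) = Y i i := by
    intro i
    have := congrFun (congrFun hY i) i
    simpa [Matrix.conjTranspose_apply] using this
  -- quadratic form bound for the diagonal difference
  have hq0 : ∀ x : EuclideanSpace ℂ (Fin n), (∀ i ∈ R, x i = 0) →
      |Complex.re (@inner ℂ _ _ x (Matrix.toEuclideanLin (Y - B) x))| ≤ ε * ‖x‖^2 := by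
    intro x hx
    have hnorm : ‖x‖^2 = ∑ i, Complex.normSq (x i) := by
      rw [EuclideanSpace.norm_eq, Real.sq_sqrt (Finset.sum_nonneg fun i _ => sq_nonneg _)]
      exact Finset.sum_congr rfl fun i _ => by
        rw [Complex.sq_norm]
    have hinner : Complex.re (@inner ℂ _ _ x (Matrix.toEuclideanLin (Y - B) x))
        = ∑ i, (Y i i).re * Complex.normSq (x i) := by
      rw [Matrix.toEuclideanLin_apply, PiLp.inner_apply]
      rw [Complex.re_sum]
      apply Finset.sum_congr rfl
      intro i _
      have hmv : ((Y - B) *ᵥ ((WithLp.equiv 2 (Fin n → ℂ)) x)) i = Y i i * x i := by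
        simp only [Matrix.mulVec, dotProduct, Matrix.sub_apply, hB, Matrix.of_apply]
        rw [Finset.sum_congr rfl (fun j _ => by
          rw [show (Y i j - if i = j then 0 else Y i j) = if i = j then Y i i else 0 by
            split_ifs with h
            · subst h; ring
            · ring])]
        simp
      simp only [PiLp.toLp_apply, show ((Y - B) *ᵥ WithLp.ofLp x) i = Y i i * x i from hmv]
      rw [RCLike.inner_apply]
      have hre : Y i i * x i * (starRingEnd ℂ) (x i)
          = Y i i * (x i * (starRingEnd ℂ) (x i)) := by ring
      rw [hre, Complex.mul_conj]
      simp [Complex.mul_re]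
    rw [hinner]
    calc |∑ i, (Y i i).re * Complex.normSq (x i)|
        ≤ ∑ i, |(Y i i).re * Complex.normSq (x i)| := Finset.abs_sum_le_sum_abs _ _
      _ ≤ ∑ i, ε * Complex.normSq (x i) := by
          refine Finset.sum_le_sum fun i _ => ?_
          by_cases hiR : i ∈ R
          · rw [hx i hiR]
            simp [le_of_lt hε]
          · have hlt : ‖Y i i‖ < ε := by
              by_contra hge
              exact hiR (by rw [hR]; simp only [mem_filter, mem_univ, true_and]; linarith)
            rw [abs_mul, abs_of_nonneg (Complex.normSq_nonneg _)]
            refine mul_le_mul_of_nonneg_right ?_ (Complex.normSq_nonneg _)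
            exact le_trans (Complex.abs_re_le_norm _) hlt.le
      _ = ε * ‖x‖^2 := by rw [← Finset.mul_sum, hnorm]
  have hq1 : ∀ x : EuclideanSpace ℂ (Fin n), (∀ i ∈ R, x i = 0) →
      |Complex.re (@inner ℂ _ _ x (Matrix.toEuclideanLin (B - Y) x))| ≤ ε * ‖x‖^2 := by
    intro x hx
    have : (B - Y) = -(Y - B) := (neg_sub Y B).symm
    rw [this, map_neg]
    simp only [LinearMap.neg_apply, inner_neg_right, Complex.neg_re, abs_neg]
    exact hq0 x hx
  -- counting inequalities
  have hNYB := counting_le Y B hY hY' ε R hq0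
  have hNBY := counting_le B Y hY' hY ε R hq1
  -- sorted eigenvalue sequences
  set σa : Equiv.Perm (Fin n) := Tuple.sort hY.eigenvalues with hσa
  set σb : Equiv.Perm (Fin n) := Tuple.sort hY'.eigenvalues with hσb
  set a : Fin n → ℝ := hY.eigenvalues ∘ σa with ha
  set b : Fin n → ℝ := hY'.eigenvalues ∘ σb with hb
  have hamono : Monotone a := Tuple.monotone_sort hY.eigenvalues
  have hbmono : Monotone b := Tuple.monotone_sort hY'.eigenvalues
  have hacard : ∀ t : ℝ, (univ.filter fun i => a i ≤ t).card
      = (univ.filter fun i => hY.eigenvalues i ≤ t).card :=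
    fun t => card_filter_sort hY.eigenvalues σa (fun v => v ≤ t)
  have hbcard : ∀ t : ℝ, (univ.filter fun i => b i ≤ t).card
      = (univ.filter fun i => hY'.eigenvalues i ≤ t).card :=
    fun t => card_filter_sort hY'.eigenvalues σb (fun v => v ≤ t)
  have hNab : ∀ t : ℝ, (univ.filter fun i => a i ≤ t).card
      ≤ (univ.filter fun i => b i ≤ t + ε).card + r := by
    intro t; rw [hacard, hbcard]; exact hNYB t
  have hNba : ∀ t : ℝ, (univ.filter fun i => b i ≤ t).card
      ≤ (univ.filter fun i => a i ≤ t + ε).card + r := by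
    intro t; rw [hacard, hbcard]; exact hNBY t
  -- pointwise interlacing with ε slack
  have hup : ∀ j : Fin n, (hjr : (j : ℕ) + r < n) → b j ≤ a ⟨(j : ℕ) + r, hjr⟩ + ε := by
    intro j hjr
    set t : ℝ := a ⟨(j : ℕ) + r, hjr⟩
    have h1 : (j : ℕ) + r + 1 ≤ (univ.filter fun i => a i ≤ t).card := by
      simpa using mono_count_le (j := ⟨(j : ℕ) + r, hjr⟩) hamono le_rfl
    have h2 := hNab t
    refine mono_count_ge hbmono (t := t + ε) ?_
    omega
  have hdown : ∀ j : Fin n, r ≤ (j : ℕ) →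
      a ⟨(j : ℕ) - r, Nat.lt_of_le_of_lt (Nat.sub_le _ _) j.isLt⟩ ≤ b j + ε := by
    intro j hjr
    have h1 : (j : ℕ) + 1 ≤ (univ.filter fun i => b i ≤ b j).card :=
      mono_count_le hbmono le_rfl
    have h2 := hNba (b j)
    refine mono_count_ge hamono (t := b j + ε) ?_
    simp only [Fin.val_mk]
    omega
  -- the clamped sequence
  set c : Fin n → ℝ := fun j =>
    if h1 : (j : ℕ) + r < n then
      if h2 : r ≤ (j : ℕ) then
        max (a ⟨(j : ℕ) - r, Nat.lt_of_le_of_lt (Nat.sub_le _ _) j.isLt⟩)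
          (min (a ⟨(j : ℕ) + r, h1⟩) (b j))
      else min (a ⟨(j : ℕ) + r, h1⟩) (b j)
    else
      if h2 : r ≤ (j : ℕ) then
        max (a ⟨(j : ℕ) - r, Nat.lt_of_le_of_lt (Nat.sub_le _ _) j.isLt⟩) (b j)
      else b j
    with hc
  have hLU : ∀ j : Fin n, (h1 : (j : ℕ) + r < n) → (h2 : r ≤ (j : ℕ)) →
      a ⟨(j : ℕ) - r, Nat.lt_of_le_of_lt (Nat.sub_le _ _) j.isLt⟩ ≤ a ⟨(j : ℕ) + r, h1⟩ := by
    intro j h1 h2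
    exact hamono (by simp only [Fin.mk_le_mk]; omega)
  have hC1 : ∀ j : Fin n, (h1 : (j : ℕ) + r < n) → c j ≤ a ⟨(j : ℕ) + r, h1⟩ := by
    intro j h1
    rw [hc]
    simp only [h1, dif_pos]
    split_ifs with h2
    · exact max_le (hLU j h1 h2) (min_le_left _ _)
    · exact min_le_left _ _
  have hC2 : ∀ j : Fin n, (h2 : r ≤ (j : ℕ)) →
      a ⟨(j : ℕ) - r, Nat.lt_of_le_of_lt (Nat.sub_le _ _) j.isLt⟩ ≤ c j := by
    intro j h2
    rw [hc]
    simp only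
    split_ifs with h1
    · exact le_max_left _ _
    · exact le_max_left _ _
  have hCb : ∀ j : Fin n, |c j - b j| ≤ ε := by
    intro j
    rw [hc]
    simp only
    split_ifs with h1 h2 h2
    · exact clamp_close (hLU j h1 h2) (hdown j h2) (hup j h1) hε.le
    · -- no lower constraint
      rcases le_total (b j) (a ⟨(j : ℕ) + r, h1⟩) with h | h
      · rw [min_eq_right h]; simpa using hε.le
      · rw [min_eq_left h, abs_le]
        have := hup j h1
        constructor <;> linarith
    · rcases le_total (a ⟨(j : ℕ) - r, Nat.lt_of_le_of_lt (Nat.sub_le _ _) j.isLt⟩) (b j)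
        with h | h
      · rw [max_eq_right h]; simpa using hε.le
      · rw [max_eq_left h, abs_le]
        have := hdown j h2
        constructor <;> linarith
    · simpa using hε.le
  -- counting comparison between a and c
  have hcount : ∀ t : ℝ, |((univ.filter fun i => a i ≤ t).card : ℝ)
      - ((univ.filter fun i => c i ≤ t).card : ℝ)| ≤ (r : ℝ) := by
    intro t
    have hca : (univ.filter fun i => c i ≤ t).card ≤ (univ.filter fun i => a i ≤ t).card + r := by
      refine card_filter_shift _ _ (fun j hj hjr => ?_)
      exact le_trans (hC2 j hjr) hj
    have hac : (univ.filter fun i => a i ≤ t).card ≤ (univ.filter fun i => c i ≤ t).card + r := by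
      refine card_filter_shift _ _ (fun j hj hjr => ?_)
      set j' : Fin n := ⟨(j : ℕ) - r, Nat.lt_of_le_of_lt (Nat.sub_le _ _) j.isLt⟩
      have hj'r : (j' : ℕ) + r < n := by
        simp only [j']
        omega
      have heq : (⟨(j' : ℕ) + r, hj'r⟩ : Fin n) = j := by
        apply Fin.ext
        simp only [j']
        omega
      calc c j' ≤ a ⟨(j' : ℕ) + r, hj'r⟩ := hC1 j' hj'r
        _ = a j := by rw [heq]
        _ ≤ t := hj
    rw [abs_le]
    constructor
    · have := (Nat.cast_le (α := ℝ)).2 hca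
      push_cast at this ⊢
      linarith
    · have := (Nat.cast_le (α := ℝ)).2 hac
      push_cast at this ⊢
      linarith
  -- total variation hypothesis in the discrete form
  have hf : ∀ u : ℕ → ℝ, Monotone u → ∀ m : ℕ,
      ∑ k ∈ Finset.range m, |f (u (k + 1)) - f (u k)| ≤ 1 := by
    intro u hu m
    have h1 := eVariationOn.sum_le (f := f) (n := m) hu (fun i => Set.mem_univ (u i))
    have h2 : ∑ i ∈ Finset.range m, edist (f (u (i + 1))) (f (u i))
        = ENNReal.ofReal (∑ k ∈ Finset.range m, |f (u (k + 1)) - f (u k)|) := by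
      rw [ENNReal.ofReal_sum_of_nonneg (fun k _ => abs_nonneg _)]
      exact Finset.sum_congr rfl fun k _ => by rw [edist_dist, Real.dist_eq]
    rw [h2] at h1
    have h3 := le_trans h1 hfTV
    rwa [← ENNReal.ofReal_one, ENNReal.ofReal_le_ofReal_iff zero_le_one] at h3
  -- apply the Abel/TV lemma
  have habel := abel_tv_s10 a c (r : ℝ) f hf hcount
  -- Lipschitz part
  have hlip : |∑ i, f (c i) - ∑ i, f (b i)| ≤ (n : ℝ) * ε := by
    rw [← Finset.sum_sub_distrib]
    calc |∑ i, (f (c i) - f (b i))| ≤ ∑ i : Fin n, |f (c i) - f (b i)| :=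
          Finset.abs_sum_le_sum_abs _ _
      _ ≤ ∑ _i : Fin n, ε := Finset.sum_le_sum fun i _ =>
          le_trans (hfLip (c i) (b i)) (hCb i)
      _ = (n : ℝ) * ε := by simp [mul_comm]
  -- reindex the sums
  have hsuma : ∑ i, f (hY.eigenvalues i) = ∑ i, f (a i) :=
    (Equiv.sum_comp σa (fun i => f (hY.eigenvalues i))).symm
  have hsumb : ∑ i, f (hY'.eigenvalues i) = ∑ i, f (b i) :=
    (Equiv.sum_comp σb (fun i => f (hY'.eigenvalues i))).symm
  -- final arithmetic
  have hkey : |∑ i, f (a i) - ∑ i, f (b i)| ≤ (n : ℝ) * ε + (r : ℝ) := by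
    calc |∑ i, f (a i) - ∑ i, f (b i)|
        = |(∑ i, f (a i) - ∑ i, f (c i)) + (∑ i, f (c i) - ∑ i, f (b i))| := by ring_nf
      _ ≤ |∑ i, f (a i) - ∑ i, f (c i)| + |∑ i, f (c i) - ∑ i, f (b i)| := abs_add_le _ _
      _ ≤ (r : ℝ) + (n : ℝ) * ε := add_le_add habel hlip
      _ = (n : ℝ) * ε + (r : ℝ) := by ring
  have hnpos : (0 : ℝ) < n := by exact_mod_cast hn
  rw [hsuma, hsumb, ← mul_sub, abs_mul, abs_of_pos (by positivity : (0:ℝ) < (1/n : ℝ))]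
  calc (1 / n : ℝ) * |∑ i, f (a i) - ∑ i, f (b i)|
      ≤ (1 / n : ℝ) * ((n : ℝ) * ε + (r : ℝ)) := by
        exact mul_le_mul_of_nonneg_left hkey (by positivity)
    _ = ε + (1 / n : ℝ) * (r : ℝ) := by field_simp
end

section
/- Let c0 > 0 and α > 0. There exists a constant c > 0 depending only on c0 and α such that the following holds for every integer n ≥ 3. If (Y_i)_{1 ≤ i ≤ n} are independent complex random variables each satisfying the tail bound T(n,c0,α), then, setting ε = (log n)^{−1/(2α)} and S = (1/n) ∑_{i=1}^n 1_{|Y_i| ≥ ε}, one has P( S ≥ 1/ sqrt(c · log n) ) ≤ exp( − c · n · sqrt(log n) ). -/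
open MeasureTheory ProbabilityTheory ENNReal

/-- Bennett-type bound: for independent random variables satisfying the tail bound
`T(n, c0, α)`, with `ε = (log n)^{−1/(2α)}` and `S = (1/n) ∑_i 1_{|Y_i| ≥ ε}`, we have
`P(S ≥ 1/√(c log n)) ≤ exp(−c n √(log n))` for some constant `c > 0` depending only on
`c0` and `α`. -/
theorem fraction_large_entries_exponential_bound
    (c0 α : ℝ) (hc0 : 0 < c0) (hα : 0 < α) :
    ∃ c : ℝ, 0 < c ∧
      ∀ (n : ℕ), 3 ≤ n →
      ∀ (Ω : Type) (_ : MeasurableSpace Ω) (P : Measure Ω), IsProbabilityMeasure P →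
      ∀ Y : Fin n → Ω → ℂ,
        (∀ i, Measurable (Y i)) →
        iIndepFun Y P →
        (∀ i : Fin n, ∀ t : ℝ, 0 < t → t ≤ 1 →
          (n : ℝ≥0∞) * P {ω | t ≤ ‖Y i ω‖} ≤ ENNReal.ofReal (c0 * t ^ (-α))) →
        P {ω | 1 / Real.sqrt (c * Real.log n) ≤
            (1 / n : ℝ) * ∑ i : Fin n,
              (if (Real.log n) ^ (-(1 / (2 * α))) ≤ ‖Y i ω‖ then (1 : ℝ) else 0)}
          ≤ ENNReal.ofReal (Real.exp (-c * n * Real.sqrt (Real.log n))) := by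
  refine ⟨min 1 ((1 + c0)⁻¹ ^ 2), lt_min one_pos (pow_pos (inv_pos.2 (by linarith)) 2), ?_⟩
  set c : ℝ := min 1 ((1 + c0)⁻¹ ^ 2) with hc_def
  have hc_pos : 0 < c := lt_min one_pos (pow_pos (inv_pos.2 (by linarith)) 2)
  have hc_le1 : c ≤ 1 := min_le_left _ _
  have hcs : Real.sqrt c ≤ (1 + c0)⁻¹ := by
    rw [show (1 + c0)⁻¹ = Real.sqrt ((1 + c0)⁻¹ ^ 2) from
      (Real.sqrt_sq (by positivity)).symm]
    exact Real.sqrt_le_sqrt (min_le_right _ _)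
  intro n hn Ω mΩ P hP Y hYmeas hYindep htail
  -- basic facts about log n
  have hn0 : (0 : ℝ) < n := by positivity
  have hL1 : (1 : ℝ) ≤ Real.log n := by
    rw [Real.le_log_iff_exp_le hn0]
    calc Real.exp 1 ≤ 2.7182818286 := Real.exp_one_lt_d9.le
    _ ≤ (3 : ℝ) := by norm_num
    _ ≤ (n : ℝ) := by exact_mod_cast hn
  set L : ℝ := Real.log n with hL_def
  have hL0 : (0 : ℝ) < L := lt_of_lt_of_le one_pos hL1
  set ε : ℝ := L ^ (-(1 / (2 * α))) with hε_def
  have hε0 : 0 < ε := Real.rpow_pos_of_pos hL0 _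
  have hε1 : ε ≤ 1 := Real.rpow_le_one_of_one_le_of_nonpos hL1
    (neg_nonpos.2 (by positivity))
  have hεα : ε ^ (-α) = Real.sqrt L := by
    rw [hε_def, ← Real.rpow_mul hL0.le]
    rw [show (-(1 / (2 * α))) * (-α) = 1 / 2 by field_simp]
    exact (Real.sqrt_eq_rpow L).symm
  -- the indicator random variables
  set X : Fin n → Ω → ℝ := fun i ω => if ε ≤ ‖Y i ω‖ then (1 : ℝ) else 0
    with hX_def
  have hAmeas : ∀ i, MeasurableSet {ω | ε ≤ ‖Y i ω‖} := fun i =>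
    measurableSet_le measurable_const (continuous_norm.measurable.comp (hYmeas i))
  have hXmeas : ∀ i, Measurable (X i) := fun i =>
    Measurable.ite (hAmeas i) measurable_const measurable_const
  have hXindep : iIndepFun X P := by
    have := hYindep.comp (fun i (z : ℂ) => if ε ≤ ‖z‖ then (1 : ℝ) else 0)
      (fun i => Measurable.ite (measurableSet_le measurable_const continuous_norm.measurable)
        measurable_const measurable_const)
    exact this
  have hX01 : ∀ i ω, 0 ≤ X i ω ∧ X i ω ≤ 1 := fun i ω => by
    simp only [hX_def]; split <;> norm_num
  have hTle : ∀ ω, ∑ i, X i ω ≤ (n : ℝ) := by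
    intro ω
    calc ∑ i, X i ω ≤ ∑ _i : Fin n, (1 : ℝ) :=
        Finset.sum_le_sum fun i _ => (hX01 i ω).2
      _ = n := by simp
  have hT0 : ∀ ω, 0 ≤ ∑ i, X i ω := fun ω =>
    Finset.sum_nonneg fun i _ => (hX01 i ω).1
  -- integrability
  have hint : ∀ i, Integrable (fun ω => Real.exp (L * X i ω)) P := by
    intro i
    apply (integrable_const (Real.exp L)).mono'
      (((hXmeas i).const_mul L).exp.aestronglyMeasurable)
    filter_upwards with ω
    rw [Real.norm_eq_abs, abs_of_pos (Real.exp_pos _), Real.exp_le_exp]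
    calc L * X i ω ≤ L * 1 := mul_le_mul_of_nonneg_left (hX01 i ω).2 hL0.le
      _ = L := mul_one L
  have hintT : Integrable (fun ω => Real.exp (L * ∑ i, X i ω)) P := by
    apply (integrable_const (Real.exp (L * n))).mono'
    · exact ((Finset.measurable_sum Finset.univ fun i _ => hXmeas i).const_mul L).exp.aestronglyMeasurable
    filter_upwards with ω
    rw [Real.norm_eq_abs, abs_of_pos (Real.exp_pos _), Real.exp_le_exp]
    exact mul_le_mul_of_nonneg_left (hTle ω) hL0.le
  -- probability of each indicator
  have hp : ∀ i, (n : ℝ) * (P {ω | ε ≤ ‖Y i ω‖}).toReal ≤ c0 * Real.sqrt L := by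
    intro i
    have h1 := htail i ε hε0 hε1
    have h2 : ((n : ℝ≥0∞) * P {ω | ε ≤ ‖Y i ω‖}).toReal
        ≤ (ENNReal.ofReal (c0 * ε ^ (-α))).toReal :=
      ENNReal.toReal_mono ofReal_ne_top h1
    rw [ENNReal.toReal_mul, ENNReal.toReal_natCast,
      ENNReal.toReal_ofReal (by positivity), hεα] at h2
    exact h2
  -- mgf bound for each indicator
  have hmgf : ∀ i, mgf (X i) P L ≤ Real.exp ((Real.exp L - 1) * (c0 * Real.sqrt L / n)) := by
    intro i
    set p : ℝ := (P {ω | ε ≤ ‖Y i ω‖}).toReal with hp_def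
    have hp0 : 0 ≤ p := ENNReal.toReal_nonneg
    have hpb : p ≤ c0 * Real.sqrt L / n := by
      rw [le_div_iff₀ hn0, mul_comm]
      exact hp i
    have hmgf_eq : mgf (X i) P L = 1 + (Real.exp L - 1) * p := by
      rw [mgf]
      have : (fun ω => Real.exp (L * X i ω))
          = fun ω => 1 + (Real.exp L - 1) *
              Set.indicator {ω | ε ≤ ‖Y i ω‖} (fun _ => (1 : ℝ)) ω := by
        funext ω
        simp only [hX_def, Set.indicator_apply, Set.mem_setOf_eq]
        split
        · rw [mul_one]; ring
        · simp
      rw [this, integral_add (integrable_const 1)]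
      · rw [integral_const, probReal_univ, one_smul,
          integral_const_mul, integral_indicator_const _ (hAmeas i)]
        simp [hp_def, Measure.real]
      · exact (Integrable.indicator (integrable_const 1) (hAmeas i)).const_mul _
    rw [hmgf_eq]
    have hexp1 : 0 ≤ Real.exp L - 1 := by
      have : (1 : ℝ) ≤ Real.exp L := by
        rw [← Real.exp_zero]; exact Real.exp_le_exp.2 hL0.le
      linarith
    calc 1 + (Real.exp L - 1) * p
        ≤ 1 + (Real.exp L - 1) * (c0 * Real.sqrt L / n) := by
          have := mul_le_mul_of_nonneg_left hpb hexp1; linarith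
      _ ≤ Real.exp ((Real.exp L - 1) * (c0 * Real.sqrt L / n)) := by
          have := Real.add_one_le_exp ((Real.exp L - 1) * (c0 * Real.sqrt L / n))
          linarith
  -- Chernoff
  set a : ℝ := (n : ℝ) * (1 / Real.sqrt (c * L)) with ha_def
  have hchern := measure_ge_le_exp_mul_mgf (X := fun ω => ∑ i, X i ω) (μ := P) a hL0.le hintT
  have hmgfsum : mgf (fun ω => ∑ i, X i ω) P L ≤ Real.exp ((Real.exp L - 1) * (c0 * Real.sqrt L)) := by
    have heq : (fun ω => ∑ i, X i ω) = ∑ i, X i := by funext ω; simp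
    rw [heq, hXindep.mgf_sum hXmeas]
    calc ∏ i : Fin n, mgf (X i) P L
        ≤ ∏ _i : Fin n, Real.exp ((Real.exp L - 1) * (c0 * Real.sqrt L / n)) :=
          Finset.prod_le_prod (fun i _ => mgf_nonneg) (fun i _ => hmgf i)
    _ = Real.exp ((n : ℝ) * ((Real.exp L - 1) * (c0 * Real.sqrt L / n))) := by
          rw [Finset.prod_const, ← Real.exp_nat_mul]; simp
    _ = Real.exp ((Real.exp L - 1) * (c0 * Real.sqrt L)) := by
          congr 1
          field_simp
  -- exponent comparison
  have hkey : Real.exp (-L * a) * Real.exp ((Real.exp L - 1) * (c0 * Real.sqrt L))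
      ≤ Real.exp (-c * n * Real.sqrt L) := by
    rw [← Real.exp_add, Real.exp_le_exp]
    have hs : Real.sqrt (c * L) = Real.sqrt c * Real.sqrt L := Real.sqrt_mul hc_pos.le L
    have hsL : 0 < Real.sqrt L := Real.sqrt_pos.2 hL0
    have hsc : 0 < Real.sqrt c := Real.sqrt_pos.2 hc_pos
    have hLL : Real.sqrt L * Real.sqrt L = L := Real.mul_self_sqrt hL0.le
    have hLa : L * a = (n : ℝ) * (Real.sqrt L / Real.sqrt c) := by
      rw [ha_def, hs]
      field_simp
      linear_combination (-1 : ℝ) * hLL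
    have hstep1 : (Real.exp L - 1) * (c0 * Real.sqrt L) ≤ (n : ℝ) * (c0 * Real.sqrt L) := by
      have : Real.exp L - 1 ≤ (n : ℝ) := by rw [Real.exp_log hn0]; linarith
      exact mul_le_mul_of_nonneg_right this (by positivity)
    have hstep2 : (n : ℝ) * (c0 * Real.sqrt L) + c * ((n : ℝ) * Real.sqrt L)
        ≤ (n : ℝ) * (Real.sqrt L / Real.sqrt c) := by
      have h1 : c + c0 ≤ (Real.sqrt c)⁻¹ := by
        have h2 : (1 + c0 : ℝ) ≤ (Real.sqrt c)⁻¹ := by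
          rw [le_inv_comm₀ (by linarith : (0:ℝ) < 1 + c0) hsc]
          exact hcs
        linarith
      have h3 : ((c + c0) * Real.sqrt L) * n ≤ ((Real.sqrt c)⁻¹ * Real.sqrt L) * n := by
        apply mul_le_mul_of_nonneg_right _ hn0.le
        exact mul_le_mul_of_nonneg_right h1 hsL.le
      calc (n : ℝ) * (c0 * Real.sqrt L) + c * ((n : ℝ) * Real.sqrt L)
          = ((c + c0) * Real.sqrt L) * n := by ring
      _ ≤ ((Real.sqrt c)⁻¹ * Real.sqrt L) * n := h3
      _ = (n : ℝ) * (Real.sqrt L / Real.sqrt c) := by ring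
    rw [neg_mul, hLa]
    nlinarith [hstep1, hstep2]
  -- event rewriting
  have hset : {ω | 1 / Real.sqrt (c * L) ≤
      (1 / n : ℝ) * ∑ i : Fin n, (if ε ≤ ‖Y i ω‖ then (1 : ℝ) else 0)}
      = {ω | a ≤ ∑ i, X i ω} := by
    ext ω
    simp only [Set.mem_setOf_eq, hX_def, ha_def]
    rw [one_div (n : ℝ), inv_mul_eq_div, le_div_iff₀ hn0, mul_comm]
  -- conclusion
  rw [hset]
  have hfin : P {ω | a ≤ ∑ i, X i ω} ≠ ⊤ := measure_ne_top _ _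
  rw [← ENNReal.ofReal_toReal hfin]
  apply ENNReal.ofReal_le_ofReal
  calc (P {ω | a ≤ ∑ i, X i ω}).toReal
      ≤ Real.exp (-L * a) * mgf (fun ω => ∑ i, X i ω) P L := hchern
  _ ≤ Real.exp (-L * a) * Real.exp ((Real.exp L - 1) * (c0 * Real.sqrt L)) :=
      mul_le_mul_of_nonneg_left hmgfsum (Real.exp_pos _).le
  _ ≤ Real.exp (-c * n * Real.sqrt L) := hkey
end

section
/- Let c0 > 0 and 0 < α < β. For every n ≥ 1, let (Y^n_{ij})_{1 ≤ i ≤ j ≤ n} be independent complex random variables each satisfying the tail bound T(n,c0,α). Then for every T > 0 there exists ε ∈ (0,1] such that limsup_{n→∞} (1/n) · log P( (2/n) ∑_{1 ≤ i ≤ j ≤ n} |Y^n_{ij}|^β 1_{|Y^n_{ij}| ≤ ε} ≥ 1 ) ≤ −T. -/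
open MeasureTheory ProbabilityTheory ENNReal Set

section Aux

lemma lintegral_prod_of_iIndepFun' {Ω ι : Type*} [MeasurableSpace Ω] {μ : Measure Ω}
    [IsProbabilityMeasure μ] (g : ι → Ω → ℝ≥0∞) (hg : ∀ i, Measurable (g i))
    (hindep : iIndepFun g μ) (s : Finset ι) :
    ∫⁻ ω, ∏ i ∈ s, g i ω ∂μ = ∏ i ∈ s, ∫⁻ ω, g i ω ∂μ := by
  classical
  induction s using Finset.induction_on with
  | empty => simp
  | insert a s hx ih =>
    have hInd : IndepFun (∏ j ∈ s, g j) (g a) μ :=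
      hindep.indepFun_finset_prod_of_notMem hg hx
    have hprodmeas : Measurable (∏ j ∈ s, g j) := by
      have := Finset.measurable_prod s fun i (_ : i ∈ s) => hg i
      convert this using 1; ext ω; simp
    calc ∫⁻ ω, ∏ i ∈ insert a s, g i ω ∂μ
        = ∫⁻ ω, ((g a) * (∏ j ∈ s, g j)) ω ∂μ := by
          apply lintegral_congr; intro ω
          simp [Finset.prod_insert hx]
      _ = (∫⁻ ω, g a ω ∂μ) * ∫⁻ ω, (∏ j ∈ s, g j) ω ∂μ :=
          lintegral_mul_eq_lintegral_mul_lintegral_of_indepFun (hg a) hprodmeas hInd.symm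
      _ = ∏ i ∈ insert a s, ∫⁻ ω, g i ω ∂μ := by
          rw [Finset.prod_insert hx, ← ih]
          congr 1
          apply lintegral_congr; intro ω; simp

lemma exp_le_one_add' {u : ℝ} (h0 : 0 ≤ u) (h1 : u ≤ 1) :
    Real.exp u ≤ 1 + (Real.exp 1 - 1) * u := by
  have := convexOn_exp.2 (Set.mem_univ (0:ℝ)) (Set.mem_univ (1:ℝ))
    (by linarith : (0:ℝ) ≤ 1 - u) h0 (by ring)
  simp only [smul_eq_mul, mul_zero, mul_one, Real.exp_zero] at this
  calc Real.exp u = Real.exp ((1-u) * 0 + u * 1) := by ring_nf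
    _ ≤ (1-u) * 1 + u * Real.exp 1 := by simpa using this
    _ = 1 + (Real.exp 1 - 1) * u := by ring

end Aux

section Moment

variable {Ω : Type*} [MeasurableSpace Ω]

lemma moment_bound' (μ : Measure Ω) [IsProbabilityMeasure μ]
    (c0 α β ε : ℝ) (hc0 : 0 < c0) (hα : 0 < α) (hαβ : α < β) (hε : 0 < ε) (hε1 : ε ≤ 1)
    (n : ℕ) (hn : 1 ≤ n) (Z : Ω → ℂ) (hZ : Measurable Z)
    (htail : ∀ t : ℝ, 0 < t → t ≤ 1 →
      (n : ℝ≥0∞) * μ {ω | t ≤ ‖Z ω‖} ≤ ENNReal.ofReal (c0 * t ^ (-α))) :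
    ∫⁻ ω, ENNReal.ofReal (if ‖Z ω‖ ≤ ε then ‖Z ω‖ ^ β else 0) ∂μ
      ≤ ENNReal.ofReal (c0 * β / (β - α) * ε ^ (β - α) / n) := by
  have hβ : 0 < β := hα.trans hαβ
  set γ : ℝ := α / β with hγdef
  have hγ0 : 0 < γ := by positivity
  have hγ1 : γ < 1 := by rw [hγdef, div_lt_one hβ]; exact hαβ
  set M : ℝ := ε ^ β with hMdef
  have hM : 0 < M := Real.rpow_pos_of_pos hε β
  set F : Ω → ℝ := fun ω => if ‖Z ω‖ ≤ ε then ‖Z ω‖ ^ β else 0 with hFdef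
  have habs : Measurable fun ω => ‖Z ω‖ := continuous_norm.measurable.comp hZ
  have hrpow : Measurable fun ω => ‖Z ω‖ ^ β := by fun_prop
  have hFmeas : Measurable F := by
    rw [hFdef]
    exact Measurable.ite (measurableSet_le habs measurable_const) hrpow measurable_const
  have hF0 : ∀ ω, 0 ≤ F ω := by
    intro ω; rw [hFdef]; dsimp only; split
    · positivity
    · exact le_refl 0
  have hFM : ∀ ω, F ω ≤ M := by
    intro ω; rw [hFdef]; dsimp only; split
    · exact Real.rpow_le_rpow (norm_nonneg _) (by assumption) hβ.le
    · exact hM.le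
  have hnR : (0:ℝ) < n := by exact_mod_cast hn
  rw [lintegral_eq_lintegral_meas_lt μ (Filter.Eventually.of_forall hF0) hFmeas.aemeasurable]
  rw [← Set.Ioc_union_Ioi_eq_Ioi hM.le,
    lintegral_union measurableSet_Ioi (Set.Ioc_disjoint_Ioi le_rfl)]
  have htail0 : ∫⁻ t in Ioi M, μ {a | t < F a} = 0 := by
    have : ∀ᵐ t ∂(volume.restrict (Ioi M)), μ {a | t < F a} = 0 := by
      refine (ae_restrict_iff' measurableSet_Ioi).2 (Filter.Eventually.of_forall fun t ht => ?_)
      convert measure_empty (μ := μ)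
      · ext a; simp only [mem_setOf_eq, mem_empty_iff_false, iff_false, not_lt]
        exact (hFM a).trans (le_of_lt ht)
    rw [lintegral_congr_ae this, lintegral_zero]
  rw [htail0, add_zero]
  have key : ∀ t ∈ Ioc (0:ℝ) M, μ {a | t < F a} ≤ ENNReal.ofReal (c0 / n * t ^ (-γ)) := by
    intro t ht
    set s : ℝ := t ^ (β⁻¹) with hsdef
    have hs0 : 0 < s := Real.rpow_pos_of_pos ht.1 _
    have hsε : s ≤ ε := by
      calc s ≤ M ^ (β⁻¹) := Real.rpow_le_rpow ht.1.le ht.2 (by positivity)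
        _ = ε := by
          rw [hMdef, ← Real.rpow_mul hε.le, mul_inv_cancel₀ hβ.ne', Real.rpow_one]
    have hs1 : s ≤ 1 := hsε.trans hε1
    have hsub : {a | t < F a} ⊆ {ω | s ≤ ‖Z ω‖} := by
      intro a ha
      simp only [mem_setOf_eq] at ha ⊢
      rw [hFdef] at ha; dsimp only at ha
      by_cases h : ‖Z a‖ ≤ ε
      · rw [if_pos h] at ha
        have : s < (‖Z a‖ ^ β) ^ (β⁻¹) :=
          Real.rpow_lt_rpow ht.1.le ha (by positivity)
        rw [← Real.rpow_mul (norm_nonneg _), mul_inv_cancel₀ hβ.ne',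
          Real.rpow_one] at this
        exact this.le
      · rw [if_neg h] at ha; exact absurd ha (not_lt.2 ht.1.le)
    have hsα : s ^ (-α) = t ^ (-γ) := by
      rw [hsdef, ← Real.rpow_mul ht.1.le]
      congr 1
      rw [hγdef]; field_simp
    have h1 : (n : ℝ≥0∞) * μ {a | t < F a} ≤ ENNReal.ofReal (c0 * t ^ (-γ)) := by
      calc (n : ℝ≥0∞) * μ {a | t < F a} ≤ (n : ℝ≥0∞) * μ {ω | s ≤ ‖Z ω‖} :=
            mul_le_mul_right (measure_mono hsub) _
        _ ≤ ENNReal.ofReal (c0 * s ^ (-α)) := htail s hs0 hs1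
        _ = ENNReal.ofReal (c0 * t ^ (-γ)) := by rw [hsα]
    have hne : (n : ℝ≥0∞) ≠ 0 := by
      exact_mod_cast Nat.cast_ne_zero.2 (Nat.one_le_iff_ne_zero.1 hn)
    rw [← ENNReal.mul_le_mul_iff_right hne (by simp : (n : ℝ≥0∞) ≠ ⊤)]
    calc (n : ℝ≥0∞) * μ {a | t < F a} ≤ ENNReal.ofReal (c0 * t ^ (-γ)) := h1
      _ = (n : ℝ≥0∞) * ENNReal.ofReal (c0 / n * t ^ (-γ)) := by
          rw [← ENNReal.ofReal_natCast n, ← ENNReal.ofReal_mul (by positivity)]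
          congr 1
          field_simp
  calc ∫⁻ t in Ioc (0:ℝ) M, μ {a | t < F a}
      ≤ ∫⁻ t in Ioc (0:ℝ) M, ENNReal.ofReal (c0 / n * t ^ (-γ)) :=
        setLIntegral_mono' measurableSet_Ioc key
    _ = ENNReal.ofReal (∫ t in Ioc (0:ℝ) M, c0 / n * t ^ (-γ)) := by
        rw [← ofReal_integral_eq_lintegral_ofReal]
        · exact Integrable.const_mul
            ((intervalIntegral.intervalIntegrable_rpow' (by linarith : (-1:ℝ) < -γ)).1) _
        · refine (ae_restrict_iff' measurableSet_Ioc).2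
            (Filter.Eventually.of_forall fun t ht => ?_)
          have := ht.1
          positivity
    _ = ENNReal.ofReal (c0 * β / (β - α) * ε ^ (β - α) / n) := by
        congr 1
        rw [MeasureTheory.integral_const_mul, ← intervalIntegral.integral_of_le hM.le,
          integral_rpow (Or.inl (by linarith : (-1:ℝ) < -γ))]
        rw [Real.zero_rpow (by linarith : -γ + 1 ≠ 0)]
        have hMval : M ^ (-γ + 1) = ε ^ (β - α) := by
          rw [hMdef, ← Real.rpow_mul hε.le]
          congr 1
          rw [hγdef]; field_simp
          ring
        rw [hMval]
        have : -γ + 1 = (β - α)/β := by rw [hγdef]; field_simp; ring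
        rw [this]
        field_simp
        ring

lemma factor_bound' (μ : Measure Ω) [IsProbabilityMeasure μ]
    (c0 α β ε : ℝ) (hc0 : 0 < c0) (hα : 0 < α) (hαβ : α < β) (hε : 0 < ε) (hε1 : ε ≤ 1)
    (n : ℕ) (hn : 1 ≤ n) (Z : Ω → ℂ) (hZ : Measurable Z)
    (htail : ∀ t : ℝ, 0 < t → t ≤ 1 →
      (n : ℝ≥0∞) * μ {ω | t ≤ ‖Z ω‖} ≤ ENNReal.ofReal (c0 * t ^ (-α))) :
    ∫⁻ ω, ENNReal.ofReal (Real.exp (ε ^ (-β) *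
        (if ‖Z ω‖ ≤ ε then ‖Z ω‖ ^ β else 0))) ∂μ
      ≤ ENNReal.ofReal (Real.exp ((Real.exp 1 - 1) * (c0 * β / (β - α)) * ε ^ (-α) / n)) := by
  have hβ : 0 < β := hα.trans hαβ
  set F : Ω → ℝ := fun ω => if ‖Z ω‖ ≤ ε then ‖Z ω‖ ^ β else 0 with hFdef
  have habs : Measurable fun ω => ‖Z ω‖ := continuous_norm.measurable.comp hZ
  have hrpow : Measurable fun ω => ‖Z ω‖ ^ β := by fun_prop
  have hFmeas : Measurable F := by
    rw [hFdef]
    exact Measurable.ite (measurableSet_le habs measurable_const) hrpow measurable_const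
  have hF0 : ∀ ω, 0 ≤ F ω := by
    intro ω; rw [hFdef]; dsimp only; split
    · positivity
    · exact le_refl 0
  have hFM : ∀ ω, F ω ≤ ε ^ β := by
    intro ω; rw [hFdef]; dsimp only; split
    · exact Real.rpow_le_rpow (norm_nonneg _) (by assumption) hβ.le
    · positivity
  have hlam : 0 < ε ^ (-β) := Real.rpow_pos_of_pos hε _
  have hlamM : ε ^ (-β) * ε ^ β = 1 := by
    rw [← Real.rpow_add hε]; simp
  have hnR : (0:ℝ) < n := by exact_mod_cast hn
  have he1 : (0:ℝ) ≤ Real.exp 1 - 1 := by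
    linarith [Real.one_le_exp (zero_le_one : (0:ℝ) ≤ 1)]
  set C : ℝ := c0 * β / (β - α) with hCdef
  have hC : 0 < C := by rw [hCdef]; exact div_pos (by positivity) (by linarith)
  have step1 : ∀ ω, ENNReal.ofReal (Real.exp (ε ^ (-β) * F ω)) ≤
      1 + ENNReal.ofReal ((Real.exp 1 - 1) * ε ^ (-β)) * ENNReal.ofReal (F ω) := by
    intro ω
    have hu0 : 0 ≤ ε ^ (-β) * F ω := mul_nonneg hlam.le (hF0 ω)
    have hu1 : ε ^ (-β) * F ω ≤ 1 := by
      calc ε ^ (-β) * F ω ≤ ε ^ (-β) * ε ^ β :=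
            mul_le_mul_of_nonneg_left (hFM ω) hlam.le
        _ = 1 := hlamM
    calc ENNReal.ofReal (Real.exp (ε ^ (-β) * F ω))
        ≤ ENNReal.ofReal (1 + (Real.exp 1 - 1) * (ε ^ (-β) * F ω)) :=
          ENNReal.ofReal_le_ofReal (exp_le_one_add' hu0 hu1)
      _ = 1 + ENNReal.ofReal ((Real.exp 1 - 1) * ε ^ (-β)) * ENNReal.ofReal (F ω) := by
          rw [ENNReal.ofReal_add zero_le_one (mul_nonneg he1 hu0), ENNReal.ofReal_one]
          congr 1
          rw [← ENNReal.ofReal_mul (mul_nonneg he1 hlam.le)]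
          ring_nf
  have step2 : ∫⁻ ω, ENNReal.ofReal (Real.exp (ε ^ (-β) * F ω)) ∂μ ≤
      1 + ENNReal.ofReal ((Real.exp 1 - 1) * ε ^ (-β)) * ENNReal.ofReal (C * ε ^ (β - α) / n) := by
    calc ∫⁻ ω, ENNReal.ofReal (Real.exp (ε ^ (-β) * F ω)) ∂μ
        ≤ ∫⁻ ω, (1 + ENNReal.ofReal ((Real.exp 1 - 1) * ε ^ (-β)) * ENNReal.ofReal (F ω)) ∂μ :=
          lintegral_mono step1
      _ = 1 + ENNReal.ofReal ((Real.exp 1 - 1) * ε ^ (-β)) * ∫⁻ ω, ENNReal.ofReal (F ω) ∂μ := by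
          rw [lintegral_add_left measurable_const, lintegral_const_mul _ hFmeas.ennreal_ofReal]
          simp
      _ ≤ 1 + ENNReal.ofReal ((Real.exp 1 - 1) * ε ^ (-β)) *
            ENNReal.ofReal (C * ε ^ (β - α) / n) := by
          gcongr
          exact moment_bound' μ c0 α β ε hc0 hα hαβ hε hε1 n hn Z hZ htail
  refine step2.trans ?_
  have harith : (Real.exp 1 - 1) * ε ^ (-β) * (C * ε ^ (β - α) / n)
      = (Real.exp 1 - 1) * C * ε ^ (-α) / n := by
    have h2 : ε ^ (-β) * ε ^ (β - α) = ε ^ (-α) := by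
      rw [← Real.rpow_add hε]; ring_nf
    calc (Real.exp 1 - 1) * ε ^ (-β) * (C * ε ^ (β - α) / n)
        = (Real.exp 1 - 1) * C * (ε ^ (-β) * ε ^ (β - α)) / n := by ring
      _ = (Real.exp 1 - 1) * C * ε ^ (-α) / n := by rw [h2]
  calc 1 + ENNReal.ofReal ((Real.exp 1 - 1) * ε ^ (-β)) * ENNReal.ofReal (C * ε ^ (β - α) / n)
      = ENNReal.ofReal (1 + (Real.exp 1 - 1) * C * ε ^ (-α) / n) := by
        rw [← ENNReal.ofReal_mul (mul_nonneg he1 hlam.le), harith,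
          ENNReal.ofReal_add zero_le_one (div_nonneg (mul_nonneg (mul_nonneg he1 hC.le)
            (Real.rpow_pos_of_pos hε _).le) hnR.le), ENNReal.ofReal_one]
    _ ≤ ENNReal.ofReal (Real.exp ((Real.exp 1 - 1) * C * ε ^ (-α) / n)) := by
        apply ENNReal.ofReal_le_ofReal
        have := Real.add_one_le_exp ((Real.exp 1 - 1) * C * ε ^ (-α) / n)
        linarith

end Moment

/-- For a triangular array of independent heavy-tailed random variables satisfying the tail
bound `T(n, c0, α)` with `0 < α < β`, for every `T > 0` there is a truncation level
`ε ∈ (0,1]` such that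
`limsup_n (1/n) log P( (2/n) ∑_{i ≤ j} |Y^n_{ij}|^β 1_{|Y^n_{ij}| ≤ ε} ≥ 1 ) ≤ −T`. -/
theorem limsup_truncated_moment_le
    (c0 α β : ℝ) (hc0 : 0 < c0) (hα : 0 < α) (hαβ : α < β)
    (Ω : ℕ → Type) (mΩ : ∀ n, MeasurableSpace (Ω n))
    (P : ∀ n, Measure (Ω n)) (hP : ∀ n, IsProbabilityMeasure (P n))
    (Y : ∀ n : ℕ, Fin n → Fin n → Ω n → ℂ)
    (hmeas : ∀ n i j, Measurable (Y n i j))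
    (hindep : ∀ n : ℕ, 1 ≤ n →
      iIndepFun
        (fun pr : {pr : Fin n × Fin n // pr.1 ≤ pr.2} => Y n pr.1.1 pr.1.2) (P n))
    (htail : ∀ n : ℕ, 1 ≤ n → ∀ i j : Fin n, i ≤ j → ∀ t : ℝ, 0 < t → t ≤ 1 →
      (n : ℝ≥0∞) * P n {ω | t ≤ ‖Y n i j ω‖} ≤ ENNReal.ofReal (c0 * t ^ (-α))) :
    ∀ T : ℝ, 0 < T → ∃ ε : ℝ, 0 < ε ∧ ε ≤ 1 ∧
      Filter.limsup (fun n : ℕ =>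
          (((1 : ℝ) / n : ℝ) : EReal) * ENNReal.log (P n
            {ω | (1 : ℝ) ≤ (2 / n : ℝ) *
                ∑ pr ∈ Finset.univ.filter (fun pr : Fin n × Fin n => pr.1 ≤ pr.2),
                  (if ‖Y n pr.1 pr.2 ω‖ ≤ ε
                    then ‖Y n pr.1 pr.2 ω‖ ^ β else 0)}))
        Filter.atTop ≤ ((-T : ℝ) : EReal) := by
  intro T hT
  have hβ : 0 < β := hα.trans hαβ
  have hβα : 0 < β - α := by linarith
  have he1 : (0:ℝ) ≤ Real.exp 1 - 1 := by
    linarith [Real.one_le_exp (zero_le_one : (0:ℝ) ≤ 1)]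
  set C : ℝ := c0 * β / (β - α) with hCdef
  have hC : 0 < C := div_pos (by positivity) hβα
  set K : ℝ := (Real.exp 1 - 1) * C with hKdef
  have hK : 0 ≤ K := mul_nonneg he1 hC.le
  have h2KT : 0 < 2 * (K + T) := by linarith
  set ε : ℝ := min 1 ((2 * (K + T)) ^ (-(β - α)⁻¹)) with hεdef
  have hεpos : 0 < ε := lt_min one_pos (Real.rpow_pos_of_pos h2KT _)
  have hε1 : ε ≤ 1 := min_le_left _ _
  have hkey : K * ε ^ (-α) - ε ^ (-β) / 2 ≤ -T := by
    have h1 : ε ^ (β - α) ≤ (2 * (K + T))⁻¹ := by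
      calc ε ^ (β - α) ≤ ((2 * (K + T)) ^ (-(β - α)⁻¹)) ^ (β - α) :=
            Real.rpow_le_rpow hεpos.le (min_le_right _ _) hβα.le
        _ = (2 * (K + T))⁻¹ := by
            rw [← Real.rpow_mul h2KT.le, neg_mul, inv_mul_cancel₀ hβα.ne', Real.rpow_neg_one]
    have hp : 0 < ε ^ (β - α) := Real.rpow_pos_of_pos hεpos _
    have h2 : 2 * (K + T) ≤ ε ^ (-(β - α)) := by
      rw [Real.rpow_neg hεpos.le]
      have := inv_anti₀ hp h1
      rwa [inv_inv] at this
    have h3 : 1 ≤ ε ^ (-α) :=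
      Real.one_le_rpow_of_pos_of_le_one_of_nonpos hεpos hε1 (by linarith)
    have h4 : ε ^ (-β) = ε ^ (-α) * ε ^ (-(β - α)) := by
      rw [← Real.rpow_add hεpos]; ring_nf
    nlinarith [mul_le_mul_of_nonneg_left h2 (le_trans zero_le_one h3)]
  refine ⟨ε, hεpos, hε1, ?_⟩
  have hmain : ∀ n : ℕ, 1 ≤ n →
      P n {ω | (1 : ℝ) ≤ (2 / n : ℝ) *
          ∑ pr ∈ Finset.univ.filter (fun pr : Fin n × Fin n => pr.1 ≤ pr.2),
            (if ‖Y n pr.1 pr.2 ω‖ ≤ ε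
              then ‖Y n pr.1 pr.2 ω‖ ^ β else 0)}
        ≤ ENNReal.ofReal (Real.exp ((n : ℝ) * (-T))) := by
    intro n hn
    haveI := hP n
    have hnR : (0:ℝ) < n := by exact_mod_cast hn
    have hlam : 0 < ε ^ (-β) := Real.rpow_pos_of_pos hεpos _
    set G : ℂ → ℝ≥0∞ := fun z => ENNReal.ofReal (Real.exp (ε ^ (-β) *
        (if ‖z‖ ≤ ε then ‖z‖ ^ β else 0))) with hGdef
    have habs : Measurable fun z : ℂ => ‖z‖ := continuous_norm.measurable
    have hFz : Measurable fun z : ℂ =>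
        (if ‖z‖ ≤ ε then ‖z‖ ^ β else 0 : ℝ) :=
      Measurable.ite (measurableSet_le habs measurable_const)
        (by fun_prop) measurable_const
    have hGmeas : Measurable G := by
      rw [hGdef]
      exact (Real.measurable_exp.comp (hFz.const_mul _)).ennreal_ofReal
    set g : {pr : Fin n × Fin n // pr.1 ≤ pr.2} → Ω n → ℝ≥0∞ :=
      fun pr => G ∘ (Y n pr.1.1 pr.1.2) with hgdef
    have hgmeas : ∀ i, Measurable (g i) := fun i => hGmeas.comp (hmeas n _ _)
    have hgind : iIndepFun g (P n) :=
      (hindep n hn).comp (fun _ => G) (fun _ => hGmeas)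
    set S : Ω n → ℝ := fun ω =>
      ∑ pr ∈ Finset.univ.filter (fun pr : Fin n × Fin n => pr.1 ≤ pr.2),
        (if ‖Y n pr.1 pr.2 ω‖ ≤ ε
          then ‖Y n pr.1 pr.2 ω‖ ^ β else 0) with hSdef
    have hprod : ∀ ω, (∏ i, g i ω) = ENNReal.ofReal (Real.exp (ε ^ (-β) * S ω)) := by
      intro ω
      have hsum : S ω = ∑ i : {pr : Fin n × Fin n // pr.1 ≤ pr.2},
          (if ‖Y n i.1.1 i.1.2 ω‖ ≤ ε
            then ‖Y n i.1.1 i.1.2 ω‖ ^ β else 0) := by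
        rw [hSdef]
        exact Finset.sum_subtype _ (by simp) _
      rw [hsum, Finset.mul_sum, Real.exp_sum,
        ENNReal.ofReal_prod_of_nonneg (fun i _ => (Real.exp_pos _).le)]
      rfl
    have hsub : {ω | (1 : ℝ) ≤ (2 / n : ℝ) * S ω} ⊆
        {ω | ENNReal.ofReal (Real.exp (ε ^ (-β) * (n / 2))) ≤ ∏ i, g i ω} := by
      intro ω hω
      simp only [mem_setOf_eq] at hω ⊢
      rw [hprod ω]
      apply ENNReal.ofReal_le_ofReal
      apply Real.exp_le_exp.2
      have hS : (n : ℝ) / 2 ≤ S ω := by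
        have := mul_le_mul_of_nonneg_left hω (by positivity : (0:ℝ) ≤ n / 2)
        calc (n:ℝ)/2 = n/2 * 1 := by ring
          _ ≤ n/2 * (2/n * S ω) := this
          _ = S ω := by field_simp
      exact mul_le_mul_of_nonneg_left hS hlam.le
    have hmarkov : ENNReal.ofReal (Real.exp (ε ^ (-β) * (n / 2))) *
        P n {ω | (1 : ℝ) ≤ (2 / n : ℝ) * S ω} ≤ ∫⁻ ω, ∏ i, g i ω ∂(P n) := by
      calc ENNReal.ofReal (Real.exp (ε ^ (-β) * (n / 2))) *
            P n {ω | (1 : ℝ) ≤ (2 / n : ℝ) * S ω}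
          ≤ ENNReal.ofReal (Real.exp (ε ^ (-β) * (n / 2))) *
            P n {ω | ENNReal.ofReal (Real.exp (ε ^ (-β) * (n / 2))) ≤ ∏ i, g i ω} :=
            mul_le_mul_right (measure_mono hsub) _
        _ ≤ ∫⁻ ω, ∏ i, g i ω ∂(P n) :=
            mul_meas_ge_le_lintegral (Finset.measurable_prod _ fun i _ => hgmeas i) _
    have hindint : ∫⁻ ω, ∏ i, g i ω ∂(P n) ≤
        ENNReal.ofReal (Real.exp ((n : ℝ) * (K * ε ^ (-α)))) := by
      rw [lintegral_prod_of_iIndepFun' g hgmeas hgind Finset.univ]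
      have hfac : ∀ i : {pr : Fin n × Fin n // pr.1 ≤ pr.2},
          ∫⁻ ω, g i ω ∂(P n) ≤ ENNReal.ofReal (Real.exp (K * ε ^ (-α) / n)) := by
        intro i
        have := factor_bound' (P n) c0 α β ε hc0 hα hαβ hεpos hε1 n hn
          (Y n i.1.1 i.1.2) (hmeas n _ _)
          (fun t ht ht1 => htail n hn i.1.1 i.1.2 i.2 t ht ht1)
        rw [← hCdef, ← hKdef] at this
        exact this
      calc ∏ i, ∫⁻ ω, g i ω ∂(P n)
          ≤ ∏ _i : {pr : Fin n × Fin n // pr.1 ≤ pr.2},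
              ENNReal.ofReal (Real.exp (K * ε ^ (-α) / n)) :=
            Finset.prod_le_prod' fun i _ => hfac i
        _ = ENNReal.ofReal (Real.exp (K * ε ^ (-α) / n)) ^
              Fintype.card {pr : Fin n × Fin n // pr.1 ≤ pr.2} := by
            rw [Finset.prod_const, Finset.card_univ]
        _ ≤ ENNReal.ofReal (Real.exp ((n : ℝ) * (K * ε ^ (-α)))) := by
            rw [← ENNReal.ofReal_pow (Real.exp_pos _).le, ← Real.exp_nat_mul]
            apply ENNReal.ofReal_le_ofReal
            apply Real.exp_le_exp.2
            have hcard : (Fintype.card {pr : Fin n × Fin n // pr.1 ≤ pr.2} : ℝ) ≤ n * n := by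
              have := Fintype.card_subtype_le (fun pr : Fin n × Fin n => pr.1 ≤ pr.2)
              have h' : Fintype.card (Fin n × Fin n) = n * n := by simp
              exact_mod_cast h' ▸ this
            have hx : 0 ≤ K * ε ^ (-α) / n := by positivity
            calc (Fintype.card {pr : Fin n × Fin n // pr.1 ≤ pr.2} : ℝ) * (K * ε ^ (-α) / n)
                ≤ ((n : ℝ) * n) * (K * ε ^ (-α) / n) := by gcongr
              _ = (n : ℝ) * (K * ε ^ (-α)) := by field_simp
    have hfinal : ENNReal.ofReal (Real.exp (ε ^ (-β) * (n / 2))) *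
        P n {ω | (1 : ℝ) ≤ (2 / n : ℝ) * S ω} ≤
        ENNReal.ofReal (Real.exp ((n : ℝ) * (K * ε ^ (-α)))) := hmarkov.trans hindint
    have hP2 : P n {ω | (1 : ℝ) ≤ (2 / n : ℝ) * S ω} ≤
        ENNReal.ofReal (Real.exp ((n : ℝ) * (K * ε ^ (-α)) - ε ^ (-β) * (n / 2))) := by
      have hne : ENNReal.ofReal (Real.exp (ε ^ (-β) * (n / 2))) ≠ 0 := by
        simp [Real.exp_pos]
      have hnetop : ENNReal.ofReal (Real.exp (ε ^ (-β) * (n / 2))) ≠ ⊤ := ENNReal.ofReal_ne_top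
      rw [mul_comm] at hfinal
      have hdiv := (ENNReal.le_div_iff_mul_le (Or.inl hne) (Or.inl hnetop)).2 hfinal
      calc P n {ω | (1 : ℝ) ≤ (2 / n : ℝ) * S ω}
          ≤ ENNReal.ofReal (Real.exp ((n : ℝ) * (K * ε ^ (-α)))) /
              ENNReal.ofReal (Real.exp (ε ^ (-β) * (n / 2))) := hdiv
        _ = ENNReal.ofReal (Real.exp ((n : ℝ) * (K * ε ^ (-α))) /
              Real.exp (ε ^ (-β) * (n / 2))) :=
            (ENNReal.ofReal_div_of_pos (Real.exp_pos _)).symm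
        _ = ENNReal.ofReal (Real.exp ((n : ℝ) * (K * ε ^ (-α)) - ε ^ (-β) * (n / 2))) := by
            rw [Real.exp_sub]
    refine hP2.trans (ENNReal.ofReal_le_ofReal (Real.exp_le_exp.2 ?_))
    have hre : (n:ℝ) * (K * ε ^ (-α)) - ε ^ (-β) * ((n:ℝ) / 2)
        = (n:ℝ) * (K * ε ^ (-α) - ε ^ (-β) / 2) := by ring
    rw [hre]
    exact mul_le_mul_of_nonneg_left hkey hnR.le
  have hev : ∀ᶠ n : ℕ in Filter.atTop, (((1 : ℝ) / n : ℝ) : EReal) * ENNReal.log (P n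
      {ω | (1 : ℝ) ≤ (2 / n : ℝ) *
          ∑ pr ∈ Finset.univ.filter (fun pr : Fin n × Fin n => pr.1 ≤ pr.2),
            (if ‖Y n pr.1 pr.2 ω‖ ≤ ε
              then ‖Y n pr.1 pr.2 ω‖ ^ β else 0)}) ≤ ((-T : ℝ) : EReal) := by
    filter_upwards [Filter.eventually_ge_atTop 1] with n hn
    have hnR : (0:ℝ) < n := by exact_mod_cast hn
    have hlog : ENNReal.log (P n
        {ω | (1 : ℝ) ≤ (2 / n : ℝ) *
            ∑ pr ∈ Finset.univ.filter (fun pr : Fin n × Fin n => pr.1 ≤ pr.2),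
              (if ‖Y n pr.1 pr.2 ω‖ ≤ ε
                then ‖Y n pr.1 pr.2 ω‖ ^ β else 0)})
        ≤ (((n : ℝ) * (-T) : ℝ) : EReal) := by
      have := ENNReal.log_monotone (hmain n hn)
      rwa [ENNReal.log_ofReal_of_pos (Real.exp_pos _), Real.log_exp] at this
    have hcnn : (0 : EReal) ≤ (((1 : ℝ) / n : ℝ) : EReal) := by
      exact_mod_cast EReal.coe_nonneg.2 (by positivity : (0:ℝ) ≤ (1:ℝ)/n)
    calc (((1 : ℝ) / n : ℝ) : EReal) * ENNReal.log (P n _)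
        ≤ (((1 : ℝ) / n : ℝ) : EReal) * (((n : ℝ) * (-T) : ℝ) : EReal) :=
          mul_le_mul_of_nonneg_left hlog hcnn
      _ = ((-T : ℝ) : EReal) := by
          rw [← EReal.coe_mul]
          congr 1
          field_simp
  exact Filter.limsup_le_of_le (by isBoundedDefault) hev
end
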